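/- arXiv:2003.07551 — 7 statements merged into one kernel-verified Lean document; each statement's English description precedes it below -/
import Mathlib

section
/- Let K₀ = {(v₁,v₂) ∈ ℝ² : v₁v₂ ≥ 0}. For every (x,y) ∈ 𝕋², the derivative D_{(x,y)}T, given in coordinates by the matrix [[1+h'(x), 1],[h'(x), 1]], maps K₀ into K₀; if x ≠ 0 then D_{(x,y)}T maps K₀ into int(K₀) ∪ {0}; and if (x,y) ≠ (0,0) then the derivative of T² at (x,y) maps K₀ into int(K₀) ∪ {0}. -/
noncomputable section

open Real MeasureTheory

/-- The map `T(x,y) = (x + h(x) + y, h(x) + y)` in local coordinates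
(lift of the torus map to `ℝ²`). -/
def Tmap (h : ℝ → ℝ) (p : ℝ × ℝ) : ℝ × ℝ :=
  (p.1 + h p.1 + p.2, h p.1 + p.2)

/-- The cone `K₀ = {(v₁,v₂) : v₁ v₂ ≥ 0}`. -/
def K0 : Set (ℝ × ℝ) := {v | 0 ≤ v.1 * v.2}

/-- The derivative of `T` at a point with first coordinate `x`,
given by the matrix `[[1 + h'(x), 1], [h'(x), 1]]`. -/
def DT (h : ℝ → ℝ) (x : ℝ) (v : ℝ × ℝ) : ℝ × ℝ :=
  ((1 + deriv h x) * v.1 + v.2, deriv h x * v.1 + v.2)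

/-- The derivative preserves the cone `K₀`; away from `x = 0` it maps it into
`int K₀ ∪ {0}`; and away from `(x,y) = (0,0)` the derivative of `T²` maps it
into `int K₀ ∪ {0}`. -/
theorem cone_invariance (h : ℝ → ℝ) (hsm : ContDiff ℝ (⊤ : ℕ∞) h) (h0 : h 0 = 0)
    (hd1 : deriv h 0 = 0) (hpos : ∀ x : ℝ, x ≠ 0 → 0 < deriv h x)
    (hd3 : 0 < iteratedDeriv 3 h 0) (hodd : ∀ x : ℝ, h (-x) = -h x) :
    ∀ x y : ℝ,
      (∀ v ∈ K0, DT h x v ∈ K0) ∧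
      (x ≠ 0 → ∀ v ∈ K0, DT h x v ∈ interior K0 ∪ {0}) ∧
      ((x, y) ≠ ((0 : ℝ), (0 : ℝ)) → ∀ v ∈ K0,
        DT h (Tmap h (x, y)).1 (DT h x v) ∈ interior K0 ∪ {0}) := by

  have hdnn : ∀ x : ℝ, 0 ≤ deriv h x := by
    intro x
    rcases eq_or_ne x 0 with rfl | hx
    · simp [hd1]
    · exact (hpos x hx).le
  have hint : ∀ v : ℝ × ℝ, 0 < v.1 * v.2 → v ∈ interior K0 := by
    intro v hv
    have hop : IsOpen {w : ℝ × ℝ | 0 < w.1 * w.2} :=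
      isOpen_lt continuous_const (continuous_fst.mul continuous_snd)
    have hsub : {w : ℝ × ℝ | 0 < w.1 * w.2} ⊆ K0 := fun w hw => Set.mem_setOf_eq ▸ le_of_lt hw
    exact interior_maximal hsub hop hv
  have step1 : ∀ x : ℝ, ∀ v ∈ K0, DT h x v ∈ K0 := by
    intro x v hv
    have d := hdnn x
    simp only [K0, DT, Set.mem_setOf_eq] at *
    nlinarith [sq_nonneg v.1, sq_nonneg v.2, mul_nonneg d hv,
      mul_nonneg (mul_nonneg d d) (sq_nonneg v.1), mul_nonneg d (sq_nonneg v.1)]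
  have step3 : ∀ x : ℝ, ∀ v : ℝ × ℝ, 0 < v.1 * v.2 →
      0 < (DT h x v).1 * (DT h x v).2 := by
    intro x v hv
    have d := hdnn x
    simp only [DT]
    nlinarith [sq_nonneg v.1, sq_nonneg v.2, mul_nonneg d hv.le,
      mul_nonneg (mul_nonneg d d) (sq_nonneg v.1), mul_nonneg d (sq_nonneg v.1),
      mul_nonneg d hv.le]
  have step2' : ∀ x : ℝ, x ≠ 0 → ∀ v ∈ K0,
      DT h x v = 0 ∨ 0 < (DT h x v).1 * (DT h x v).2 := by
    intro x hx v hv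
    have d := hpos x hx
    rcases eq_or_ne v 0 with rfl | hv0
    · left; simp [DT]
    · right
      simp only [K0, Set.mem_setOf_eq] at hv
      have hne : v.1 ≠ 0 ∨ v.2 ≠ 0 := by
        by_contra hc
        push_neg at hc
        exact hv0 (Prod.ext hc.1 hc.2)
      simp only [DT]
      rcases hne with h1 | h2
      · nlinarith [sq_nonneg v.2, mul_self_pos.mpr h1, mul_nonneg d.le hv,
          mul_pos (mul_pos d d) (mul_self_pos.mpr h1), mul_nonneg d.le (sq_nonneg v.1)]
      · nlinarith [sq_nonneg v.1, mul_self_pos.mpr h2, mul_nonneg d.le hv,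
          mul_nonneg (mul_nonneg d.le d.le) (sq_nonneg v.1), mul_nonneg d.le (sq_nonneg v.1)]
  have step2 : ∀ x : ℝ, x ≠ 0 → ∀ v ∈ K0, DT h x v ∈ interior K0 ∪ {0} := by
    intro x hx v hv
    rcases step2' x hx v hv with h0v | hpr
    · right; exact h0v
    · left; exact hint _ hpr
  intro x y
  refine ⟨step1 x, step2 x, ?_⟩
  intro hxy v hv
  rcases eq_or_ne x 0 with rfl | hx
  · have hy : y ≠ 0 := by
      intro hy; exact hxy (by simp [hy])
    have hx' : (Tmap h ((0 : ℝ), y)).1 ≠ 0 := by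
      simp [Tmap, h0, hy]
    exact step2 _ hx' _ (step1 0 v hv)
  · rcases step2' x hx v hv with h0v | hpr
    · right; rw [h0v]; simp [DT]
    · left; exact hint _ (step3 _ _ hpr)
end
end

section
/- There exist constants C, δ > 0 (depending only on h) such that for every (x,y) with |x| ≤ δ and |y| ≤ δ, |H(T(x,y)) − H(x,y)| ≤ C (x⁸ + y⁴). -/
noncomputable section

open Real MeasureTheory

/-- `G(x) = ∫₀ˣ h(z) dz`. -/
def Gfun (h : ℝ → ℝ) (x : ℝ) : ℝ := ∫ z in (0:ℝ)..x, h z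

/-- The quasi-Hamiltonian
`H(x,y) = ½y² − G(x) + ½h(x)y − (1/12)h'(x)y² + (1/12)h(x)²`. -/
def Hham (h : ℝ → ℝ) (p : ℝ × ℝ) : ℝ :=
  (1/2) * p.2 ^ 2 - Gfun h p.1 + (1/2) * h p.1 * p.2
    - (1/12) * deriv h p.1 * p.2 ^ 2 + (1/12) * (h p.1) ^ 2

open scoped ContDiff

lemma absBound_nonneg {F F' : ℝ → ℝ} (hF : ∀ t, HasDerivAt F (F' t) t)
    (hC : Continuous F') (h0 : F 0 = 0) {K : ℝ} {k : ℕ}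
    (hb : ∀ t, |t| ≤ 1 → |F' t| ≤ K * |t| ^ k) :
    ∀ u, 0 ≤ u → u ≤ 1 → |F u| ≤ K * u ^ (k + 1) := by
  intro u hu0 hu1
  have hK : 0 ≤ K := by
    have h1 := hb 1 (by norm_num)
    simp at h1
    exact le_trans (abs_nonneg _) h1
  have hFTC : ∫ t in (0:ℝ)..u, F' t = F u - F 0 :=
    intervalIntegral.integral_eq_sub_of_hasDerivAt (fun t _ => hF t)
      (hC.intervalIntegrable 0 u)
  have hle : ‖∫ t in (0:ℝ)..u, F' t‖ ≤ |∫ t in (0:ℝ)..u, K * t ^ k| := by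
    apply intervalIntegral.norm_integral_le_abs_of_norm_le
      ?_ ((continuous_const.mul (continuous_pow k)).intervalIntegrable 0 u)
    filter_upwards [ae_restrict_mem measurableSet_uIoc] with t ht
    rw [Set.uIoc_of_le hu0] at ht
    have ht0 : 0 < t := ht.1
    have hb' := hb t (by rw [abs_of_pos ht0]; linarith [ht.2])
    rw [abs_of_pos ht0] at hb'
    simpa [Real.norm_eq_abs] using hb'
  rw [hFTC, h0, sub_zero, Real.norm_eq_abs] at hle
  have hint : ∫ t in (0:ℝ)..u, K * t ^ k = K * (u ^ (k+1) / (k+1)) := by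
    rw [intervalIntegral.integral_const_mul, integral_pow]
    norm_num
  rw [hint] at hle
  calc |F u| ≤ |K * (u ^ (k+1) / (k+1))| := hle
    _ = K * u ^ (k+1) / (k+1) := by
        rw [abs_of_nonneg (mul_nonneg hK (by positivity))]; ring
    _ ≤ K * u ^ (k+1) := by
        apply div_le_self (mul_nonneg hK (by positivity))
        have hk0 : (0:ℝ) ≤ (k:ℝ) := Nat.cast_nonneg k
        push_cast
        linarith

lemma absBound {F F' : ℝ → ℝ} (hF : ∀ t, HasDerivAt F (F' t) t)
    (hC : Continuous F') (h0 : F 0 = 0) {K : ℝ} {k : ℕ}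
    (hb : ∀ t, |t| ≤ 1 → |F' t| ≤ K * |t| ^ k) :
    ∀ u, |u| ≤ 1 → |F u| ≤ K * |u| ^ (k + 1) := by
  intro u hu
  rcases le_or_gt 0 u with hpos | hneg
  · rw [abs_of_nonneg hpos]
    exact absBound_nonneg hF hC h0 hb u hpos (by rwa [abs_of_nonneg hpos] at hu)
  · have hd : ∀ t, HasDerivAt (fun s => F (-s)) (-F' (-t)) t := by
      intro t
      have := (hF (-t)).comp t (hasDerivAt_neg t)
      simpa [mul_comm, Function.comp_def] using this
    have hc : Continuous fun t => -F' (-t) := (hC.comp continuous_neg).neg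
    have hb' : ∀ t, |t| ≤ 1 → |-F' (-t)| ≤ K * |t| ^ k := by
      intro t ht
      rw [abs_neg, ← abs_neg t]
      exact hb (-t) (by rwa [abs_neg])
    have := absBound_nonneg hd hc (by simpa using h0) hb' (-u) (by linarith)
      (by rw [abs_of_neg hneg] at hu; linarith)
    rw [neg_neg] at this
    rwa [abs_of_neg hneg]

set_option maxHeartbeats 1000000 in
lemma arithCore (M s w t : ℝ) (hM : 1 ≤ M) (hs0 : 0 ≤ s) (hw0 : 0 ≤ w)
    (ht0 : 0 ≤ t) (hs1 : s ≤ 1) (hw1 : w ≤ 1) (ht1 : t ≤ 1)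
    (htb : t ≤ w + M * s ^ 3) :
    1/12 * (M * s^2) * (M * s^3)^2 + 1/12 * (M * s^3) * (M * s) * t^2
        + 1/36 * (M * s^3) * M * t^3 + 1/2 * t * (M * t^4) + M * t^5
        + 1/12 * t^2 * (M * t^3) + 1/6 * (M * s^3) * (M * t^4)
        + 1/12 * (M * s^2 * t + (M * s)/2 * t^2 + M/6 * t^3 + M * t^4)^2
      ≤ 200 * M^7 * (s^8 + w^4) := by
  have hM0 : (0:ℝ) < M := lt_of_lt_of_le one_pos hM
  have h1 : t^2 ≤ 2*w^2 + 2*M^2*s^6 := by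
    linarith [mul_le_mul htb htb ht0 (by positivity : (0:ℝ) ≤ w + M*s^3),
      sq_nonneg (w - M*s^3)]
  have hs128 : s^12 ≤ s^8 := pow_le_pow_of_le_one hs0 hs1 (by norm_num)
  have hs108 : s^10 ≤ s^8 := pow_le_pow_of_le_one hs0 hs1 (by norm_num)
  have h2 : t^4 ≤ 8*w^4 + 8*M^4*s^8 := by
    linarith [mul_le_mul h1 h1 (by positivity : (0:ℝ) ≤ t^2)
      (by positivity : (0:ℝ) ≤ 2*w^2 + 2*M^2*s^6),
      sq_nonneg (w^2 - M^2*s^6),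
      mul_le_mul_of_nonneg_left hs128 (by positivity : (0:ℝ) ≤ M^4)]
  have p1 : M ≤ M^7 := by
    calc M = M^1 := (pow_one M).symm
      _ ≤ M^7 := pow_le_pow_right₀ hM (by norm_num)
  have p2 : M^2 ≤ M^7 := pow_le_pow_right₀ hM (by norm_num)
  have p3 : M^3 ≤ M^7 := pow_le_pow_right₀ hM (by norm_num)
  have p4 : M^4 ≤ M^7 := pow_le_pow_right₀ hM (by norm_num)
  have p5 : M^5 ≤ M^7 := pow_le_pow_right₀ hM (by norm_num)
  have p6 : M^6 ≤ M^7 := pow_le_pow_right₀ hM (by norm_num)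
  have qs2 : M^2*s^8 ≤ M^7*s^8 := mul_le_mul_of_nonneg_right p2 (by positivity)
  have qs3 : M^3*s^8 ≤ M^7*s^8 := mul_le_mul_of_nonneg_right p3 (by positivity)
  have qs4 : M^4*s^8 ≤ M^7*s^8 := mul_le_mul_of_nonneg_right p4 (by positivity)
  have qs5 : M^5*s^8 ≤ M^7*s^8 := mul_le_mul_of_nonneg_right p5 (by positivity)
  have qs6 : M^6*s^8 ≤ M^7*s^8 := mul_le_mul_of_nonneg_right p6 (by positivity)
  have qw1 : M*w^4 ≤ M^7*w^4 := mul_le_mul_of_nonneg_right p1 (by positivity)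
  have qw2 : M^2*w^4 ≤ M^7*w^4 := mul_le_mul_of_nonneg_right p2 (by positivity)
  have base2 : ∀ X : ℝ, X ≤ t^4 → M^2*X ≤ 8*(M^7*w^4) + 8*(M^7*s^8) := by
    intro X hX
    have l1 : M^2*X ≤ M^2*t^4 := mul_le_mul_of_nonneg_left hX (by positivity)
    have l2 : M^2*t^4 ≤ M^2*(8*w^4+8*M^4*s^8) :=
      mul_le_mul_of_nonneg_left h2 (by positivity)
    linarith [qw2, qs6]
  have base1 : M*t^5 ≤ 8*(M^7*w^4) + 8*(M^7*s^8) := by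
    have l0 : t^5 ≤ t^4 := pow_le_pow_of_le_one ht0 ht1 (by norm_num)
    have l1 : M*t^5 ≤ M*t^4 := mul_le_mul_of_nonneg_left l0 (le_of_lt hM0)
    have l2 : M*t^4 ≤ M*(8*w^4+8*M^4*s^8) :=
      mul_le_mul_of_nonneg_left h2 (le_of_lt hM0)
    linarith [qw1, qs5]
  have mono : ∀ i j : ℕ, 4 ≤ j → s^i * t^j ≤ t^4 := by
    intro i j hj
    calc s^i * t^j ≤ 1 * t^j :=
          mul_le_mul_of_nonneg_right (pow_le_one₀ hs0 hs1) (by positivity)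
      _ = t^j := one_mul _
      _ ≤ t^4 := pow_le_pow_of_le_one ht0 ht1 hj
  have f_s3t4 := base2 _ (mono 3 4 (by norm_num))
  have f_s2t4 := base2 _ (mono 2 4 (by norm_num))
  have f_t6 := base2 _ (by simpa using mono 0 6 (by norm_num))
  have f_t8 := base2 _ (by simpa using mono 0 8 (by norm_num))
  have f_t7 := base2 _ (by simpa using mono 0 7 (by norm_num))
  have f_s2t5 := base2 _ (mono 2 5 (by norm_num))
  have f_st5 := base2 _ (by simpa using mono 1 5 (by norm_num))
  have f_st6 := base2 _ (by simpa using mono 1 6 (by norm_num))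
  have f_t5 := base2 _ (by simpa using mono 0 5 (by norm_num))
  have h4 : s^4*t^2 ≤ s^8 + w^4 + 2*M^2*s^8 := by
    linarith [sq_nonneg (s^4 - w^2),
      mul_le_mul_of_nonneg_left h1 (by positivity : (0:ℝ) ≤ s^4),
      mul_le_mul_of_nonneg_left hs108 (by positivity : (0:ℝ) ≤ 2*M^2)]
  have f_s4t2 : M^2*(s^4*t^2) ≤ 3*(M^7*s^8) + M^7*w^4 := by
    have l1 : M^2*(s^4*t^2) ≤ M^2*(s^8 + w^4 + 2*M^2*s^8) :=
      mul_le_mul_of_nonneg_left h4 (by positivity)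
    linarith [qw2, qs2, qs4]
  have h5 : s^3*t^3 ≤ 1/2*(s^4*t^2) + 1/2*(s^2*t^4) := by
    linarith [sq_nonneg (s^2*t - s*t^2)]
  have f_s3t3 : M^2*(s^3*t^3) ≤ 6*(M^7*s^8) + 5*(M^7*w^4) := by
    have l1 : M^2*(s^3*t^3) ≤ M^2*(1/2*(s^4*t^2) + 1/2*(s^2*t^4)) :=
      mul_le_mul_of_nonneg_left h5 (by positivity)
    linarith [f_s4t2, f_s2t4, (by positivity : (0:ℝ) ≤ M^7*s^8), (by positivity : (0:ℝ) ≤ M^7*w^4)]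
  have hP : 0 ≤ M^7*s^8 := by positivity
  have hQ : 0 ≤ M^7*w^4 := by positivity
  linarith [f_s3t4, f_s2t4, f_t6, f_t8, f_t7, f_s2t5, f_st5, f_st6, f_t5,
    f_s4t2, f_s3t3, qs3, base1, hP, hQ]

set_option maxHeartbeats 1000000 in
lemma arithBound (M x y u a0 a1 a2 a3 E0 E1 EG : ℝ) (hM : 1 ≤ M)
    (hx1 : |x| ≤ 1) (hy1 : |y| ≤ 1) (hu1 : |u| ≤ 1)
    (htb : |u| ≤ |y| + M * |x| ^ 3)
    (ha0 : |a0| ≤ M * |x| ^ 3) (ha1 : |a1| ≤ M * |x| ^ 2)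
    (ha2 : |a2| ≤ M * |x|) (ha3 : |a3| ≤ M)
    (hE0 : |E0| ≤ M * |u| ^ 4) (hE1 : |E1| ≤ M * |u| ^ 3)
    (hEG : |EG| ≤ M * |u| ^ 5) :
    1/12 * |a1| * |a0|^2 + 1/12 * |a0| * |a2| * |u|^2 + 1/36 * |a0| * |a3| * |u|^3
      + 1/2 * |u| * |E0| + |EG| + 1/12 * |u|^2 * |E1| + 1/6 * |a0| * |E0|
      + 1/12 * (|a1| * |u| + |a2|/2 * |u|^2 + |a3|/6 * |u|^3 + |E0|)^2
    ≤ 200 * M^7 * (|x|^8 + |y|^4) := by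
  calc 1/12 * |a1| * |a0|^2 + 1/12 * |a0| * |a2| * |u|^2 + 1/36 * |a0| * |a3| * |u|^3
      + 1/2 * |u| * |E0| + |EG| + 1/12 * |u|^2 * |E1| + 1/6 * |a0| * |E0|
      + 1/12 * (|a1| * |u| + |a2|/2 * |u|^2 + |a3|/6 * |u|^3 + |E0|)^2
      ≤ 1/12 * (M * |x|^2) * (M * |x|^3)^2 + 1/12 * (M * |x|^3) * (M * |x|) * |u|^2
        + 1/36 * (M * |x|^3) * M * |u|^3 + 1/2 * |u| * (M * |u|^4) + M * |u|^5
        + 1/12 * |u|^2 * (M * |u|^3) + 1/6 * (M * |x|^3) * (M * |u|^4)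
        + 1/12 * (M * |x|^2 * |u| + (M * |x|)/2 * |u|^2 + M/6 * |u|^3 + M * |u|^4)^2 := by
        gcongr
    _ ≤ 200 * M^7 * (|x|^8 + |y|^4) :=
        arithCore M |x| |y| |u| hM (abs_nonneg x) (abs_nonneg y) (abs_nonneg u)
          hx1 hy1 hu1 htb

lemma mainIdentity (a0 a1 a2 a3 u y gx gX b0 b1 E0 E1 EG : ℝ)
    (hy : y = u - a0)
    (hb0 : b0 = a0 + a1*u + a2/2*u^2 + a3/6*u^3 + E0)
    (hb1 : b1 = a1 + a2*u + a3/2*u^2 + E1)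
    (hgX : gX = gx + (a0*u + a1/2*u^2 + a2/6*u^3 + a3/24*u^4) + EG) :
    (1/2 * u^2 - gX + 1/2 * b0 * u - 1/12 * b1 * u^2 + 1/12 * b0^2)
      - (1/2 * y^2 - gx + 1/2 * a0 * y - 1/12 * a1 * y^2 + 1/12 * a0^2)
    = 1/12*a1*a0^2 + 1/12*a0*a2*u^2 + 1/36*a0*a3*u^3 + 1/2*u*E0 + -EG
      + -(1/12*u^2*E1) + 1/6*a0*E0
      + 1/12*(a1*u + a2/2*u^2 + a3/6*u^3 + E0)^2 := by
  subst hy hb0 hb1 hgX; ring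

lemma abs_add8 (b1 b2 b3 b4 b5 b6 b7 b8 : ℝ) :
    |b1+b2+b3+b4+b5+b6+b7+b8| ≤ |b1|+|b2|+|b3|+|b4|+|b5|+|b6|+|b7|+|b8| := by
  calc |b1+b2+b3+b4+b5+b6+b7+b8| ≤ |b1+b2+b3+b4+b5+b6+b7| + |b8| := abs_add_le _ _
    _ ≤ |b1+b2+b3+b4+b5+b6| + |b7| + |b8| := by gcongr; exact abs_add_le _ _
    _ ≤ |b1+b2+b3+b4+b5| + |b6| + |b7| + |b8| := by gcongr; exact abs_add_le _ _
    _ ≤ |b1+b2+b3+b4| + |b5| + |b6| + |b7| + |b8| := by gcongr; exact abs_add_le _ _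
    _ ≤ |b1+b2+b3| + |b4| + |b5| + |b6| + |b7| + |b8| := by gcongr; exact abs_add_le _ _
    _ ≤ |b1+b2| + |b3| + |b4| + |b5| + |b6| + |b7| + |b8| := by gcongr; exact abs_add_le _ _
    _ ≤ |b1| + |b2| + |b3| + |b4| + |b5| + |b6| + |b7| + |b8| := by gcongr; exact abs_add_le _ _


set_option maxHeartbeats 1000000 in
/-- The quasi-Hamiltonian is almost conserved:
`|H(T(x,y)) − H(x,y)| ≤ C (x⁸ + y⁴)` near the origin. -/
theorem quasiham_almost_conserved (h : ℝ → ℝ) (hsm : ContDiff ℝ (⊤ : ℕ∞) h) (h0 : h 0 = 0)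
    (hd1 : deriv h 0 = 0) (hpos : ∀ x : ℝ, x ≠ 0 → 0 < deriv h x)
    (hd3 : 0 < iteratedDeriv 3 h 0) (hodd : ∀ x : ℝ, h (-x) = -h x) :
    ∃ C > (0:ℝ), ∃ δ > (0:ℝ), ∀ x y : ℝ, |x| ≤ δ → |y| ≤ δ →
      |Hham h (Tmap h (x, y)) - Hham h (x, y)| ≤ C * (x ^ 8 + y ^ 4) := by
  have hsInf : ContDiff ℝ ∞ h := hsm.of_le (by simp)
  have hsn : ∀ n : ℕ, ContDiff ℝ ∞ (iteratedDeriv n h) := by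
    intro n
    rw [iteratedDeriv_eq_iterate]
    exact hsInf.iterate_deriv n
  have hic : ∀ n : ℕ, Continuous (iteratedDeriv n h) := fun n => (hsn n).continuous
  have hder : ∀ (n : ℕ) (t : ℝ), HasDerivAt (iteratedDeriv n h) (iteratedDeriv (n+1) h t) t := by
    intro n t
    rw [iteratedDeriv_succ]
    exact (((hsn n).differentiable (by simp)) t).hasDerivAt
  have hdh : ∀ t, HasDerivAt h (deriv h t) t :=
    fun t => ((hsInf.differentiable (by simp)) t).hasDerivAt
  have hdd : ∀ t, HasDerivAt (deriv h) (iteratedDeriv 2 h t) t := by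
    intro t
    have := hder 1 t
    rwa [iteratedDeriv_one] at this
  have hcd : Continuous (deriv h) := by
    rw [← iteratedDeriv_one]; exact hic 1
  have hGd : ∀ t, HasDerivAt (Gfun h) (h t) t := by
    intro t
    exact intervalIntegral.integral_hasDerivAt_right
      (hsInf.continuous.intervalIntegrable 0 t)
      (hsInf.continuous.stronglyMeasurableAtFilter _ _)
      hsInf.continuous.continuousAt
  -- h'' (0) = 0
  have heven : ∀ t : ℝ, deriv h (-t) = deriv h t := by
    intro t
    have h1 : deriv (fun s : ℝ => h (-s)) t = -deriv h (-t) := deriv_comp_neg h t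
    have h2 : (fun s : ℝ => h (-s)) = fun s => -h s := funext hodd
    rw [h2, deriv.fun_neg] at h1
    linarith
  have h2zero : iteratedDeriv 2 h 0 = 0 := by
    have e1 : deriv (fun s : ℝ => deriv h (-s)) 0 = -deriv (deriv h) (-0) :=
      deriv_comp_neg (deriv h) 0
    rw [show (fun s : ℝ => deriv h (-s)) = deriv h from funext heven] at e1
    simp only [neg_zero] at e1
    rw [iteratedDeriv_succ, iteratedDeriv_one]
    linarith
  -- uniform bound M
  obtain ⟨C3, hC3⟩ := (isCompact_Icc (a := (-2:ℝ)) (b := 2)).exists_bound_of_continuousOn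
    (hic 3).continuousOn
  obtain ⟨C4, hC4⟩ := (isCompact_Icc (a := (-2:ℝ)) (b := 2)).exists_bound_of_continuousOn
    (hic 4).continuousOn
  set M := max 1 (max C3 C4) with hMdef
  have hM1 : (1:ℝ) ≤ M := le_max_left _ _
  have hM0 : (0:ℝ) < M := lt_of_lt_of_le one_pos hM1
  have hM3 : ∀ t : ℝ, |t| ≤ 2 → |iteratedDeriv 3 h t| ≤ M := by
    intro t ht
    have := hC3 t (by rw [Set.mem_Icc]; constructor <;> linarith [abs_le.mp ht |>.1, abs_le.mp ht |>.2])
    rw [Real.norm_eq_abs] at this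
    exact this.trans ((le_max_left C3 C4).trans (le_max_right 1 _))
  have hM4 : ∀ t : ℝ, |t| ≤ 2 → |iteratedDeriv 4 h t| ≤ M := by
    intro t ht
    have := hC4 t (by rw [Set.mem_Icc]; constructor <;> linarith [abs_le.mp ht |>.1, abs_le.mp ht |>.2])
    rw [Real.norm_eq_abs] at this
    exact this.trans ((le_max_right C3 C4).trans (le_max_right 1 _))
  -- the zero-basepoint chain
  have zb2 : ∀ v : ℝ, |v| ≤ 1 → |iteratedDeriv 2 h v| ≤ M * |v| ^ 1 := by
    apply absBound (F' := iteratedDeriv 3 h) (fun t => hder 2 t) (hic 3) h2zero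
    intro t ht
    rw [pow_zero, mul_one]
    exact hM3 t (ht.trans one_le_two)
  have zb1 : ∀ v : ℝ, |v| ≤ 1 → |deriv h v| ≤ M * |v| ^ 2 := by
    apply absBound (F' := iteratedDeriv 2 h) hdd (hic 2) hd1 zb2
  have zb0 : ∀ v : ℝ, |v| ≤ 1 → |h v| ≤ M * |v| ^ 3 := by
    apply absBound (F' := deriv h) hdh hcd h0 zb1
  -- the x-based Taylor chains and conclusion
  refine ⟨200 * M ^ 7, mul_pos (by norm_num) (pow_pos hM0 7),
    min 1 (1/(2*M)), lt_min one_pos (div_pos one_pos (by linarith)), ?_⟩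
  intro x y hx hy
  have hx1 : |x| ≤ 1 := hx.trans (min_le_left _ _)
  have hy1 : |y| ≤ 1 := hy.trans (min_le_left _ _)
  have ha0 : |h x| ≤ M * |x| ^ 3 := zb0 x hx1
  have ha1 : |deriv h x| ≤ M * |x| ^ 2 := zb1 x hx1
  have ha2 : |iteratedDeriv 2 h x| ≤ M * |x| := by simpa using zb2 x hx1
  have ha3 : |iteratedDeriv 3 h x| ≤ M := hM3 x (hx1.trans one_le_two)
  -- shifted derivative helpers
  have hshift : ∀ (n : ℕ) (t : ℝ),
      HasDerivAt (fun w => iteratedDeriv n h (x+w)) (iteratedDeriv (n+1) h (x+t)) t := by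
    intro n t
    simpa [Function.comp_def] using (hder n (x+t)).comp t ((hasDerivAt_id t).const_add x)
  have hshifth : ∀ t : ℝ, HasDerivAt (fun w => h (x+w)) (deriv h (x+t)) t := by
    intro t
    simpa [Function.comp_def] using (hdh (x+t)).comp t ((hasDerivAt_id t).const_add x)
  have hshiftd : ∀ t : ℝ, HasDerivAt (fun w => deriv h (x+w)) (iteratedDeriv 2 h (x+t)) t := by
    intro t
    simpa [Function.comp_def] using (hdd (x+t)).comp t ((hasDerivAt_id t).const_add x)
  have hshiftG : ∀ t : ℝ, HasDerivAt (fun w => Gfun h (x+w)) (h (x+t)) t := by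
    intro t
    simpa [Function.comp_def] using (hGd (x+t)).comp t ((hasDerivAt_id t).const_add x)
  have habs2 : ∀ t : ℝ, |t| ≤ 1 → |x + t| ≤ 2 := by
    intro t ht
    calc |x + t| ≤ |x| + |t| := abs_add_le _ _
      _ ≤ 2 := by linarith
  -- Taylor chain at x
  have cF3 : ∀ v : ℝ, |v| ≤ 1 →
      |iteratedDeriv 3 h (x+v) - iteratedDeriv 3 h x| ≤ M * |v| ^ 1 := by
    apply absBound (F' := fun w => iteratedDeriv 4 h (x+w))
      (fun t => (hshift 3 t).sub_const _)
      ((hic 4).comp (continuous_const.add continuous_id)) (by simp)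
    intro t ht
    rw [pow_zero, mul_one]
    exact hM4 _ (habs2 t ht)
  have cF2 : ∀ v : ℝ, |v| ≤ 1 →
      |iteratedDeriv 2 h (x+v)
        - (iteratedDeriv 2 h x + iteratedDeriv 3 h x * v)| ≤ M * |v| ^ 2 := by
    apply absBound (F' := fun w => iteratedDeriv 3 h (x+w) - iteratedDeriv 3 h x)
      ?_ ?_ (by simp) cF3
    · intro t
      have hp : HasDerivAt (fun w : ℝ => iteratedDeriv 2 h x + iteratedDeriv 3 h x * w)
          (iteratedDeriv 3 h x) t := by
        simpa using ((hasDerivAt_id t).const_mul (iteratedDeriv 3 h x)).const_add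
          (iteratedDeriv 2 h x)
      exact (hshift 2 t).sub hp
    · exact ((hic 3).comp (continuous_const.add continuous_id)).sub continuous_const
  have cF1 : ∀ v : ℝ, |v| ≤ 1 →
      |deriv h (x+v) - (deriv h x + iteratedDeriv 2 h x * v
        + iteratedDeriv 3 h x/2 * v^2)| ≤ M * |v| ^ 3 := by
    apply absBound
      (F' := fun w => iteratedDeriv 2 h (x+w) - (iteratedDeriv 2 h x + iteratedDeriv 3 h x * w))
      ?_ ?_ (by simp) cF2
    · intro t
      have hp : HasDerivAt (fun w : ℝ => deriv h x + iteratedDeriv 2 h x * w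
          + iteratedDeriv 3 h x/2 * w^2)
          (iteratedDeriv 2 h x + iteratedDeriv 3 h x * t) t := by
        have k1 := ((hasDerivAt_id t).const_mul (iteratedDeriv 2 h x)).const_add (deriv h x)
        have k2 := (hasDerivAt_pow 2 t).const_mul (iteratedDeriv 3 h x/2)
        exact (k1.add k2).congr_deriv (by push_cast; ring)
      exact (hshiftd t).sub hp
    · apply ((hic 2).comp (continuous_const.add continuous_id)).sub
      fun_prop
  have cF0 : ∀ v : ℝ, |v| ≤ 1 →
      |h (x+v) - (h x + deriv h x * v + iteratedDeriv 2 h x/2 * v^2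
        + iteratedDeriv 3 h x/6 * v^3)| ≤ M * |v| ^ 4 := by
    apply absBound
      (F' := fun w => deriv h (x+w) - (deriv h x + iteratedDeriv 2 h x * w
        + iteratedDeriv 3 h x/2 * w^2))
      ?_ ?_ (by simp) cF1
    · intro t
      have hp : HasDerivAt (fun w : ℝ => h x + deriv h x * w + iteratedDeriv 2 h x/2 * w^2
          + iteratedDeriv 3 h x/6 * w^3)
          (deriv h x + iteratedDeriv 2 h x * t + iteratedDeriv 3 h x/2 * t^2) t := by
        have k1 := ((hasDerivAt_id t).const_mul (deriv h x)).const_add (h x)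
        have k2 := (hasDerivAt_pow 2 t).const_mul (iteratedDeriv 2 h x/2)
        have k3 := (hasDerivAt_pow 3 t).const_mul (iteratedDeriv 3 h x/6)
        exact ((k1.add k2).add k3).congr_deriv (by push_cast; ring)
      exact (hshifth t).sub hp
    · apply (hcd.comp (continuous_const.add continuous_id)).sub
      fun_prop
  have cFG : ∀ v : ℝ, |v| ≤ 1 →
      |Gfun h (x+v) - Gfun h x - (h x * v + deriv h x/2 * v^2
        + iteratedDeriv 2 h x/6 * v^3 + iteratedDeriv 3 h x/24 * v^4)| ≤ M * |v| ^ 5 := by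
    apply absBound
      (F' := fun w => h (x+w) - (h x + deriv h x * w + iteratedDeriv 2 h x/2 * w^2
        + iteratedDeriv 3 h x/6 * w^3))
      ?_ ?_ (by simp) cF0
    · intro t
      have hp : HasDerivAt (fun w : ℝ => h x * w + deriv h x/2 * w^2
          + iteratedDeriv 2 h x/6 * w^3 + iteratedDeriv 3 h x/24 * w^4)
          (h x + deriv h x * t + iteratedDeriv 2 h x/2 * t^2
            + iteratedDeriv 3 h x/6 * t^3) t := by
        have k1 := (hasDerivAt_id t).const_mul (h x)
        have k2 := (hasDerivAt_pow 2 t).const_mul (deriv h x/2)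
        have k3 := (hasDerivAt_pow 3 t).const_mul (iteratedDeriv 2 h x/6)
        have k4 := (hasDerivAt_pow 4 t).const_mul (iteratedDeriv 3 h x/24)
        exact (((k1.add k2).add k3).add k4).congr_deriv (by push_cast; ring)
      exact (((hshiftG t).sub_const (Gfun h x)).sub hp)
    · apply ((hsInf.continuous.comp (continuous_const.add continuous_id)).sub _)
      fun_prop
  -- the increment u
  set u := h x + y with hudef
  have htb : |u| ≤ |y| + M * |x| ^ 3 := by
    rw [hudef]
    calc |h x + y| ≤ |h x| + |y| := abs_add_le _ _
      _ ≤ |y| + M * |x| ^ 3 := by linarith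
  have hu1 : |u| ≤ 1 := by
    have l1 : |x|^3 ≤ min 1 (1/(2*M)) := by
      calc |x|^3 ≤ |x|^1 := pow_le_pow_of_le_one (abs_nonneg x) hx1 (by norm_num)
        _ = |x| := pow_one _
        _ ≤ _ := hx
    have l2 : M * |x|^3 ≤ M * (1/(2*M)) :=
      mul_le_mul_of_nonneg_left (l1.trans (min_le_right _ _)) hM0.le
    have l3 : M * (1/(2*M)) = 1/2 := by field_simp
    have l4 : (1:ℝ)/(2*M) ≤ 1/2 := by
      apply one_div_le_one_div_of_le (by norm_num)
      linarith
    have l5 : |y| ≤ 1/2 := hy.trans ((min_le_right _ _).trans l4)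
    linarith
  -- error terms
  have hE0b := cF0 u hu1
  have hE1b := cF1 u hu1
  have hEGb := cFG u hu1
  set E0 := h (x+u) - (h x + deriv h x * u + iteratedDeriv 2 h x/2 * u^2
    + iteratedDeriv 3 h x/6 * u^3) with hE0def
  set E1 := deriv h (x+u) - (deriv h x + iteratedDeriv 2 h x * u
    + iteratedDeriv 3 h x/2 * u^2) with hE1def
  set EG := Gfun h (x+u) - Gfun h x - (h x * u + deriv h x/2 * u^2
    + iteratedDeriv 2 h x/6 * u^3 + iteratedDeriv 3 h x/24 * u^4) with hEGdef
  -- the identity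
  have hT : Tmap h (x, y) = (x + u, u) := by
    rw [hudef]
    show (x + h x + y, h x + y) = _
    rw [add_assoc]
  have hident : Hham h (Tmap h (x, y)) - Hham h (x, y)
      = 1/12*(deriv h x)*(h x)^2 + 1/12*(h x)*(iteratedDeriv 2 h x)*u^2
        + 1/36*(h x)*(iteratedDeriv 3 h x)*u^3 + 1/2*u*E0 + -EG
        + -(1/12*u^2*E1) + 1/6*(h x)*E0
        + 1/12*((deriv h x)*u + (iteratedDeriv 2 h x)/2*u^2
            + (iteratedDeriv 3 h x)/6*u^3 + E0)^2 := by
    rw [hT]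
    exact mainIdentity (h x) (deriv h x) (iteratedDeriv 2 h x) (iteratedDeriv 3 h x)
      u y (Gfun h x) (Gfun h (x+u)) (h (x+u)) (deriv h (x+u)) E0 E1 EG
      (by rw [hudef]; ring) (by rw [hE0def]; ring) (by rw [hE1def]; ring)
      (by rw [hEGdef]; ring)
  -- the absolute-value estimate
  have gP : |(deriv h x)*u + (iteratedDeriv 2 h x)/2*u^2 + (iteratedDeriv 3 h x)/6*u^3 + E0|
      ≤ |deriv h x| * |u| + |iteratedDeriv 2 h x|/2 * |u|^2
        + |iteratedDeriv 3 h x|/6 * |u|^3 + |E0| := by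
    calc |(deriv h x)*u + (iteratedDeriv 2 h x)/2*u^2 + (iteratedDeriv 3 h x)/6*u^3 + E0|
        ≤ |(deriv h x)*u + (iteratedDeriv 2 h x)/2*u^2 + (iteratedDeriv 3 h x)/6*u^3| + |E0| :=
          abs_add_le _ _
      _ ≤ |(deriv h x)*u| + |(iteratedDeriv 2 h x)/2*u^2| + |(iteratedDeriv 3 h x)/6*u^3| + |E0| :=
          add_le_add (abs_add_three _ _ _) le_rfl
      _ = |deriv h x| * |u| + |iteratedDeriv 2 h x|/2 * |u|^2
          + |iteratedDeriv 3 h x|/6 * |u|^3 + |E0| := by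
          rw [abs_mul, abs_mul, abs_mul, abs_div, abs_div, abs_pow, abs_pow]
          norm_num
  have hbig : |Hham h (Tmap h (x, y)) - Hham h (x, y)|
      ≤ 1/12 * |deriv h x| * |h x|^2 + 1/12 * |h x| * |iteratedDeriv 2 h x| * |u|^2
        + 1/36 * |h x| * |iteratedDeriv 3 h x| * |u|^3
        + 1/2 * |u| * |E0| + |EG| + 1/12 * |u|^2 * |E1| + 1/6 * |h x| * |E0|
        + 1/12 * (|deriv h x| * |u| + |iteratedDeriv 2 h x|/2 * |u|^2
            + |iteratedDeriv 3 h x|/6 * |u|^3 + |E0|)^2 := by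
    rw [hident]
    refine (abs_add8 _ _ _ _ _ _ _ _).trans ?_
    have g1 : |1/12*(deriv h x)*(h x)^2| = 1/12 * |deriv h x| * |h x|^2 := by
      rw [abs_mul, abs_mul, abs_pow, abs_of_pos (show (0:ℝ) < 1/12 by norm_num)]
    have g2 : |1/12*(h x)*(iteratedDeriv 2 h x)*u^2|
        = 1/12 * |h x| * |iteratedDeriv 2 h x| * |u|^2 := by
      rw [abs_mul, abs_mul, abs_mul, abs_pow, abs_of_pos (show (0:ℝ) < 1/12 by norm_num)]
    have g3 : |1/36*(h x)*(iteratedDeriv 3 h x)*u^3|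
        = 1/36 * |h x| * |iteratedDeriv 3 h x| * |u|^3 := by
      rw [abs_mul, abs_mul, abs_mul, abs_pow, abs_of_pos (show (0:ℝ) < 1/36 by norm_num)]
    have g4 : |1/2*u*E0| = 1/2 * |u| * |E0| := by
      rw [abs_mul, abs_mul, abs_of_pos (show (0:ℝ) < 1/2 by norm_num)]
    have g5 : |-EG| = |EG| := abs_neg _
    have g6 : |-(1/12*u^2*E1)| = 1/12 * |u|^2 * |E1| := by
      rw [abs_neg, abs_mul, abs_mul, abs_pow, abs_of_pos (show (0:ℝ) < 1/12 by norm_num)]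
    have g7 : |1/6*(h x)*E0| = 1/6 * |h x| * |E0| := by
      rw [abs_mul, abs_mul, abs_of_pos (show (0:ℝ) < 1/6 by norm_num)]
    have g8 : |1/12*((deriv h x)*u + (iteratedDeriv 2 h x)/2*u^2
        + (iteratedDeriv 3 h x)/6*u^3 + E0)^2|
        ≤ 1/12 * (|deriv h x| * |u| + |iteratedDeriv 2 h x|/2 * |u|^2
            + |iteratedDeriv 3 h x|/6 * |u|^3 + |E0|)^2 := by
      rw [abs_mul, abs_pow, abs_of_pos (show (0:ℝ) < 1/12 by norm_num)]
      have := pow_le_pow_left₀ (abs_nonneg _) gP 2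
      linarith
    rw [g1, g2, g3, g4, g5, g6, g7]
    exact add_le_add le_rfl g8
  have harith := arithBound M x y u (h x) (deriv h x) (iteratedDeriv 2 h x)
    (iteratedDeriv 3 h x) E0 E1 EG hM1 hx1 hy1 hu1 htb ha0 ha1 ha2 ha3
    (by simpa using hE0b) (by simpa using hE1b) (by simpa using hEGb)
  have hxe : |x|^8 = x^8 := by
    rw [← abs_pow]
    exact abs_of_nonneg (by positivity)
  have hye : |y|^4 = y^4 := by
    rw [← abs_pow]
    exact abs_of_nonneg (by positivity)
  calc |Hham h (Tmap h (x, y)) - Hham h (x, y)| ≤ _ := hbig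
    _ ≤ 200 * M^7 * (|x|^8 + |y|^4) := harith
    _ = 200 * M^7 * (x^8 + y^4) := by rw [hxe, hye]
end
end

section
/- There exist constants C, δ > 0 (depending only on h) such that for every M > 0 and every (x,y) ∈ P_M with |x| ≤ δ, |y| ≤ δ, one has x² ≤ C M^{−1/2} y. -/
noncomputable section

open Real MeasureTheory

/-- The fat region `P_M = {(x,y) : M x⁴ ≤ H(x,y), x ≤ 0, y ≥ 0}`. -/
def PM (h : ℝ → ℝ) (M : ℝ) : Set (ℝ × ℝ) :=
  {q | M * q.1 ^ 4 ≤ Hham h q ∧ q.1 ≤ 0 ∧ 0 ≤ q.2}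

/-- In the fat region `P_M` one has `x² ≤ C M^{−1/2} y`. -/
theorem fat_x_sq_le (h : ℝ → ℝ) (hsm : ContDiff ℝ (⊤ : ℕ∞) h) (h0 : h 0 = 0)
    (hd1 : deriv h 0 = 0) (hpos : ∀ x : ℝ, x ≠ 0 → 0 < deriv h x)
    (hd3 : 0 < iteratedDeriv 3 h 0) (hodd : ∀ x : ℝ, h (-x) = -h x) :
    ∃ C > (0:ℝ), ∃ δ > (0:ℝ), ∀ M : ℝ, 0 < M → ∀ x y : ℝ,
      (x, y) ∈ PM h M → |x| ≤ δ → |y| ≤ δ →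
        x ^ 2 ≤ C / Real.sqrt M * y := by
  have hcont : Continuous h := hsm.continuous
  have hdiff : Differentiable ℝ h := hsm.differentiable (by simp)
  have hdcont : Continuous (deriv h) := hsm.continuous_deriv (by simp)
  -- deriv h is nonnegative everywhere
  have hd_nonneg : ∀ x : ℝ, 0 ≤ deriv h x := by
    intro x
    rcases eq_or_ne x 0 with rfl | hx
    · rw [hd1]
    · exact (hpos x hx).le
  -- h is monotone, hence h x ≤ 0 for x ≤ 0
  have hmono : Monotone h := by
    apply monotone_of_deriv_nonneg hdiff hd_nonneg
  have hle0 : ∀ x : ℝ, x ≤ 0 → h x ≤ 0 := fun x hx => by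
    have := hmono hx; rwa [h0] at this
  -- choose δ with deriv h < 6 on [-δ, δ]
  obtain ⟨δ0, hδ0, hδ⟩ := Metric.continuousAt_iff.mp (hdcont.continuousAt (x := 0)) 6 (by norm_num)
  set δ : ℝ := δ0 / 2 with hδdef
  have hδpos : 0 < δ := by positivity
  have hd_lt : ∀ t : ℝ, |t| ≤ δ → deriv h t < 6 := by
    intro t ht
    have h1 : dist t 0 < δ0 := by
      rw [Real.dist_eq, sub_zero]
      calc |t| ≤ δ0 / 2 := ht
        _ < δ0 := by linarith
    have := hδ h1
    rw [Real.dist_eq, hd1, sub_zero] at this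
    calc deriv h t ≤ |deriv h t| := le_abs_self _
      _ < 6 := this
  -- key inequality: (h x)^2 ≤ 12 * Gfun h x for x ∈ [-δ, 0]
  have hint : ∀ a b : ℝ, IntervalIntegrable h volume a b := fun a b =>
    hcont.intervalIntegrable a b
  have hG_deriv : ∀ t : ℝ, HasDerivAt (Gfun h) (h t) t := by
    intro t
    exact intervalIntegral.integral_hasDerivAt_right (hint 0 t)
      (hcont.stronglyMeasurableAtFilter _ _) hcont.continuousAt
  have hF_deriv : ∀ t : ℝ, HasDerivAt (fun u => 12 * Gfun h u - (h u) ^ 2)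
      (2 * h t * (6 - deriv h t)) t := by
    intro t
    have h1 := ((hG_deriv t).const_mul (12 : ℝ)).sub
      (((hdiff t).hasDerivAt).pow 2)
    refine h1.congr_deriv ?_
    push_cast
    ring
  have hkey : ∀ x : ℝ, -δ ≤ x → x ≤ 0 → (h x) ^ 2 ≤ 12 * Gfun h x := by
    intro x hx1 hx2
    have hanti : AntitoneOn (fun u => 12 * Gfun h u - (h u) ^ 2) (Set.Icc (-δ) 0) := by
      apply antitoneOn_of_deriv_nonpos (convex_Icc _ _)
      · exact (Differentiable.continuous (fun t => (hF_deriv t).differentiableAt)).continuousOn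
      · exact (Differentiable.differentiableOn (fun t => (hF_deriv t).differentiableAt))
      · intro t ht
        rw [(hF_deriv t).deriv]
        have ht' : t ∈ Set.Ioo (-δ) 0 := by rwa [interior_Icc] at ht
        have h1 : h t ≤ 0 := hle0 t ht'.2.le
        have h2 : deriv h t < 6 := hd_lt t (by
          rw [abs_le]; constructor <;> [linarith [ht'.1]; linarith [ht'.2]])
        nlinarith
    have hF0 : (fun u => 12 * Gfun h u - (h u) ^ 2) 0 = 0 := by
      simp [Gfun, h0]
    have := hanti (Set.mem_Icc.mpr ⟨hx1, hx2⟩) (Set.mem_Icc.mpr ⟨le_of_lt (neg_neg_iff_pos.mpr hδpos), le_refl 0⟩) hx2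
    rw [hF0] at this
    simp only at this
    linarith
  refine ⟨1, one_pos, δ, hδpos, ?_⟩
  intro M hM x y hmem hxδ hyδ
  obtain ⟨hH, hx0, hy0⟩ := hmem
  have hHval : Hham h (x, y) = (1/2) * y ^ 2 - Gfun h x + (1/2) * h x * y
      - (1/12) * deriv h x * y ^ 2 + (1/12) * (h x) ^ 2 := rfl
  have hx1 : -δ ≤ x := by
    rw [abs_le] at hxδ; exact hxδ.1
  have hG : (h x) ^ 2 ≤ 12 * Gfun h x := hkey x hx1 hx0
  have hhx : h x ≤ 0 := hle0 x hx0
  have hdx : 0 ≤ deriv h x := hd_nonneg x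
  -- M x^4 ≤ (1/2) y^2 ≤ y^2
  have hMx : M * x ^ 4 ≤ y ^ 2 := by
    rw [hHval] at hH
    nlinarith [mul_nonneg hdx (sq_nonneg y), mul_nonpos_of_nonpos_of_nonneg hhx hy0]
  -- conclude
  set s := Real.sqrt M with hs
  have hspos : 0 < s := Real.sqrt_pos.mpr hM
  have hs2 : s ^ 2 = M := Real.sq_sqrt hM.le
  have h1 : (s * x ^ 2) ^ 2 ≤ y ^ 2 := by
    calc (s * x ^ 2) ^ 2 = M * x ^ 4 := by rw [← hs2]; ring
      _ ≤ y ^ 2 := hMx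
  have h2 : s * x ^ 2 ≤ y := by
    have := Real.sqrt_le_sqrt h1
    rwa [Real.sqrt_sq (by positivity), Real.sqrt_sq hy0] at this
  rw [div_mul_eq_mul_div, one_mul, le_div_iff₀ hspos]
  linarith [h2]
end
end

section
/- There exist M₀ > 0 and constants c, C, δ > 0 (depending only on h) such that for every M ≥ M₀ and every (x,y) ∈ P_M with |x| ≤ δ, |y| ≤ δ, one has c y² ≤ H(x,y) ≤ C y². -/
set_option maxHeartbeats 1000000

noncomputable section

open Real MeasureTheory

private lemma abs_le_of_mem_uIcc' {x z : ℝ} (hz : z ∈ Set.uIcc 0 x) : |z| ≤ |x| := by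
  rcases le_total 0 x with hx | hx
  · rw [Set.uIcc_of_le hx] at hz
    rw [abs_of_nonneg hz.1, abs_of_nonneg hx]; exact hz.2
  · rw [Set.uIcc_of_ge hx] at hz
    rw [abs_of_nonpos hz.2, abs_of_nonpos hx]; linarith [hz.1]

/-- MVT step: if `f 0 = 0` and `|deriv f| ≤ C` on `uIcc 0 x`, then `|f x| ≤ C|x|`. -/
private lemma mvt_step' {f : ℝ → ℝ} (hf : Differentiable ℝ f) (h0 : f 0 = 0) {C x : ℝ}
    (hb : ∀ z ∈ Set.uIcc 0 x, |deriv f z| ≤ C) : |f x| ≤ C * |x| := by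
  have := Convex.norm_image_sub_le_of_norm_deriv_le (f := f) (s := Set.uIcc 0 x)
    (fun z _ => hf z) (by simpa using hb) (convex_uIcc 0 x)
    Set.left_mem_uIcc Set.right_mem_uIcc
  simpa [h0, Real.norm_eq_abs] using this

private lemma key_alg' {B M Hv g gp Gx t y : ℝ} (hB : 1 ≤ B)
    (ht0 : 0 ≤ t) (ht : t ≤ 1/(8*B)) (hy0 : 0 ≤ y)
    (hg : |g| ≤ B*t^3) (hGx : |Gx| ≤ B*t^4) (hgp0 : 0 ≤ gp) (hgp : gp ≤ B*t^2)
    (hM0 : 100*B ≤ M) (hMt : M * t^4 ≤ Hv)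
    (hHv : Hv = (1/2)*y^2 - Gx + (1/2)*g*y - (1/12)*gp*y^2 + (1/12)*g^2) :
    (1/4)*y^2 ≤ Hv ∧ Hv ≤ 1*y^2 := by
  have hBpos : (0:ℝ) < B := by linarith
  obtain ⟨hg1, hg2⟩ := abs_le.mp hg
  obtain ⟨hG1, hG2⟩ := abs_le.mp hGx
  have ht4 : (0:ℝ) ≤ t^4 := by positivity
  have hBt : B*t ≤ 1/8 := by
    have := mul_le_mul_of_nonneg_left ht hBpos.le
    have e : B*(1/(8*B)) = 1/8 := by field_simp
    linarith
  have ht8 : t ≤ 1/8 := by nlinarith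
  have hg2' : g ≤ (1/8)*t^2 := by nlinarith [mul_le_mul_of_nonneg_right hBt (sq_nonneg t)]
  have hg1' : -((1/8)*t^2) ≤ g := by nlinarith [mul_le_mul_of_nonneg_right hBt (sq_nonneg t)]
  have hgsq : g^2 ≤ (1/64)*t^4 := by
    have := sq_le_sq' hg1' hg2'
    nlinarith [this]
  have hgp64 : gp ≤ 1/64 := by nlinarith [mul_le_mul_of_nonneg_right hBt ht0]
  have hgpy : gp*y^2 ≤ (1/64)*y^2 := mul_le_mul_of_nonneg_right hgp64 (sq_nonneg y)
  have hgpy0 : 0 ≤ gp*y^2 := mul_nonneg hgp0 (sq_nonneg y)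
  have ht2y : t^2*y ≤ (1/2)*(t^4+y^2) := by nlinarith [sq_nonneg (t^2 - y)]
  have ht2y0 : 0 ≤ t^2*y := mul_nonneg (sq_nonneg t) hy0
  have hgy2 : (1/2)*g*y ≤ (1/32)*(t^4+y^2) := by
    nlinarith [mul_le_mul_of_nonneg_right hg2' hy0]
  have hgy1 : -((1/32)*(t^4+y^2)) ≤ (1/2)*g*y := by
    nlinarith [mul_le_mul_of_nonneg_right hg1' hy0]
  have h1 : 100*B*t^4 ≤ Hv := by
    have := mul_le_mul_of_nonneg_right hM0 ht4
    linarith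
  have hBt4 : t^4 ≤ B*t^4 := by
    have := mul_le_mul_of_nonneg_right hB ht4
    linarith
  have hup : Hv ≤ (17/32)*y^2 + 2*B*t^4 := by
    nlinarith [hgsq, hgy2, hG1, hgpy0, hBt4]
  have habs : 2*B*t^4 ≤ (1/50)*Hv := by linarith
  have hupper : Hv ≤ 1*y^2 := by linarith
  refine ⟨?_, hupper⟩
  have h8 : B*t^4 ≤ (1/100)*y^2 := by linarith
  nlinarith [hgy1, hG2, hgpy, sq_nonneg g, h8, hBt4]

/-- For `M` large, in `P_M` one has `H(x,y) ≍ y²`. -/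
theorem fat_H_comparable_y_sq (h : ℝ → ℝ) (hsm : ContDiff ℝ (⊤ : ℕ∞) h) (h0 : h 0 = 0)
    (hd1 : deriv h 0 = 0) (hpos : ∀ x : ℝ, x ≠ 0 → 0 < deriv h x)
    (hd3 : 0 < iteratedDeriv 3 h 0) (hodd : ∀ x : ℝ, h (-x) = -h x) :
    ∃ M₀ > (0:ℝ), ∃ c > (0:ℝ), ∃ C > (0:ℝ), ∃ δ > (0:ℝ),
      ∀ M : ℝ, M₀ ≤ M → ∀ x y : ℝ,
        (x, y) ∈ PM h M → |x| ≤ δ → |y| ≤ δ →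
          c * y ^ 2 ≤ Hham h (x, y) ∧ Hham h (x, y) ≤ C * y ^ 2 := by
  -- smoothness of iterated derivatives
  have hsm' : ContDiff ℝ ((⊤:ℕ∞) : WithTop ℕ∞) h := hsm.of_le (by simp)
  have c1 := (contDiff_infty_iff_deriv.mp hsm').2
  have c2 := (contDiff_infty_iff_deriv.mp c1).2
  have c3 : Continuous (deriv (deriv (deriv h))) :=
    ((contDiff_infty_iff_deriv.mp c2).2).continuous
  have dh : Differentiable ℝ h := (contDiff_infty_iff_deriv.mp hsm').1
  have d1 : Differentiable ℝ (deriv h) := (contDiff_infty_iff_deriv.mp c1).1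
  have d2 : Differentiable ℝ (deriv (deriv h)) := (contDiff_infty_iff_deriv.mp c2).1
  -- deriv h is even, deriv (deriv h) is odd, so deriv² h 0 = 0
  have hfun : (fun x => h (-x)) = (fun x => -h x) := funext fun x => hodd x
  have heven : ∀ x : ℝ, deriv h (-x) = deriv h x := by
    intro x
    have h1 := deriv_comp_neg h x
    rw [hfun] at h1
    rw [deriv.fun_neg] at h1
    linarith
  have h2zero : deriv (deriv h) 0 = 0 := by
    have hfun2 : (fun x => deriv h (-x)) = deriv h := funext fun x => heven x
    have h1 := deriv_comp_neg (deriv h) 0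
    rw [hfun2] at h1
    simp at h1
    linarith
  -- bound on third derivative
  obtain ⟨B0, hB0⟩ := (isCompact_Icc (a := (-1:ℝ)) (b := 1)).exists_bound_of_continuousOn
    c3.continuousOn
  set B : ℝ := max B0 1 with hBdef
  have hB : (1:ℝ) ≤ B := le_max_right _ _
  have hBpos : (0:ℝ) < B := by linarith
  have hB0' : ∀ z ∈ Set.Icc (-1:ℝ) 1, |deriv (deriv (deriv h)) z| ≤ B :=
    fun z hz => le_trans (hB0 z hz) (le_max_left _ _)
  -- chained MVT bounds
  have mem1 : ∀ {x z : ℝ}, |x| ≤ 1 → z ∈ Set.uIcc 0 x → z ∈ Set.Icc (-1:ℝ) 1 := by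
    intro x z hx hz
    have := abs_le_of_mem_uIcc' hz
    have : |z| ≤ 1 := le_trans this hx
    exact abs_le.mp this |>.elim fun a b => ⟨a, b⟩
  have hbf2 : ∀ x : ℝ, |x| ≤ 1 → |deriv (deriv h) x| ≤ B * |x| := by
    intro x hx
    exact mvt_step' d2 h2zero (fun z hz => hB0' z (mem1 hx hz))
  have hbf1 : ∀ x : ℝ, |x| ≤ 1 → |deriv h x| ≤ B * |x| * |x| := by
    intro x hx
    refine mvt_step' d1 hd1 (fun z hz => ?_)
    have hzx := abs_le_of_mem_uIcc' hz
    have := hbf2 z (le_trans hzx hx)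
    calc |deriv (deriv h) z| ≤ B * |z| := this
      _ ≤ B * |x| := mul_le_mul_of_nonneg_left hzx hBpos.le
  have hbh : ∀ x : ℝ, |x| ≤ 1 → |h x| ≤ B * |x| * |x| * |x| := by
    intro x hx
    refine mvt_step' dh h0 (fun z hz => ?_)
    have hzx := abs_le_of_mem_uIcc' hz
    have := hbf1 z (le_trans hzx hx)
    calc |deriv h z| ≤ B * |z| * |z| := this
      _ ≤ B * |x| * |x| := by
          have h1 : B * |z| ≤ B * |x| := mul_le_mul_of_nonneg_left hzx hBpos.le
          exact mul_le_mul h1 hzx (abs_nonneg z) (by positivity)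
  have hbG : ∀ x : ℝ, |x| ≤ 1 → |Gfun h x| ≤ B * |x|^3 * |x| := by
    intro x hx
    have key := intervalIntegral.norm_integral_le_of_norm_le_const
      (a := 0) (b := x) (C := B*|x|^3) (f := h) (fun z hz => by
        have hz' : z ∈ Set.uIcc 0 x := Set.uIoc_subset_uIcc hz
        have hzx := abs_le_of_mem_uIcc' hz'
        have := hbh z (le_trans hzx hx)
        rw [Real.norm_eq_abs]
        calc |h z| ≤ B * |z| * |z| * |z| := this
          _ ≤ B * |x| * |x| * |x| := by
              have h1 : B * |z| ≤ B * |x| := mul_le_mul_of_nonneg_left hzx hBpos.le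
              have h2 : B * |z| * |z| ≤ B * |x| * |x| :=
                mul_le_mul h1 hzx (abs_nonneg z) (by positivity)
              exact mul_le_mul h2 hzx (abs_nonneg z) (by positivity)
          _ = B * |x|^3 := by ring)
    simpa [Gfun, Real.norm_eq_abs, sub_zero] using key
  -- choose constants
  refine ⟨100*B, by positivity, 1/4, by norm_num, 1, by norm_num, 1/(8*B), by positivity,
    ?_⟩
  intro M hM x y hmem hxδ hyδ
  obtain ⟨hMx, _hx0, hy0⟩ := hmem
  have hδ1 : (1:ℝ)/(8*B) ≤ 1 := by
    rw [div_le_one (by positivity)]; linarith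
  have hx1 : |x| ≤ 1 := le_trans hxδ hδ1
  have habs4 : |x|^4 = x^4 := by
    rw [pow_abs]; exact abs_of_nonneg (by positivity)
  have hgp0 : 0 ≤ deriv h x := by
    rcases eq_or_ne x 0 with rfl | hx
    · exact le_of_eq hd1.symm
    · exact (hpos x hx).le
  have := key_alg' (B := B) (M := M) (Hv := Hham h (x, y)) (g := h x)
    (gp := deriv h x) (Gx := Gfun h x) (t := |x|) (y := y) hB (abs_nonneg x) hxδ hy0
    (by calc |h x| ≤ B * |x| * |x| * |x| := hbh x hx1
          _ = B * |x|^3 := by ring)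
    (by calc |Gfun h x| ≤ B * |x|^3 * |x| := hbG x hx1
          _ = B * |x|^4 := by ring)
    hgp0
    (by have := hbf1 x hx1
        calc deriv h x ≤ |deriv h x| := le_abs_self _
          _ ≤ B * |x| * |x| := this
          _ = B * |x|^2 := by ring)
    hM
    (by rw [← habs4] at hMx; exact hMx)
    (by simp only [Hham])
  simpa using this
end
end

section
/- For M sufficiently large (depending only on h) there exist constants C, δ > 0 such that for every (x,y) ∈ P_M with |x| ≤ δ, |y| ≤ δ and T(x,y) also in the δ-neighborhood of (0,0) with H(T(x,y)) ≥ 0, one has |H(T(x,y))^{1/2} − H(x,y)^{1/2}| ≤ C y³. -/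
noncomputable section

open Real MeasureTheory

/-- product bound for absolute values -/
lemma amul {a b c d : ℝ} (h1 : |a| ≤ b) (h2 : |c| ≤ d) : |a * c| ≤ b * d := by
  rw [abs_mul]
  exact mul_le_mul h1 h2 (abs_nonneg c) ((abs_nonneg a).trans h1)

/-- power comparison helper -/
lemma pb {L y : ℝ} (hL : 1 ≤ L) (hy0 : 0 ≤ y) (hy1 : y ≤ 1) {a b : ℕ}
    (ha : a ≤ 8) (hb : 4 ≤ b) : L^a * y^b ≤ L^8 * y^4 :=
  mul_le_mul (pow_le_pow_right₀ hL ha) (pow_le_pow_of_le_one hy0 hy1 hb)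
    (pow_nonneg hy0 b) (pow_nonneg (le_trans zero_le_one hL) 8)

lemma abs_sub_le_of_mem_uIcc {u v t : ℝ} (ht : t ∈ Set.uIcc u v) : |t - u| ≤ |v - u| := by
  rcases le_total u v with hle | hle
  · rw [Set.uIcc_of_le hle] at ht
    rw [abs_of_nonneg (by linarith [ht.1]), abs_of_nonneg (by linarith)]
    linarith [ht.2]
  · rw [Set.uIcc_of_ge hle] at ht
    rw [abs_of_nonpos (by linarith [ht.2]), abs_of_nonpos (by linarith)]
    linarith [ht.1]

/-- mean value bound on `uIcc` -/
lemma mvt_bound {f g : ℝ → ℝ} (hf : ∀ t, HasDerivAt f (g t) t) {u v C : ℝ}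
    (hC : ∀ t ∈ Set.uIcc u v, |g t| ≤ C) : |f v - f u| ≤ C * |v - u| := by
  have := (convex_uIcc u v).norm_image_sub_le_of_norm_hasDerivWithin_le
    (fun t _ => (hf t).hasDerivWithinAt) (fun t ht => by simpa using hC t ht)
    Set.left_mem_uIcc Set.right_mem_uIcc
  simpa [Real.norm_eq_abs] using this

set_option maxHeartbeats 4000000 in
/-- For `M` large, in `P_M` one has `|H(T(x,y))^{1/2} − H(x,y)^{1/2}| ≤ C y³`. -/
theorem fat_sqrtH_increment (h : ℝ → ℝ) (hsm : ContDiff ℝ (⊤ : ℕ∞) h) (h0 : h 0 = 0)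
    (hd1 : deriv h 0 = 0) (hpos : ∀ x : ℝ, x ≠ 0 → 0 < deriv h x)
    (hd3 : 0 < iteratedDeriv 3 h 0) (hodd : ∀ x : ℝ, h (-x) = -h x) :
    ∃ M₀ > (0:ℝ), ∀ M : ℝ, M₀ ≤ M → ∃ C > (0:ℝ), ∃ δ > (0:ℝ),
      ∀ x y : ℝ, (x, y) ∈ PM h M → |x| ≤ δ → |y| ≤ δ →
        |(Tmap h (x, y)).1| ≤ δ → |(Tmap h (x, y)).2| ≤ δ →
        0 ≤ Hham h (Tmap h (x, y)) →
          |Real.sqrt (Hham h (Tmap h (x, y))) - Real.sqrt (Hham h (x, y))|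
            ≤ C * y ^ 3 := by
  -- smoothness bookkeeping
  have hsm2 : ContDiff ℝ (⊤ : ℕ∞) h := hsm.of_le (by simp)
  have hdh : Differentiable ℝ h := (contDiff_infty_iff_deriv.mp hsm2).1
  have hc1 : ContDiff ℝ (⊤ : ℕ∞) (deriv h) := (contDiff_infty_iff_deriv.mp hsm2).2
  have hdh1 : Differentiable ℝ (deriv h) := (contDiff_infty_iff_deriv.mp hc1).1
  have hc2 : ContDiff ℝ (⊤ : ℕ∞) (deriv (deriv h)) := (contDiff_infty_iff_deriv.mp hc1).2
  have hdh2 : Differentiable ℝ (deriv (deriv h)) := (contDiff_infty_iff_deriv.mp hc2).1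
  have hc3 : Continuous (deriv (deriv (deriv h))) :=
    ((contDiff_infty_iff_deriv.mp hc2).2).continuous
  -- evenness of h', oddness of h''
  have heven : ∀ z : ℝ, deriv h (-z) = deriv h z := by
    intro z
    have H1 : HasDerivAt (fun t : ℝ => h (-t)) (deriv h (-z) * (-1)) z :=
      ((hdh (-z)).hasDerivAt).comp z (hasDerivAt_neg z)
    have H2 : (fun t : ℝ => h (-t)) = (fun t => -h t) := funext hodd
    rw [H2] at H1
    have H3 : HasDerivAt (fun t : ℝ => -h t) (-(deriv h z)) z := ((hdh z).hasDerivAt).neg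
    have := H1.unique H3
    linarith
  have hodd2 : deriv (deriv h) 0 = 0 := by
    have key : ∀ z : ℝ, deriv (deriv h) (-z) * (-1) = deriv (deriv h) z := by
      intro z
      have H1 : HasDerivAt (fun t : ℝ => deriv h (-t)) (deriv (deriv h) (-z) * (-1)) z :=
        ((hdh1 (-z)).hasDerivAt).comp z (hasDerivAt_neg z)
      have H2 : (fun t : ℝ => deriv h (-t)) = deriv h := funext heven
      rw [H2] at H1
      exact H1.unique ((hdh1 z).hasDerivAt)
    have := key 0
    rw [neg_zero] at this
    linarith
  -- uniform bound on the third derivative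
  obtain ⟨L0, hL0b⟩ := (isCompact_Icc (a := (-1:ℝ)) (b := 1)).exists_bound_of_continuousOn
    hc3.continuousOn
  set L : ℝ := max L0 1 with hLdef
  have hL : 1 ≤ L := le_max_right _ _
  have hL0 : (0:ℝ) < L := lt_of_lt_of_le one_pos hL
  have hLb : ∀ t ∈ Set.Icc (-1:ℝ) 1, |deriv (deriv (deriv h)) t| ≤ L := by
    intro t ht
    calc |deriv (deriv (deriv h)) t| ≤ L0 := by simpa using hL0b t ht
    _ ≤ L := le_max_left _ _
  have hIcc01 : (0:ℝ) ∈ Set.Icc (-1:ℝ) 1 := Set.mem_Icc.mpr ⟨by norm_num, by norm_num⟩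
  have hsubI : ∀ u v : ℝ, u ∈ Set.Icc (-1:ℝ) 1 → v ∈ Set.Icc (-1:ℝ) 1 →
      Set.uIcc u v ⊆ Set.Icc (-1:ℝ) 1 := by
    intro u v hu hv
    have h1 : u ∈ Set.uIcc (-1:ℝ) 1 := by rwa [Set.uIcc_of_le (by norm_num : (-1:ℝ) ≤ 1)]
    have h2 : v ∈ Set.uIcc (-1:ℝ) 1 := by rwa [Set.uIcc_of_le (by norm_num : (-1:ℝ) ≤ 1)]
    have := Set.uIcc_subset_uIcc h1 h2
    rwa [Set.uIcc_of_le (by norm_num : (-1:ℝ) ≤ 1)] at this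
  -- Taylor estimates with remainder, orders 1,2,3,4
  have T1 : ∀ u ∈ Set.Icc (-1:ℝ) 1, ∀ v ∈ Set.Icc (-1:ℝ) 1,
      |deriv (deriv h) v - deriv (deriv h) u| ≤ L * |v - u| := by
    intro u hu v hv
    exact mvt_bound (fun t => (hdh2 t).hasDerivAt)
      (fun t ht => hLb t (hsubI u v hu hv ht))
  have T2 : ∀ u ∈ Set.Icc (-1:ℝ) 1, ∀ v ∈ Set.Icc (-1:ℝ) 1,
      |deriv h v - deriv h u - deriv (deriv h) u * (v - u)| ≤ L * |v - u| * |v - u| := by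
    intro u hu v hv
    have hf : ∀ t : ℝ, HasDerivAt (fun t => deriv h t - deriv (deriv h) u * t)
        (deriv (deriv h) t - deriv (deriv h) u) t := by
      intro t
      have := ((hdh1 t).hasDerivAt).sub ((hasDerivAt_id t).const_mul (deriv (deriv h) u))
      exact this.congr_deriv (by ring)
    have hb : ∀ t ∈ Set.uIcc u v, |deriv (deriv h) t - deriv (deriv h) u| ≤ L * |v - u| := by
      intro t ht
      calc |deriv (deriv h) t - deriv (deriv h) u| ≤ L * |t - u| :=
            T1 u hu t (hsubI u v hu hv ht)
      _ ≤ L * |v - u| := mul_le_mul_of_nonneg_left (abs_sub_le_of_mem_uIcc ht) hL0.le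
    have := mvt_bound hf hb
    calc |deriv h v - deriv h u - deriv (deriv h) u * (v - u)|
        = |(deriv h v - deriv (deriv h) u * v) - (deriv h u - deriv (deriv h) u * u)| := by
          rw [show deriv h v - deriv h u - deriv (deriv h) u * (v - u)
            = (deriv h v - deriv (deriv h) u * v) - (deriv h u - deriv (deriv h) u * u) by ring]
    _ ≤ L * |v - u| * |v - u| := this
  have T3 : ∀ u ∈ Set.Icc (-1:ℝ) 1, ∀ v ∈ Set.Icc (-1:ℝ) 1,
      |h v - h u - deriv h u * (v - u) - (1/2) * deriv (deriv h) u * (v - u)^2|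
        ≤ L * |v - u| * |v - u| * |v - u| := by
    intro u hu v hv
    have hf : ∀ t : ℝ, HasDerivAt
        (fun t => h t - deriv h u * t - (1/2) * deriv (deriv h) u * (t - u)^2)
        (deriv h t - deriv h u - deriv (deriv h) u * (t - u)) t := by
      intro t
      have A : HasDerivAt (fun t : ℝ => (t - u)^2) (2 * (t - u)) t := by
        exact (((hasDerivAt_id t).sub_const u).pow 2).congr_deriv (by simp)
      have := (((hdh t).hasDerivAt).sub ((hasDerivAt_id t).const_mul (deriv h u))).sub
        (A.const_mul ((1/2) * deriv (deriv h) u))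
      refine this.congr_deriv ?_
      ring
    have hb : ∀ t ∈ Set.uIcc u v,
        |deriv h t - deriv h u - deriv (deriv h) u * (t - u)| ≤ L * |v - u| * |v - u| := by
      intro t ht
      have h1 := T2 u hu t (hsubI u v hu hv ht)
      have h2 := abs_sub_le_of_mem_uIcc ht
      have h3 : |t - u| * |t - u| ≤ |v - u| * |v - u| := mul_self_le_mul_self (abs_nonneg _) h2
      calc |deriv h t - deriv h u - deriv (deriv h) u * (t - u)|
          ≤ L * |t - u| * |t - u| := h1
      _ = L * (|t - u| * |t - u|) := by ring
      _ ≤ L * (|v - u| * |v - u|) := mul_le_mul_of_nonneg_left h3 hL0.le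
      _ = L * |v - u| * |v - u| := by ring
    have := mvt_bound hf hb
    calc |h v - h u - deriv h u * (v - u) - (1/2) * deriv (deriv h) u * (v - u)^2|
        = |(h v - deriv h u * v - (1/2) * deriv (deriv h) u * (v - u)^2)
            - (h u - deriv h u * u - (1/2) * deriv (deriv h) u * (u - u)^2)| := by
          rw [show h v - h u - deriv h u * (v - u) - (1/2) * deriv (deriv h) u * (v - u)^2
            = (h v - deriv h u * v - (1/2) * deriv (deriv h) u * (v - u)^2)
            - (h u - deriv h u * u - (1/2) * deriv (deriv h) u * (u - u)^2) by ring]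
    _ ≤ L * |v - u| * |v - u| * |v - u| := this
  have hGder : ∀ t : ℝ, HasDerivAt (Gfun h) (h t) t := by
    intro t
    exact (hsm2.continuous.integral_hasStrictDerivAt 0 t).hasDerivAt
  have T4 : ∀ u ∈ Set.Icc (-1:ℝ) 1, ∀ v ∈ Set.Icc (-1:ℝ) 1,
      |Gfun h v - Gfun h u - h u * (v - u) - (1/2) * deriv h u * (v - u)^2
        - (1/6) * deriv (deriv h) u * (v - u)^3|
        ≤ L * |v - u| * |v - u| * |v - u| * |v - u| := by
    intro u hu v hv
    have hf : ∀ t : ℝ, HasDerivAt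
        (fun t => Gfun h t - h u * t - (1/2) * deriv h u * (t - u)^2
          - (1/6) * deriv (deriv h) u * (t - u)^3)
        (h t - h u - deriv h u * (t - u) - (1/2) * deriv (deriv h) u * (t - u)^2) t := by
      intro t
      have A : HasDerivAt (fun t : ℝ => (t - u)^2) (2 * (t - u)) t := by
        exact (((hasDerivAt_id t).sub_const u).pow 2).congr_deriv (by simp)
      have B : HasDerivAt (fun t : ℝ => (t - u)^3) (3 * (t - u)^2) t := by
        exact (((hasDerivAt_id t).sub_const u).pow 3).congr_deriv (by simp)
      have := (((hGder t).sub ((hasDerivAt_id t).const_mul (h u))).sub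
        (A.const_mul ((1/2) * deriv h u))).sub (B.const_mul ((1/6) * deriv (deriv h) u))
      refine this.congr_deriv ?_
      ring
    have hb : ∀ t ∈ Set.uIcc u v,
        |h t - h u - deriv h u * (t - u) - (1/2) * deriv (deriv h) u * (t - u)^2|
          ≤ L * |v - u| * |v - u| * |v - u| := by
      intro t ht
      have h1 := T3 u hu t (hsubI u v hu hv ht)
      have h2 := abs_sub_le_of_mem_uIcc ht
      have h3 : |t - u| * |t - u| ≤ |v - u| * |v - u| := mul_self_le_mul_self (abs_nonneg _) h2
      have h4 : |t - u| * |t - u| * |t - u| ≤ |v - u| * |v - u| * |v - u| :=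
        mul_le_mul h3 h2 (abs_nonneg _) (mul_nonneg (abs_nonneg _) (abs_nonneg _))
      calc |h t - h u - deriv h u * (t - u) - (1/2) * deriv (deriv h) u * (t - u)^2|
          ≤ L * |t - u| * |t - u| * |t - u| := h1
      _ = L * (|t - u| * |t - u| * |t - u|) := by ring
      _ ≤ L * (|v - u| * |v - u| * |v - u|) := mul_le_mul_of_nonneg_left h4 hL0.le
      _ = L * |v - u| * |v - u| * |v - u| := by ring
    have := mvt_bound hf hb
    calc |Gfun h v - Gfun h u - h u * (v - u) - (1/2) * deriv h u * (v - u)^2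
          - (1/6) * deriv (deriv h) u * (v - u)^3|
        = |(Gfun h v - h u * v - (1/2) * deriv h u * (v - u)^2
            - (1/6) * deriv (deriv h) u * (v - u)^3)
          - (Gfun h u - h u * u - (1/2) * deriv h u * (u - u)^2
            - (1/6) * deriv (deriv h) u * (u - u)^3)| := by
          rw [show Gfun h v - Gfun h u - h u * (v - u) - (1/2) * deriv h u * (v - u)^2
              - (1/6) * deriv (deriv h) u * (v - u)^3
            = (Gfun h v - h u * v - (1/2) * deriv h u * (v - u)^2
              - (1/6) * deriv (deriv h) u * (v - u)^3)
            - (Gfun h u - h u * u - (1/2) * deriv h u * (u - u)^2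
              - (1/6) * deriv (deriv h) u * (u - u)^3) by ring]
    _ ≤ L * |v - u| * |v - u| * |v - u| * |v - u| := this
  -- Taylor bounds at the origin
  have B0 : ∀ v ∈ Set.Icc (-1:ℝ) 1, |h v| ≤ L * |v| * |v| * |v| := by
    intro v hv
    have := T3 0 hIcc01 v hv
    simpa [h0, hd1, hodd2] using this
  have B1 : ∀ v ∈ Set.Icc (-1:ℝ) 1, |deriv h v| ≤ L * |v| * |v| := by
    intro v hv
    have := T2 0 hIcc01 v hv
    simpa [hd1, hodd2] using this
  have B2 : ∀ v ∈ Set.Icc (-1:ℝ) 1, |deriv (deriv h) v| ≤ L * |v| := by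
    intro v hv
    have := T1 0 hIcc01 v hv
    simpa [hodd2] using this
  have hG0 : Gfun h 0 = 0 := by simp [Gfun]
  have BG : ∀ v ∈ Set.Icc (-1:ℝ) 1, |Gfun h v| ≤ L * |v| * |v| * |v| * |v| := by
    intro v hv
    have := T4 0 hIcc01 v hv
    simpa [h0, hd1, hodd2, hG0] using this
  -- provide the constants
  refine ⟨66 * L^2, by positivity, ?_⟩
  intro M hM
  refine ⟨80 * L^8, by positivity, 1/(64*L), by positivity, ?_⟩
  intro x y hmem hxd hyd hTx hTy hHT
  obtain ⟨hPM1, hx0, hy0⟩ := hmem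
  have hδ1 : 1/(64*L) ≤ 1 := by
    rw [div_le_one (by positivity)]
    linarith
  have hx1 : |x| ≤ 1 := hxd.trans hδ1
  have hy1 : y ≤ 1 := (le_abs_self y).trans (hyd.trans hδ1)
  have hyδ : y ≤ 1/(64*L) := (le_abs_self y).trans hyd
  have hxI : x ∈ Set.Icc (-1:ℝ) 1 := Set.mem_Icc.mpr (abs_le.mp hx1)
  have hTx' : |x + h x + y| ≤ 1/(64*L) := hTx
  have hvI : (x + h x + y) ∈ Set.Icc (-1:ℝ) 1 :=
    Set.mem_Icc.mpr (abs_le.mp (hTx'.trans hδ1))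
  -- basic bounds at x
  have bA0 : |h x| ≤ L * |x| * |x| * |x| := B0 x hxI
  have bP0 : |deriv h x| ≤ L * |x| * |x| := B1 x hxI
  have bQ0 : |deriv (deriv h) x| ≤ L * |x| := B2 x hxI
  have bG0 : |Gfun h x| ≤ L * |x| * |x| * |x| * |x| := BG x hxI
  have bA'' : |h x| ≤ L * (x^2 * |x|) := by
    rw [show L * (x^2 * |x|) = L * |x| * |x| * |x| by rw [← sq_abs x]; ring]
    exact bA0
  have bA' : |h x| ≤ L * x^2 := by
    refine bA''.trans ?_
    have h1 : x^2 * |x| ≤ x^2 * 1 := mul_le_mul_of_nonneg_left hx1 (sq_nonneg x)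
    nlinarith only [hL0, h1]
  have bP' : |deriv h x| ≤ L * x^2 := by
    rw [show L * x^2 = L * |x| * |x| by rw [← sq_abs x]; ring]
    exact bP0
  have bG' : |Gfun h x| ≤ L * x^4 := by
    rw [show L * x^4 = L * |x| * |x| * |x| * |x| by
      rw [show x^4 = (x^2)*(x^2) by ring, ← sq_abs x]; ring]
    exact bG0
  have hp0 : 0 ≤ deriv h x := by
    rcases eq_or_ne x 0 with rfl | hne
    · exact le_of_eq hd1.symm
    · exact (hpos x hne).le
  have hA2sq : (h x)^2 ≤ L^2 * x^4 := by
    have h1 : |h x|^2 ≤ (L * x^2)^2 := by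
      apply pow_le_pow_left₀ (abs_nonneg _) bA'
    rw [sq_abs] at h1
    linarith only [h1]
  -- upper bound for H and smallness of x
  have hHxy : Hham h (x, y) = (1/2) * y^2 - Gfun h x + (1/2) * h x * y
      - (1/12) * deriv h x * y^2 + (1/12) * (h x)^2 := rfl
  have p2 : h x * y ≤ (L * x^2) * y := by
    have := (le_abs_self (h x)).trans bA'
    exact mul_le_mul_of_nonneg_right this hy0
  have p3 : L * (x^2 * y) ≤ L * ((x^4 + y^2)/2) := by
    apply mul_le_mul_of_nonneg_left _ hL0.le
    nlinarith only [sq_nonneg (x^2 - y)]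
  have p5 : 0 ≤ deriv h x * y^2 := mul_nonneg hp0 (sq_nonneg y)
  have p6 : L * x^4 ≤ L^2 * x^4 := by
    nlinarith only [mul_nonneg (mul_nonneg hL0.le (sub_nonneg.mpr hL)) (sq_nonneg (x^2))]
  have p7 : y^2 ≤ L * y^2 := by nlinarith only [hL, sq_nonneg y]
  have hH_up : Hham h (x, y) ≤ L * y^2 + 2 * L^2 * x^4 := by
    rw [hHxy]
    have hGlow := (abs_le.mp bG').1
    linarith only [p2, p3, p5, p6, p7, hA2sq, hGlow, mul_nonneg hL0.le (sq_nonneg y),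
      mul_nonneg (mul_nonneg hL0.le hL0.le) (pow_nonneg (sq_nonneg x) 2),
      sq_nonneg (x^2)]
  have h64 : 64 * (L * x^4) ≤ y^2 := by
    have q1 : 66 * L^2 * x^4 ≤ M * x^4 :=
      mul_le_mul_of_nonneg_right hM (by positivity)
    have q2 : L * (64 * (L * x^4)) ≤ L * y^2 := by linarith only [hPM1, hH_up, q1]
    exact (mul_le_mul_iff_right₀ hL0).mp q2
  have hx4y2 : x^4 ≤ y^2 := by
    have : (0:ℝ) ≤ (64*L - 1) * x^4 := by
      apply mul_nonneg (by linarith) (by positivity)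
    linarith only [h64, this]
  have hx2 : x^2 ≤ y := by
    have hs := Real.sqrt_le_sqrt hx4y2
    rwa [show x^4 = (x^2)^2 by ring, Real.sqrt_sq (sq_nonneg x), Real.sqrt_sq hy0] at hs
  -- lower bound for H
  have r1 : |Gfun h x| ≤ y^2/64 := by
    refine bG'.trans ?_
    linarith only [h64]
  have hxxy : x^2 * |x| ≤ y * (1/(64*L)) :=
    mul_le_mul hx2 hxd (abs_nonneg x) hy0
  have r2 : |h x * y| ≤ y^2/64 := by
    have e1 : |h x * y| = |h x| * y := by rw [abs_mul, abs_of_nonneg hy0]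
    rw [e1]
    calc |h x| * y ≤ (L * (x^2 * |x|)) * y := mul_le_mul_of_nonneg_right bA'' hy0
    _ ≤ (L * (y * (1/(64*L)))) * y := by
        apply mul_le_mul_of_nonneg_right _ hy0
        exact mul_le_mul_of_nonneg_left hxxy hL0.le
    _ = y^2/64 := by field_simp
  have hpy : deriv h x ≤ 1/64 := by
    have h1 : deriv h x ≤ L * x^2 := (le_abs_self _).trans bP'
    have h2 : L * x^2 ≤ L * (1/(64*L)) := by
      apply mul_le_mul_of_nonneg_left (hx2.trans hyδ) hL0.le
    have h3 : L * (1/(64*L)) = 1/64 := by field_simp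
    linarith only [h1, h2, h3]
  have r3 : deriv h x * y^2 ≤ (1/64) * y^2 :=
    mul_le_mul_of_nonneg_right hpy (sq_nonneg y)
  have Hlow : y^2/4 ≤ Hham h (x, y) := by
    rw [hHxy]
    have r1' := (abs_le.mp r1).2
    have r2' := (abs_le.mp r2).1
    linarith only [r1', r2', r3, sq_nonneg (h x), sq_nonneg y]
  -- y-scaled bounds at x
  have hxy' : x^2 * |x| ≤ y := by
    have h1 : x^2 * |x| ≤ x^2 * 1 := mul_le_mul_of_nonneg_left hx1 (sq_nonneg x)
    linarith only [hx2, h1]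
  have bAy : |h x| ≤ L * y := by
    refine bA''.trans ?_
    exact mul_le_mul_of_nonneg_left hxy' hL0.le
  have bPy : |deriv h x| ≤ L * y := by
    refine bP'.trans ?_
    exact mul_le_mul_of_nonneg_left hx2 hL0.le
  have bQy : |deriv (deriv h) x| ≤ L := by
    refine bQ0.trans ?_
    nlinarith only [hx1, hL0]
  have bY : |y| ≤ y := le_of_eq (abs_of_nonneg hy0)
  have bA2 : |h x * h x| ≤ L^2 * y^3 := by
    rw [abs_mul]
    calc |h x| * |h x| ≤ (L * (x^2 * |x|)) * (L * (x^2 * |x|)) :=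
          mul_le_mul bA'' bA'' (abs_nonneg _) (by positivity)
    _ = L^2 * ((x^2)^3) := by rw [← sq_abs x]; ring
    _ ≤ L^2 * y^3 := by
        have := pow_le_pow_left₀ (sq_nonneg x) hx2 3
        exact mul_le_mul_of_nonneg_left this (by positivity)
  have bQ2 : |deriv (deriv h) x * deriv (deriv h) x| ≤ L^2 * y := by
    rw [abs_mul]
    calc |deriv (deriv h) x| * |deriv (deriv h) x| ≤ (L * |x|) * (L * |x|) :=
          mul_le_mul bQ0 bQ0 (abs_nonneg _) (by positivity)
    _ = L^2 * (x^2) := by rw [← sq_abs x]; ring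
    _ ≤ L^2 * y := mul_le_mul_of_nonneg_left hx2 (by positivity)
  have bAQ : |h x * deriv (deriv h) x| ≤ L^2 * y^2 := by
    rw [abs_mul]
    calc |h x| * |deriv (deriv h) x| ≤ (L * (x^2 * |x|)) * (L * |x|) :=
          mul_le_mul bA'' bQ0 (abs_nonneg _) (by positivity)
    _ = L^2 * ((x^2)^2) := by rw [← sq_abs x]; ring
    _ ≤ L^2 * y^2 := by
        have := pow_le_pow_left₀ (sq_nonneg x) hx2 2
        exact mul_le_mul_of_nonneg_left this (by positivity)
  -- remainder terms
  set e1 : ℝ := h (x + h x + y) - (h x + deriv h x * (h x + y)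
    + (1/2) * deriv (deriv h) x * (h x + y)^2) with he1def
  set e2 : ℝ := deriv h (x + h x + y) - (deriv h x + deriv (deriv h) x * (h x + y))
    with he2def
  set e3 : ℝ := Gfun h (x + h x + y) - (Gfun h x + h x * (h x + y)
    + (1/2) * deriv h x * (h x + y)^2 + (1/6) * deriv (deriv h) x * (h x + y)^3) with he3def
  have hs1 : |h x + y| ≤ 2 * (L * y) := by
    calc |h x + y| ≤ |h x| + |y| := abs_add_le _ _
    _ ≤ L * y + y := add_le_add bAy bY
    _ ≤ 2 * (L * y) := by nlinarith only [hL, hy0]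
  have hs0 : (0:ℝ) ≤ 2 * (L * y) := by positivity
  have be1 : |e1| ≤ 8 * (L^4 * y^3) := by
    have hT := T3 x hxI (x + h x + y) hvI
    rw [show x + h x + y - x = h x + y by ring] at hT
    rw [show h (x + h x + y) - h x - deriv h x * (h x + y)
        - (1/2) * deriv (deriv h) x * (h x + y)^2 = e1 by rw [he1def]; ring] at hT
    calc |e1| ≤ L * |h x + y| * |h x + y| * |h x + y| := hT
    _ ≤ L * (2 * (L * y)) * (2 * (L * y)) * (2 * (L * y)) := by
        have a0 : (0:ℝ) ≤ |h x + y| := abs_nonneg _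
        have m1 : |h x + y| * |h x + y| ≤ (2*(L*y)) * (2*(L*y)) := mul_self_le_mul_self a0 hs1
        have m2 : |h x + y| * |h x + y| * |h x + y|
            ≤ (2*(L*y)) * (2*(L*y)) * (2*(L*y)) :=
          mul_le_mul m1 hs1 a0 (mul_nonneg hs0 hs0)
        calc L * |h x + y| * |h x + y| * |h x + y|
            = L * (|h x + y| * |h x + y| * |h x + y|) := by ring
        _ ≤ L * ((2*(L*y)) * (2*(L*y)) * (2*(L*y))) := mul_le_mul_of_nonneg_left m2 hL0.le
        _ = L * (2 * (L * y)) * (2 * (L * y)) * (2 * (L * y)) := by ring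
    _ = 8 * (L^4 * y^3) := by ring
  have be2 : |e2| ≤ 4 * (L^3 * y^2) := by
    have hT := T2 x hxI (x + h x + y) hvI
    rw [show x + h x + y - x = h x + y by ring] at hT
    rw [show deriv h (x + h x + y) - deriv h x - deriv (deriv h) x * (h x + y) = e2 by
      rw [he2def]; ring] at hT
    calc |e2| ≤ L * |h x + y| * |h x + y| := hT
    _ ≤ L * (2 * (L * y)) * (2 * (L * y)) := by
        have a0 : (0:ℝ) ≤ |h x + y| := abs_nonneg _
        have m1 : |h x + y| * |h x + y| ≤ (2*(L*y)) * (2*(L*y)) := mul_self_le_mul_self a0 hs1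
        calc L * |h x + y| * |h x + y| = L * (|h x + y| * |h x + y|) := by ring
        _ ≤ L * ((2*(L*y)) * (2*(L*y))) := mul_le_mul_of_nonneg_left m1 hL0.le
        _ = L * (2 * (L * y)) * (2 * (L * y)) := by ring
    _ = 4 * (L^3 * y^2) := by ring
  have be3 : |e3| ≤ 16 * (L^5 * y^4) := by
    have hT := T4 x hxI (x + h x + y) hvI
    rw [show x + h x + y - x = h x + y by ring] at hT
    rw [show Gfun h (x + h x + y) - Gfun h x - h x * (h x + y)
        - (1/2) * deriv h x * (h x + y)^2 - (1/6) * deriv (deriv h) x * (h x + y)^3 = e3 by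
      rw [he3def]; ring] at hT
    calc |e3| ≤ L * |h x + y| * |h x + y| * |h x + y| * |h x + y| := hT
    _ ≤ L * (2 * (L * y)) * (2 * (L * y)) * (2 * (L * y)) * (2 * (L * y)) := by
        have a0 : (0:ℝ) ≤ |h x + y| := abs_nonneg _
        have m1 : |h x + y| * |h x + y| ≤ (2*(L*y)) * (2*(L*y)) := mul_self_le_mul_self a0 hs1
        have m2 : |h x + y| * |h x + y| * |h x + y|
            ≤ (2*(L*y)) * (2*(L*y)) * (2*(L*y)) :=
          mul_le_mul m1 hs1 a0 (mul_nonneg hs0 hs0)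
        have m3 : |h x + y| * |h x + y| * |h x + y| * |h x + y|
            ≤ (2*(L*y)) * (2*(L*y)) * (2*(L*y)) * (2*(L*y)) :=
          mul_le_mul m2 hs1 a0 (mul_nonneg (mul_nonneg hs0 hs0) hs0)
        calc L * |h x + y| * |h x + y| * |h x + y| * |h x + y|
            = L * (|h x + y| * |h x + y| * |h x + y| * |h x + y|) := by ring
        _ ≤ L * ((2*(L*y)) * (2*(L*y)) * (2*(L*y)) * (2*(L*y))) :=
          mul_le_mul_of_nonneg_left m3 hL0.le
        _ = L * (2 * (L * y)) * (2 * (L * y)) * (2 * (L * y)) * (2 * (L * y)) := by ring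
    _ = 16 * (L^5 * y^4) := by ring

  -- === generated: key algebraic identity ===
  have key2 : Hham h (Tmap h (x, y)) - Hham h (x, y) = (-1) * (e3) + (1/12) * (e1 * (e1)) + (2/3) * (e1 * (h x)) + (1/6) * (e1 * (h x * (deriv h x))) + (-1/12) * (e2 * ((h x * h x))) + (1/12) * (e1 * ((h x * h x) * (deriv (deriv h) x))) + (1/12) * ((h x * h x) * (deriv h x)) + (1/12) * ((h x * h x) * (deriv h x * (deriv h x))) + (1/12) * ((h x * deriv (deriv h) x) * ((h x * h x))) + (1/12) * ((h x * deriv (deriv h) x) * ((h x * h x) * (deriv h x))) + (1/48) * ((h x * h x) * ((h x * h x) * ((deriv (deriv h) x * deriv (deriv h) x)))) + (1/2) * (e1 * (y)) + (1/6) * (e1 * (deriv h x * (y))) + (-1/6) * (e2 * (h x * (y))) + (1/6) * (e1 * ((h x * deriv (deriv h) x) * (y))) + (1/6) * (h x * (deriv h x * (deriv h x * (y)))) + (1/6) * ((h x * h x) * (deriv (deriv h) x * (y))) + (1/4) * ((h x * h x) * (deriv (deriv h) x * (deriv h x * (y)))) + (1/12) * ((h x * h x) * (h x * ((deriv (deriv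 h) x * deriv (deriv h) x) * (y)))) + (-1/12) * (e2 * (y * (y))) + (1/12) * (e1 * (deriv (deriv h) x * (y * (y)))) + (1/12) * (deriv h x * (deriv h x * (y * (y)))) + (1/12) * ((h x * deriv (deriv h) x) * (y * (y))) + (1/4) * ((h x * deriv (deriv h) x) * (deriv h x * (y * (y)))) + (1/8) * ((h x * h x) * ((deriv (deriv h) x * deriv (deriv h) x) * (y * (y)))) + (1/12) * (deriv (deriv h) x * (deriv h x * (y * (y * (y))))) + (1/12) * (h x * ((deriv (deriv h) x * deriv (deriv h) x) * (y * (y * (y))))) + (1/48) * ((deriv (deriv h) x * deriv (deriv h) x) * (y * (y * (y * (y))))) := by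
    have hfst : (Tmap h (x, y)).1 = x + h x + y := rfl
    have hsnd : (Tmap h (x, y)).2 = h x + y := rfl
    simp only [Hham, hfst, hsnd]
    rw [he1def, he2def, he3def]
    ring
  -- === generated: monomial bounds ===
  have t0 : |e3| ≤ 16 * (L^8*y^4) := by
    refine le_trans (be3) ?_
    have hpb : L^5*y^4 ≤ L^8*y^4 := pb hL hy0 hy1 (by norm_num) (by norm_num)
    linarith only [hpb]
  have B0 : |(-1) * (e3)| ≤ 1 * (16 * (L^8*y^4)) :=
    amul (by rw [abs_le]; norm_num : |((-1) : ℝ)| ≤ 1) t0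
  have t1 : |e1 * (e1)| ≤ 64 * (L^8*y^4) := by
    refine le_trans (amul be1 (be1)) ?_
    have hpb : L^8*y^6 ≤ L^8*y^4 := pb hL hy0 hy1 (by norm_num) (by norm_num)
    linarith only [hpb]
  have B1 : |(1/12) * (e1 * (e1))| ≤ (1/12) * (64 * (L^8*y^4)) :=
    amul (by rw [abs_le]; norm_num : |((1/12) : ℝ)| ≤ (1/12)) t1
  have t2 : |e1 * (h x)| ≤ 8 * (L^8*y^4) := by
    refine le_trans (amul be1 (bAy)) ?_
    have hpb : L^5*y^4 ≤ L^8*y^4 := pb hL hy0 hy1 (by norm_num) (by norm_num)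
    linarith only [hpb]
  have B2 : |(2/3) * (e1 * (h x))| ≤ (2/3) * (8 * (L^8*y^4)) :=
    amul (by rw [abs_le]; norm_num : |((2/3) : ℝ)| ≤ (2/3)) t2
  have t3 : |e1 * (h x * (deriv h x))| ≤ 8 * (L^8*y^4) := by
    refine le_trans (amul be1 (amul bAy (bPy))) ?_
    have hpb : L^6*y^5 ≤ L^8*y^4 := pb hL hy0 hy1 (by norm_num) (by norm_num)
    linarith only [hpb]
  have B3 : |(1/6) * (e1 * (h x * (deriv h x)))| ≤ (1/6) * (8 * (L^8*y^4)) :=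
    amul (by rw [abs_le]; norm_num : |((1/6) : ℝ)| ≤ (1/6)) t3
  have t4 : |e2 * ((h x * h x))| ≤ 4 * (L^8*y^4) := by
    refine le_trans (amul be2 (bA2)) ?_
    have hpb : L^5*y^5 ≤ L^8*y^4 := pb hL hy0 hy1 (by norm_num) (by norm_num)
    linarith only [hpb]
  have B4 : |(-1/12) * (e2 * ((h x * h x)))| ≤ (1/12) * (4 * (L^8*y^4)) :=
    amul (by rw [abs_le]; norm_num : |((-1/12) : ℝ)| ≤ (1/12)) t4
  have t5 : |e1 * ((h x * h x) * (deriv (deriv h) x))| ≤ 8 * (L^8*y^4) := by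
    refine le_trans (amul be1 (amul bA2 (bQy))) ?_
    have hpb : L^7*y^6 ≤ L^8*y^4 := pb hL hy0 hy1 (by norm_num) (by norm_num)
    linarith only [hpb]
  have B5 : |(1/12) * (e1 * ((h x * h x) * (deriv (deriv h) x)))| ≤ (1/12) * (8 * (L^8*y^4)) :=
    amul (by rw [abs_le]; norm_num : |((1/12) : ℝ)| ≤ (1/12)) t5
  have t6 : |(h x * h x) * (deriv h x)| ≤ 1 * (L^8*y^4) := by
    refine le_trans (amul bA2 (bPy)) ?_
    have hpb : L^3*y^4 ≤ L^8*y^4 := pb hL hy0 hy1 (by norm_num) (by norm_num)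
    linarith only [hpb]
  have B6 : |(1/12) * ((h x * h x) * (deriv h x))| ≤ (1/12) * (1 * (L^8*y^4)) :=
    amul (by rw [abs_le]; norm_num : |((1/12) : ℝ)| ≤ (1/12)) t6
  have t7 : |(h x * h x) * (deriv h x * (deriv h x))| ≤ 1 * (L^8*y^4) := by
    refine le_trans (amul bA2 (amul bPy (bPy))) ?_
    have hpb : L^4*y^5 ≤ L^8*y^4 := pb hL hy0 hy1 (by norm_num) (by norm_num)
    linarith only [hpb]
  have B7 : |(1/12) * ((h x * h x) * (deriv h x * (deriv h x)))| ≤ (1/12) * (1 * (L^8*y^4)) :=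
    amul (by rw [abs_le]; norm_num : |((1/12) : ℝ)| ≤ (1/12)) t7
  have t8 : |(h x * deriv (deriv h) x) * ((h x * h x))| ≤ 1 * (L^8*y^4) := by
    refine le_trans (amul bAQ (bA2)) ?_
    have hpb : L^4*y^5 ≤ L^8*y^4 := pb hL hy0 hy1 (by norm_num) (by norm_num)
    linarith only [hpb]
  have B8 : |(1/12) * ((h x * deriv (deriv h) x) * ((h x * h x)))| ≤ (1/12) * (1 * (L^8*y^4)) :=
    amul (by rw [abs_le]; norm_num : |((1/12) : ℝ)| ≤ (1/12)) t8
  have t9 : |(h x * deriv (deriv h) x) * ((h x * h x) * (deriv h x))| ≤ 1 * (L^8*y^4) := by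
    refine le_trans (amul bAQ (amul bA2 (bPy))) ?_
    have hpb : L^5*y^6 ≤ L^8*y^4 := pb hL hy0 hy1 (by norm_num) (by norm_num)
    linarith only [hpb]
  have B9 : |(1/12) * ((h x * deriv (deriv h) x) * ((h x * h x) * (deriv h x)))| ≤ (1/12) * (1 * (L^8*y^4)) :=
    amul (by rw [abs_le]; norm_num : |((1/12) : ℝ)| ≤ (1/12)) t9
  have t10 : |(h x * h x) * ((h x * h x) * ((deriv (deriv h) x * deriv (deriv h) x)))| ≤ 1 * (L^8*y^4) := by
    refine le_trans (amul bA2 (amul bA2 (bQ2))) ?_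
    have hpb : L^6*y^7 ≤ L^8*y^4 := pb hL hy0 hy1 (by norm_num) (by norm_num)
    linarith only [hpb]
  have B10 : |(1/48) * ((h x * h x) * ((h x * h x) * ((deriv (deriv h) x * deriv (deriv h) x))))| ≤ (1/48) * (1 * (L^8*y^4)) :=
    amul (by rw [abs_le]; norm_num : |((1/48) : ℝ)| ≤ (1/48)) t10
  have t11 : |e1 * (y)| ≤ 8 * (L^8*y^4) := by
    refine le_trans (amul be1 (bY)) ?_
    have hpb : L^4*y^4 ≤ L^8*y^4 := pb hL hy0 hy1 (by norm_num) (by norm_num)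
    linarith only [hpb]
  have B11 : |(1/2) * (e1 * (y))| ≤ (1/2) * (8 * (L^8*y^4)) :=
    amul (by rw [abs_le]; norm_num : |((1/2) : ℝ)| ≤ (1/2)) t11
  have t12 : |e1 * (deriv h x * (y))| ≤ 8 * (L^8*y^4) := by
    refine le_trans (amul be1 (amul bPy (bY))) ?_
    have hpb : L^5*y^5 ≤ L^8*y^4 := pb hL hy0 hy1 (by norm_num) (by norm_num)
    linarith only [hpb]
  have B12 : |(1/6) * (e1 * (deriv h x * (y)))| ≤ (1/6) * (8 * (L^8*y^4)) :=
    amul (by rw [abs_le]; norm_num : |((1/6) : ℝ)| ≤ (1/6)) t12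
  have t13 : |e2 * (h x * (y))| ≤ 4 * (L^8*y^4) := by
    refine le_trans (amul be2 (amul bAy (bY))) ?_
    have hpb : L^4*y^4 ≤ L^8*y^4 := pb hL hy0 hy1 (by norm_num) (by norm_num)
    linarith only [hpb]
  have B13 : |(-1/6) * (e2 * (h x * (y)))| ≤ (1/6) * (4 * (L^8*y^4)) :=
    amul (by rw [abs_le]; norm_num : |((-1/6) : ℝ)| ≤ (1/6)) t13
  have t14 : |e1 * ((h x * deriv (deriv h) x) * (y))| ≤ 8 * (L^8*y^4) := by
    refine le_trans (amul be1 (amul bAQ (bY))) ?_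
    have hpb : L^6*y^6 ≤ L^8*y^4 := pb hL hy0 hy1 (by norm_num) (by norm_num)
    linarith only [hpb]
  have B14 : |(1/6) * (e1 * ((h x * deriv (deriv h) x) * (y)))| ≤ (1/6) * (8 * (L^8*y^4)) :=
    amul (by rw [abs_le]; norm_num : |((1/6) : ℝ)| ≤ (1/6)) t14
  have t15 : |h x * (deriv h x * (deriv h x * (y)))| ≤ 1 * (L^8*y^4) := by
    refine le_trans (amul bAy (amul bPy (amul bPy (bY)))) ?_
    have hpb : L^3*y^4 ≤ L^8*y^4 := pb hL hy0 hy1 (by norm_num) (by norm_num)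
    linarith only [hpb]
  have B15 : |(1/6) * (h x * (deriv h x * (deriv h x * (y))))| ≤ (1/6) * (1 * (L^8*y^4)) :=
    amul (by rw [abs_le]; norm_num : |((1/6) : ℝ)| ≤ (1/6)) t15
  have t16 : |(h x * h x) * (deriv (deriv h) x * (y))| ≤ 1 * (L^8*y^4) := by
    refine le_trans (amul bA2 (amul bQy (bY))) ?_
    have hpb : L^3*y^4 ≤ L^8*y^4 := pb hL hy0 hy1 (by norm_num) (by norm_num)
    linarith only [hpb]
  have B16 : |(1/6) * ((h x * h x) * (deriv (deriv h) x * (y)))| ≤ (1/6) * (1 * (L^8*y^4)) :=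
    amul (by rw [abs_le]; norm_num : |((1/6) : ℝ)| ≤ (1/6)) t16
  have t17 : |(h x * h x) * (deriv (deriv h) x * (deriv h x * (y)))| ≤ 1 * (L^8*y^4) := by
    refine le_trans (amul bA2 (amul bQy (amul bPy (bY)))) ?_
    have hpb : L^4*y^5 ≤ L^8*y^4 := pb hL hy0 hy1 (by norm_num) (by norm_num)
    linarith only [hpb]
  have B17 : |(1/4) * ((h x * h x) * (deriv (deriv h) x * (deriv h x * (y))))| ≤ (1/4) * (1 * (L^8*y^4)) :=
    amul (by rw [abs_le]; norm_num : |((1/4) : ℝ)| ≤ (1/4)) t17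
  have t18 : |(h x * h x) * (h x * ((deriv (deriv h) x * deriv (deriv h) x) * (y)))| ≤ 1 * (L^8*y^4) := by
    refine le_trans (amul bA2 (amul bAy (amul bQ2 (bY)))) ?_
    have hpb : L^5*y^6 ≤ L^8*y^4 := pb hL hy0 hy1 (by norm_num) (by norm_num)
    linarith only [hpb]
  have B18 : |(1/12) * ((h x * h x) * (h x * ((deriv (deriv h) x * deriv (deriv h) x) * (y))))| ≤ (1/12) * (1 * (L^8*y^4)) :=
    amul (by rw [abs_le]; norm_num : |((1/12) : ℝ)| ≤ (1/12)) t18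
  have t19 : |e2 * (y * (y))| ≤ 4 * (L^8*y^4) := by
    refine le_trans (amul be2 (amul bY (bY))) ?_
    have hpb : L^3*y^4 ≤ L^8*y^4 := pb hL hy0 hy1 (by norm_num) (by norm_num)
    linarith only [hpb]
  have B19 : |(-1/12) * (e2 * (y * (y)))| ≤ (1/12) * (4 * (L^8*y^4)) :=
    amul (by rw [abs_le]; norm_num : |((-1/12) : ℝ)| ≤ (1/12)) t19
  have t20 : |e1 * (deriv (deriv h) x * (y * (y)))| ≤ 8 * (L^8*y^4) := by
    refine le_trans (amul be1 (amul bQy (amul bY (bY)))) ?_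
    have hpb : L^5*y^5 ≤ L^8*y^4 := pb hL hy0 hy1 (by norm_num) (by norm_num)
    linarith only [hpb]
  have B20 : |(1/12) * (e1 * (deriv (deriv h) x * (y * (y))))| ≤ (1/12) * (8 * (L^8*y^4)) :=
    amul (by rw [abs_le]; norm_num : |((1/12) : ℝ)| ≤ (1/12)) t20
  have t21 : |deriv h x * (deriv h x * (y * (y)))| ≤ 1 * (L^8*y^4) := by
    refine le_trans (amul bPy (amul bPy (amul bY (bY)))) ?_
    have hpb : L^2*y^4 ≤ L^8*y^4 := pb hL hy0 hy1 (by norm_num) (by norm_num)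
    linarith only [hpb]
  have B21 : |(1/12) * (deriv h x * (deriv h x * (y * (y))))| ≤ (1/12) * (1 * (L^8*y^4)) :=
    amul (by rw [abs_le]; norm_num : |((1/12) : ℝ)| ≤ (1/12)) t21
  have t22 : |(h x * deriv (deriv h) x) * (y * (y))| ≤ 1 * (L^8*y^4) := by
    refine le_trans (amul bAQ (amul bY (bY))) ?_
    have hpb : L^2*y^4 ≤ L^8*y^4 := pb hL hy0 hy1 (by norm_num) (by norm_num)
    linarith only [hpb]
  have B22 : |(1/12) * ((h x * deriv (deriv h) x) * (y * (y)))| ≤ (1/12) * (1 * (L^8*y^4)) :=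
    amul (by rw [abs_le]; norm_num : |((1/12) : ℝ)| ≤ (1/12)) t22
  have t23 : |(h x * deriv (deriv h) x) * (deriv h x * (y * (y)))| ≤ 1 * (L^8*y^4) := by
    refine le_trans (amul bAQ (amul bPy (amul bY (bY)))) ?_
    have hpb : L^3*y^5 ≤ L^8*y^4 := pb hL hy0 hy1 (by norm_num) (by norm_num)
    linarith only [hpb]
  have B23 : |(1/4) * ((h x * deriv (deriv h) x) * (deriv h x * (y * (y))))| ≤ (1/4) * (1 * (L^8*y^4)) :=
    amul (by rw [abs_le]; norm_num : |((1/4) : ℝ)| ≤ (1/4)) t23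
  have t24 : |(h x * h x) * ((deriv (deriv h) x * deriv (deriv h) x) * (y * (y)))| ≤ 1 * (L^8*y^4) := by
    refine le_trans (amul bA2 (amul bQ2 (amul bY (bY)))) ?_
    have hpb : L^4*y^6 ≤ L^8*y^4 := pb hL hy0 hy1 (by norm_num) (by norm_num)
    linarith only [hpb]
  have B24 : |(1/8) * ((h x * h x) * ((deriv (deriv h) x * deriv (deriv h) x) * (y * (y))))| ≤ (1/8) * (1 * (L^8*y^4)) :=
    amul (by rw [abs_le]; norm_num : |((1/8) : ℝ)| ≤ (1/8)) t24
  have t25 : |deriv (deriv h) x * (deriv h x * (y * (y * (y))))| ≤ 1 * (L^8*y^4) := by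
    refine le_trans (amul bQy (amul bPy (amul bY (amul bY (bY))))) ?_
    have hpb : L^2*y^4 ≤ L^8*y^4 := pb hL hy0 hy1 (by norm_num) (by norm_num)
    linarith only [hpb]
  have B25 : |(1/12) * (deriv (deriv h) x * (deriv h x * (y * (y * (y)))))| ≤ (1/12) * (1 * (L^8*y^4)) :=
    amul (by rw [abs_le]; norm_num : |((1/12) : ℝ)| ≤ (1/12)) t25
  have t26 : |h x * ((deriv (deriv h) x * deriv (deriv h) x) * (y * (y * (y))))| ≤ 1 * (L^8*y^4) := by
    refine le_trans (amul bAy (amul bQ2 (amul bY (amul bY (bY))))) ?_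
    have hpb : L^3*y^5 ≤ L^8*y^4 := pb hL hy0 hy1 (by norm_num) (by norm_num)
    linarith only [hpb]
  have B26 : |(1/12) * (h x * ((deriv (deriv h) x * deriv (deriv h) x) * (y * (y * (y)))))| ≤ (1/12) * (1 * (L^8*y^4)) :=
    amul (by rw [abs_le]; norm_num : |((1/12) : ℝ)| ≤ (1/12)) t26
  have t27 : |(deriv (deriv h) x * deriv (deriv h) x) * (y * (y * (y * (y))))| ≤ 1 * (L^8*y^4) := by
    refine le_trans (amul bQ2 (amul bY (amul bY (amul bY (bY))))) ?_
    have hpb : L^2*y^5 ≤ L^8*y^4 := pb hL hy0 hy1 (by norm_num) (by norm_num)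
    linarith only [hpb]
  have B27 : |(1/48) * ((deriv (deriv h) x * deriv (deriv h) x) * (y * (y * (y * (y)))))| ≤ (1/48) * (1 * (L^8*y^4)) :=
    amul (by rw [abs_le]; norm_num : |((1/48) : ℝ)| ≤ (1/48)) t27
  have S0 := B0
  have S1 := (abs_add_le _ _).trans (add_le_add S0 B1)
  have S2 := (abs_add_le _ _).trans (add_le_add S1 B2)
  have S3 := (abs_add_le _ _).trans (add_le_add S2 B3)
  have S4 := (abs_add_le _ _).trans (add_le_add S3 B4)
  have S5 := (abs_add_le _ _).trans (add_le_add S4 B5)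
  have S6 := (abs_add_le _ _).trans (add_le_add S5 B6)
  have S7 := (abs_add_le _ _).trans (add_le_add S6 B7)
  have S8 := (abs_add_le _ _).trans (add_le_add S7 B8)
  have S9 := (abs_add_le _ _).trans (add_le_add S8 B9)
  have S10 := (abs_add_le _ _).trans (add_le_add S9 B10)
  have S11 := (abs_add_le _ _).trans (add_le_add S10 B11)
  have S12 := (abs_add_le _ _).trans (add_le_add S11 B12)
  have S13 := (abs_add_le _ _).trans (add_le_add S12 B13)
  have S14 := (abs_add_le _ _).trans (add_le_add S13 B14)
  have S15 := (abs_add_le _ _).trans (add_le_add S14 B15)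
  have S16 := (abs_add_le _ _).trans (add_le_add S15 B16)
  have S17 := (abs_add_le _ _).trans (add_le_add S16 B17)
  have S18 := (abs_add_le _ _).trans (add_le_add S17 B18)
  have S19 := (abs_add_le _ _).trans (add_le_add S18 B19)
  have S20 := (abs_add_le _ _).trans (add_le_add S19 B20)
  have S21 := (abs_add_le _ _).trans (add_le_add S20 B21)
  have S22 := (abs_add_le _ _).trans (add_le_add S21 B22)
  have S23 := (abs_add_le _ _).trans (add_le_add S22 B23)
  have S24 := (abs_add_le _ _).trans (add_le_add S23 B24)
  have S25 := (abs_add_le _ _).trans (add_le_add S24 B25)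
  have S26 := (abs_add_le _ _).trans (add_le_add S25 B26)
  have S27 := (abs_add_le _ _).trans (add_le_add S26 B27)
  have hDelta : |Hham h (Tmap h (x, y)) - Hham h (x, y)| ≤ 40*(L^8*y^4) := by
    rw [key2]
    refine le_trans S27 ?_
    have hW : (0:ℝ) ≤ L^8*y^4 := by positivity
    linarith only [hW]

  -- endgame
  rcases hy0.eq_or_lt with hy | hy
  · -- y = 0 forces x = 0
    have hyy : y = 0 := hy.symm
    have hxx : x = 0 := by
      have h1 : x^2 ≤ 0 := by rw [← hyy]; exact hx2
      have h2 : x^2 = 0 := le_antisymm h1 (sq_nonneg x)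
      exact (pow_eq_zero_iff two_ne_zero).mp h2
    subst hxx
    subst hyy
    have htm : Tmap h ((0:ℝ), (0:ℝ)) = ((0:ℝ), (0:ℝ)) := by simp [Tmap, h0]
    rw [htm, sub_self, abs_zero]
    positivity
  · -- y > 0
    have hb0 : 0 ≤ Hham h (x, y) := le_trans (by positivity) Hlow
    have hsb : y/2 ≤ Real.sqrt (Hham h (x, y)) := by
      rw [show y/2 = Real.sqrt ((y/2)^2) from (Real.sqrt_sq (by linarith)).symm]
      exact Real.sqrt_le_sqrt (by nlinarith only [Hlow])
    have hprod : |Real.sqrt (Hham h (Tmap h (x, y))) - Real.sqrt (Hham h (x, y))|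
        * (Real.sqrt (Hham h (Tmap h (x, y))) + Real.sqrt (Hham h (x, y)))
        = |Hham h (Tmap h (x, y)) - Hham h (x, y)| := by
      rw [← abs_of_nonneg (show (0:ℝ) ≤ Real.sqrt (Hham h (Tmap h (x, y)))
          + Real.sqrt (Hham h (x, y)) by positivity), ← abs_mul]
      congr 1
      have ha' := Real.sq_sqrt hHT
      have hb' := Real.sq_sqrt hb0
      linear_combination ha' - hb'
    have hy2 : (0:ℝ) < y/2 := by linarith
    have hfin : |Real.sqrt (Hham h (Tmap h (x, y))) - Real.sqrt (Hham h (x, y))|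
        ≤ |Hham h (Tmap h (x, y)) - Hham h (x, y)| / (y/2) := by
      rw [le_div_iff₀ hy2]
      calc |Real.sqrt (Hham h (Tmap h (x, y))) - Real.sqrt (Hham h (x, y))| * (y/2)
          ≤ |Real.sqrt (Hham h (Tmap h (x, y))) - Real.sqrt (Hham h (x, y))|
            * (Real.sqrt (Hham h (Tmap h (x, y))) + Real.sqrt (Hham h (x, y))) := by
            apply mul_le_mul_of_nonneg_left _ (abs_nonneg _)
            have := Real.sqrt_nonneg (Hham h (Tmap h (x, y)))
            linarith only [hsb, this]
      _ = |Hham h (Tmap h (x, y)) - Hham h (x, y)| := hprod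
    have hdiv : |Hham h (Tmap h (x, y)) - Hham h (x, y)| / (y/2)
        ≤ (40*(L^8*y^4)) / (y/2) := by
      gcongr
    have hcalc : (40*(L^8*y^4)) / (y/2) = 80 * L^8 * y^3 := by
      field_simp
      ring
    calc |Real.sqrt (Hham h (Tmap h (x, y))) - Real.sqrt (Hham h (x, y))|
        ≤ |Hham h (Tmap h (x, y)) - Hham h (x, y)| / (y/2) := hfin
    _ ≤ (40*(L^8*y^4)) / (y/2) := hdiv
    _ = 80 * L^8 * y^3 := hcalc
end
end

section
/- For M sufficiently large (depending only on h) there exists a constant C > 0, depending only on h and M, such that under the standing orbit hypotheses (fat region) one has, for all ℓ ≤ k ≤ n: |E_k^{1/2} − E_ℓ^{1/2}| = |H(x_k,y_k)^{1/2} − H(x_ℓ,y_ℓ)^{1/2}| ≤ C y_ℓ² |x_ℓ|. -/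
noncomputable section

open Real MeasureTheory

/-- The orbit of a point under `T`. -/
def orb (h : ℝ → ℝ) (p : ℝ × ℝ) (k : ℕ) : ℝ × ℝ := (Tmap h)^[k] p

/-- `x_k`, the first coordinate of the orbit. -/
def Xc (h : ℝ → ℝ) (p : ℝ × ℝ) (k : ℕ) : ℝ := (orb h p k).1

/-- `y_k`, the second coordinate of the orbit. -/
def Yc (h : ℝ → ℝ) (p : ℝ × ℝ) (k : ℕ) : ℝ := (orb h p k).2

/-- `E_k = H(x_k, y_k)`. -/
def En (h : ℝ → ℝ) (p : ℝ × ℝ) (k : ℕ) : ℝ := Hham h (orb h p k)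

/-- Standing orbit hypotheses (fat region): the orbit stays in the
`δ`-neighborhood of `(0,0)` for `0 ≤ k ≤ n+1`, has `x_k ≤ 0` for `0 ≤ k ≤ n`,
`x_{n+1} > 0`, lies in `P_M` for `ℓ ≤ k ≤ n`, and (if `ℓ ≥ 1`) is not in `P_M`
at time `ℓ - 1`. -/
def FatOrbit (h : ℝ → ℝ) (M δ : ℝ) (p : ℝ × ℝ) (ℓ n : ℕ) : Prop :=
  ℓ ≤ n ∧
  (∀ k ≤ n + 1, |Xc h p k| ≤ δ ∧ |Yc h p k| ≤ δ) ∧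
  (∀ k ≤ n, Xc h p k ≤ 0) ∧
  0 < Xc h p (n + 1) ∧
  (∀ k, ℓ ≤ k → k ≤ n → orb h p k ∈ PM h M) ∧
  (1 ≤ ℓ → orb h p (ℓ - 1) ∉ PM h M)

section AuxiliaryLemmas
open Set


/-- Uniform MVT bound on `[x, x+u]`. -/
lemma mvt_unif {f f' : ℝ → ℝ} {x u C : ℝ}
    (hd : ∀ t ∈ Icc x (x+u), HasDerivAt f (f' t) t)
    (hb : ∀ t ∈ Icc x (x+u), |f' t| ≤ C) :
    ∀ t ∈ Icc x (x+u), |f t - f x| ≤ C * u := by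
  intro t ht
  have hxu : x ≤ x + u := le_trans ht.1 ht.2
  have hu : 0 ≤ u := by linarith
  have hC : 0 ≤ C := le_trans (abs_nonneg _) (hb x ⟨le_refl x, hxu⟩)
  have := (convex_Icc x (x+u)).norm_image_sub_le_of_norm_hasDerivWithin_le
    (fun s hs => (hd s hs).hasDerivWithinAt)
    (fun s hs => by simpa using hb s hs) ⟨le_refl x, hxu⟩ ht
  rw [Real.norm_eq_abs, Real.norm_eq_abs] at this
  have h2 : |t - x| ≤ u := by
    rw [abs_of_nonneg (by linarith [ht.1])]; linarith [ht.2]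
  calc |f t - f x| ≤ C * |t - x| := this
    _ ≤ C * u := by nlinarith

/-- MVT bound from `0`. -/
lemma mvt_zero {f f' : ℝ → ℝ} {C x : ℝ}
    (hd : ∀ t, HasDerivAt f (f' t) t)
    (hb : ∀ t ∈ uIcc 0 x, |f' t| ≤ C) (h0 : f 0 = 0) : |f x| ≤ C * |x| := by
  have := (convex_uIcc (0:ℝ) x).norm_image_sub_le_of_norm_hasDerivWithin_le
    (fun s hs => (hd s).hasDerivWithinAt)
    (fun s hs => by simpa using hb s hs) left_mem_uIcc right_mem_uIcc
  simpa [h0] using this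

lemma mem_uIcc_abs {t x : ℝ} (ht : t ∈ uIcc 0 x) : |t| ≤ |x| := by
  rcases mem_uIcc.mp ht with ⟨h1, h2⟩ | ⟨h1, h2⟩
  · rw [abs_of_nonneg h1]; exact h2.trans (le_abs_self x)
  · rw [abs_of_nonpos h2]
    have : x ≤ 0 := h1.trans h2
    rw [abs_of_nonpos this]; linarith

lemma GfunHasDeriv {h : ℝ → ℝ} (hc : Continuous h) (t : ℝ) :
    HasDerivAt (Gfun h) (h t) t :=
  (hc.integral_hasStrictDerivAt 0 t).hasDerivAt

section pkg
variable {h : ℝ → ℝ}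



/-- The bounds package: a constant `K ≥ 1` controlling `h` and its first three
derivatives near `0`. -/
lemma bounds_package (hsm : ContDiff ℝ (⊤ : ℕ∞) h) (h0 : h 0 = 0) (hd1 : deriv h 0 = 0)
    (hodd : ∀ x : ℝ, h (-x) = -h x) :
    ∃ K : ℝ, 1 ≤ K ∧
      (∀ x : ℝ, |x| ≤ 1 → |h x| ≤ K * |x| ^ 3) ∧
      (∀ x : ℝ, |x| ≤ 1 → |deriv h x| ≤ K * x ^ 2) ∧
      (∀ x : ℝ, |x| ≤ 1 → |deriv (deriv h) x| ≤ K * |x|) ∧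
      (∀ x : ℝ, |x| ≤ 1 → |deriv (deriv (deriv h)) x| ≤ K) := by
  have hsm' : ContDiff ℝ (⊤ : ℕ∞) h := hsm.of_le (by simp)
  have c1 : ContDiff ℝ (⊤ : ℕ∞) (deriv h) := (contDiff_infty_iff_deriv.mp hsm').2
  have c2 : ContDiff ℝ (⊤ : ℕ∞) (deriv (deriv h)) := (contDiff_infty_iff_deriv.mp c1).2
  have c3 : ContDiff ℝ (⊤ : ℕ∞) (deriv (deriv (deriv h))) := (contDiff_infty_iff_deriv.mp c2).2
  have hd : ∀ t, HasDerivAt h (deriv h t) t :=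
    fun t => (hsm'.differentiable (by simp) t).hasDerivAt
  have hd' : ∀ t, HasDerivAt (deriv h) (deriv (deriv h) t) t :=
    fun t => (c1.differentiable (by simp) t).hasDerivAt
  have hd'' : ∀ t, HasDerivAt (deriv (deriv h)) (deriv (deriv (deriv h)) t) t :=
    fun t => (c2.differentiable (by simp) t).hasDerivAt
  -- bound for the third derivative on [-1,1]
  obtain ⟨K₀, hK₀⟩ := (isCompact_Icc (a := (-1:ℝ)) (b := 1)).exists_bound_of_continuousOn
    (c3.continuous.continuousOn)
  set K := max K₀ 1 with hK
  have hK1 : (1:ℝ) ≤ K := le_max_right _ _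
  have hb3 : ∀ x : ℝ, |x| ≤ 1 → |deriv (deriv (deriv h)) x| ≤ K := by
    intro x hx
    have : x ∈ Icc (-1:ℝ) 1 := abs_le.mp hx
    exact le_trans (by simpa using hK₀ x this) (le_max_left _ _)
  -- h'' is odd, so h''(0) = 0
  have hodd1 : ∀ x : ℝ, deriv h (-x) = deriv h x := by
    intro x
    have h1 : HasDerivAt (fun y : ℝ => -h (-y)) (deriv h (-x)) x := by
      have := ((hd (-x)).comp x (hasDerivAt_neg x)).neg
      exact this.congr_deriv (by simp)
    have h2 : (fun y : ℝ => -h (-y)) = h := funext fun y => by rw [hodd]; ring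
    rw [h2] at h1
    rw [← h1.deriv]
  have h2odd : deriv (deriv h) 0 = 0 := by
    have h1 : HasDerivAt (fun y : ℝ => deriv h (-y)) (-(deriv (deriv h) (-0))) 0 := by
      have := ((hd' (-0)).comp 0 (hasDerivAt_neg 0))
      simpa [Function.comp_def] using this
    have h2 : (fun y : ℝ => deriv h (-y)) = deriv h := funext fun y => hodd1 y
    rw [h2] at h1
    have := h1.deriv
    rw [neg_zero] at this
    linarith [this]
  -- chain of MVT bounds
  have hb2 : ∀ x : ℝ, |x| ≤ 1 → |deriv (deriv h) x| ≤ K * |x| := by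
    intro x hx
    exact mvt_zero hd'' (fun t ht => hb3 t (le_trans (mem_uIcc_abs ht) hx)) h2odd
  have hb1 : ∀ x : ℝ, |x| ≤ 1 → |deriv h x| ≤ K * x ^ 2 := by
    intro x hx
    have := mvt_zero hd' (C := K * |x|)
      (fun t ht => le_trans (hb2 t (le_trans (mem_uIcc_abs ht) hx))
        (by nlinarith [mem_uIcc_abs ht, abs_nonneg t, abs_nonneg x])) hd1
    calc |deriv h x| ≤ K * |x| * |x| := this
      _ = K * x ^ 2 := by rw [mul_assoc, ← abs_mul, ← sq, abs_of_nonneg (sq_nonneg x)]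
  have hb0 : ∀ x : ℝ, |x| ≤ 1 → |h x| ≤ K * |x| ^ 3 := by
    intro x hx
    have := mvt_zero hd (C := K * x ^ 2)
      (fun t ht => le_trans (hb1 t (le_trans (mem_uIcc_abs ht) hx))
        (by nlinarith [mul_le_mul (mem_uIcc_abs ht) (mem_uIcc_abs ht) (abs_nonneg t) (abs_nonneg x), abs_mul_abs_self t, abs_mul_abs_self x, hK1])) h0
    calc |h x| ≤ K * x ^ 2 * |x| := this
      _ = K * |x| ^ 3 := by rw [← sq_abs x]; ring
  exact ⟨K, hK1, hb0, hb1, hb2, hb3⟩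


end pkg


lemma abs2 {p q P Q : ℝ} (hp : |p| ≤ P) (hq : |q| ≤ Q) : |p*q| ≤ P*Q := by
  rw [abs_mul]
  exact mul_le_mul hp hq (abs_nonneg q) ((abs_nonneg p).trans hp)

lemma abs3 {p q r P Q R : ℝ} (hp : |p| ≤ P) (hq : |q| ≤ Q) (hr : |r| ≤ R) :
    |p*q*r| ≤ P*Q*R := abs2 (abs2 hp hq) hr

lemma helper_div {s B : ℝ} (c : ℝ) (hc : 1 ≤ c) (h : |s| ≤ B) : |s / c| ≤ B := by
  rw [abs_div, abs_of_pos (by linarith : (0:ℝ) < c)]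
  exact le_trans (div_le_self (abs_nonneg s) hc) h

set_option maxHeartbeats 1000000 in
lemma step_bound {h : ℝ → ℝ} (hsm : ContDiff ℝ (⊤ : ℕ∞) h) {K : ℝ} (hK1 : 1 ≤ K)
    (hb0 : ∀ x : ℝ, |x| ≤ 1 → |h x| ≤ K * |x| ^ 3)
    (hb1 : ∀ x : ℝ, |x| ≤ 1 → |deriv h x| ≤ K * x ^ 2)
    (hb2 : ∀ x : ℝ, |x| ≤ 1 → |deriv (deriv h) x| ≤ K * |x|)
    (hb3 : ∀ x : ℝ, |x| ≤ 1 → |deriv (deriv (deriv h)) x| ≤ K)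
    {x u : ℝ} (hx1 : -1 ≤ x) (hx0 : x ≤ 0) (hu0 : 0 ≤ u) (hu1 : u ≤ 1)
    (hx2 : x ^ 2 ≤ u) :
    |Hham h (x + u, u) - Hham h (x, u - h x)| ≤ 12 * K ^ 3 * u ^ 4 := by
  have hsm' : ContDiff ℝ (⊤ : ℕ∞) h := hsm.of_le (by simp)
  have c1 : ContDiff ℝ (⊤ : ℕ∞) (deriv h) := (contDiff_infty_iff_deriv.mp hsm').2
  have c2 : ContDiff ℝ (⊤ : ℕ∞) (deriv (deriv h)) := (contDiff_infty_iff_deriv.mp c1).2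
  have hd : ∀ t, HasDerivAt h (deriv h t) t :=
    fun t => (hsm'.differentiable (by simp) t).hasDerivAt
  have hd' : ∀ t, HasDerivAt (deriv h) (deriv (deriv h) t) t :=
    fun t => (c1.differentiable (by simp) t).hasDerivAt
  have hd'' : ∀ t, HasDerivAt (deriv (deriv h)) (deriv (deriv (deriv h)) t) t :=
    fun t => (c2.differentiable (by simp) t).hasDerivAt
  have hxabs : |x| ≤ 1 := abs_le.mpr ⟨hx1, le_trans hx0 zero_le_one⟩
  have hIcc1 : ∀ t ∈ Icc x (x+u), |t| ≤ 1 := by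
    intro t ht
    exact abs_le.mpr ⟨by linarith [ht.1], by linarith [ht.2]⟩
  have hmem : x + u ∈ Icc x (x+u) := ⟨by linarith, le_refl _⟩
  set a := h x with hadef
  set A1 := deriv h x with hA1def
  set A2 := deriv (deriv h) x with hA2def
  -- Level 2 Taylor bound
  have e2b : ∀ t ∈ Icc x (x+u), |deriv (deriv h) t - A2| ≤ K * u :=
    mvt_unif (fun t _ => hd'' t) (fun t ht => hb3 t (hIcc1 t ht))
  -- Level 1
  have e1d : ∀ t, HasDerivAt (fun s => deriv h s - (A1 + A2*(s-x)))
      (deriv (deriv h) t - A2) t := by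
    intro t
    have hp : HasDerivAt (fun s : ℝ => A1 + A2*(s-x)) A2 t := by
      simpa using (((hasDerivAt_id t).sub_const x).const_mul A2).const_add A1
    exact (hd' t).sub hp
  have e1b : ∀ t ∈ Icc x (x+u), |deriv h t - (A1 + A2*(t-x))| ≤ K * u * u := by
    intro t ht
    have h0 := mvt_unif (fun s _ => e1d s) e2b t ht
    simpa [← hA1def] using h0
  -- Level 0
  have e0d : ∀ t, HasDerivAt (fun s => h s - (a + A1*(s-x) + A2/2*(s-x)^2))
      (deriv h t - (A1 + A2*(t-x))) t := by
    intro t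
    have h1 : HasDerivAt (fun s : ℝ => (s - x)) 1 t := (hasDerivAt_id t).sub_const x
    have h2 : HasDerivAt (fun s : ℝ => (s - x)^2) (2*(t-x)) t := by
      have := h1.pow 2
      norm_num at this
      exact this
    have hp : HasDerivAt (fun s : ℝ => a + A1*(s-x) + A2/2*(s-x)^2) (A1 + A2*(t-x)) t := by
      have := ((h1.const_mul A1).const_add a).add (h2.const_mul (A2/2))
      refine this.congr_deriv ?_
      ring
    exact (hd t).sub hp
  have e0b : ∀ t ∈ Icc x (x+u), |h t - (a + A1*(t-x) + A2/2*(t-x)^2)| ≤ K * u * u * u := by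
    intro t ht
    have h0 := mvt_unif (fun s _ => e0d s) e1b t ht
    simpa [← hadef] using h0
  -- Level G
  have eGd : ∀ t, HasDerivAt
      (fun s => Gfun h s - (a*(s-x) + A1/2*(s-x)^2 + A2/6*(s-x)^3))
      (h t - (a + A1*(t-x) + A2/2*(t-x)^2)) t := by
    intro t
    have h1 : HasDerivAt (fun s : ℝ => (s - x)) 1 t := (hasDerivAt_id t).sub_const x
    have h2 : HasDerivAt (fun s : ℝ => (s - x)^2) (2*(t-x)) t := by
      have := h1.pow 2
      norm_num at this
      exact this
    have h3 : HasDerivAt (fun s : ℝ => (s - x)^3) (3*(t-x)^2) t := by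
      have := h1.pow 3
      norm_num at this
      exact this
    have hp : HasDerivAt (fun s : ℝ => a*(s-x) + A1/2*(s-x)^2 + A2/6*(s-x)^3)
        (a + A1*(t-x) + A2/2*(t-x)^2) t := by
      have := ((h1.const_mul a).add (h2.const_mul (A1/2))).add (h3.const_mul (A2/6))
      refine this.congr_deriv ?_
      ring
    exact (GfunHasDeriv hsm.continuous t).sub hp
  have eGb : ∀ t ∈ Icc x (x+u),
      |Gfun h t - Gfun h x - (a*(t-x) + A1/2*(t-x)^2 + A2/6*(t-x)^3)| ≤ K*u*u*u*u := by
    intro t ht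
    have h0 := mvt_unif (fun s _ => eGd s) e0b t ht
    have heq : (fun s => Gfun h s - (a*(s-x) + A1/2*(s-x)^2 + A2/6*(s-x)^3)) t
        - (fun s => Gfun h s - (a*(s-x) + A1/2*(s-x)^2 + A2/6*(s-x)^3)) x
        = Gfun h t - Gfun h x - (a*(t-x) + A1/2*(t-x)^2 + A2/6*(t-x)^3) := by
      simp; ring
    rw [heq] at h0
    calc |Gfun h t - Gfun h x - (a*(t-x) + A1/2*(t-x)^2 + A2/6*(t-x)^3)|
        ≤ K*u*u*u * u := h0
      _ = K*u*u*u*u := by ring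
  -- The remainders
  have hR1 : |h (x+u) - (a + A1*u + A2/2*u^2)| ≤ K*u^3 := by
    have := e0b (x+u) hmem
    have heq : (x + u) - x = u := by ring
    rw [heq] at this
    calc |h (x+u) - (a + A1*u + A2/2*u^2)| ≤ K*u*u*u := this
      _ = K*u^3 := by ring
  have hR2 : |deriv h (x+u) - (A1 + A2*u)| ≤ K*u^2 := by
    have := e1b (x+u) hmem
    have heq : (x + u) - x = u := by ring
    rw [heq] at this
    calc |deriv h (x+u) - (A1 + A2*u)| ≤ K*u*u := this
      _ = K*u^2 := by ring
  have hR3 : |Gfun h (x+u) - Gfun h x - (a*u + A1/2*u^2 + A2/6*u^3)| ≤ K*u^4 := by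
    have := eGb (x+u) hmem
    have heq : (x + u) - x = u := by ring
    rw [heq] at this
    calc |Gfun h (x+u) - Gfun h x - (a*u + A1/2*u^2 + A2/6*u^3)| ≤ K*u*u*u*u := this
      _ = K*u^4 := by ring
  set R1 := h (x+u) - (a + A1*u + A2/2*u^2) with hR1def
  set R2 := deriv h (x+u) - (A1 + A2*u) with hR2def
  set R3 := Gfun h (x+u) - Gfun h x - (a*u + A1/2*u^2 + A2/6*u^3) with hR3def
  -- The key algebraic identity
  have key : Hham h (x + u, u) - Hham h (x, u - a) =
      -R3 + R1^2/12 + u*R1/2 + A1*(u*R1)/6 + a*R1/6 + A2*(u^2*R1)/12 - u^2*R2/12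
      + A2^2*u^4/48 + A1*(A2*u^3)/12 + A1^2*u^2/12 + a*(A2*u^2)/12 + a^2*A1/12 := by
    rw [hR1def, hR2def, hR3def, hadef, hA1def, hA2def]
    simp only [Hham]
    ring
  -- elementary bounds
  have hK0 : (0:ℝ) ≤ K := by linarith
  have hx2' : (0:ℝ) ≤ x^2 := sq_nonneg x
  have hxa : |x| ^ 2 = x ^ 2 := sq_abs x
  have hb0x : |a| ≤ K * |x| ^ 3 := hb0 x hxabs
  have hb1x : |A1| ≤ K * x ^ 2 := hb1 x hxabs
  have hb2x : |A2| ≤ K * |x| := hb2 x hxabs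
  have ha : |a| ≤ K*u := by
    have h2 : |x|^3 ≤ u := by
      calc |x|^3 = |x| * |x|^2 := by ring
        _ ≤ 1 * x^2 := by rw [hxa]; exact mul_le_mul_of_nonneg_right hxabs hx2'
        _ ≤ u := by linarith
    exact hb0x.trans (mul_le_mul_of_nonneg_left h2 hK0)
  have hA1 : |A1| ≤ K*u := hb1x.trans (mul_le_mul_of_nonneg_left hx2 hK0)
  have hA2 : |A2| ≤ K := by
    refine hb2x.trans ?_
    calc K*|x| ≤ K*1 := mul_le_mul_of_nonneg_left hxabs hK0
      _ = K := mul_one K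
  clear_value R1 R2 R3 a A1 A2
  clear hR1def hR2def hR3def hadef hA1def hA2def e2b e1d e1b e0d e0b eGd eGb
  clear hd hd' hd'' c1 c2 hsm' hsm hIcc1 hmem hb0 hb1 hb2 hb3
  have hu' : |u| = u := abs_of_nonneg hu0
  have hu2 : |u^2| ≤ u^2 := by rw [abs_of_nonneg (sq_nonneg u)]
  have hu3 : |u^3| ≤ u^3 := le_of_eq (abs_of_nonneg (by positivity))
  have hu4 : (0:ℝ) ≤ u^4 := by positivity
  have huu : u^2 ≤ u := by nlinarith [mul_nonneg hu0 (show (0:ℝ) ≤ 1-u by linarith)]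
  have hK3 : K ≤ K^3 := by
    nlinarith [mul_nonneg (mul_nonneg hK0 (show (0:ℝ) ≤ K-1 by linarith))
      (show (0:ℝ) ≤ K+1 by linarith)]
  have hK1' : (0:ℝ) ≤ K - 1 := by linarith
  have huK2 : u^2 ≤ K := by linarith
  have huK' : u ≤ K := by linarith
  have hK23 : K^2 ≤ K^3 := by nlinarith [mul_nonneg (sq_nonneg K) hK1']
  have hsqK : (0:ℝ) ≤ K^2 := sq_nonneg K
  -- the twelve bounds
  have b1 : |R3| ≤ K^3*u^4 := by
    refine hR3.trans (mul_le_mul_of_nonneg_right hK3 hu4)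
  have b2 : |R1^2/12| ≤ K^3*u^4 := by
    refine helper_div 12 (by norm_num) ?_
    have h1 : |R1^2| ≤ (K*u^3)*(K*u^3) := by
      rw [pow_two]; exact abs2 hR1 hR1
    refine h1.trans ?_
    calc (K*u^3)*(K*u^3) = (K^2*u^2)*u^4 := by ring
      _ ≤ (K^2*K)*u^4 := mul_le_mul_of_nonneg_right
            (mul_le_mul_of_nonneg_left huK2 hsqK) hu4
      _ = K^3*u^4 := by ring
  have b3 : |u*R1/2| ≤ K^3*u^4 := by
    refine helper_div 2 (by norm_num) ?_
    have h1 : |u*R1| ≤ u*(K*u^3) := by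
      have h2 := abs2 (le_of_eq hu') hR1
      simpa using h2
    refine h1.trans ?_
    calc u*(K*u^3) = K*u^4 := by ring
      _ ≤ K^3*u^4 := mul_le_mul_of_nonneg_right hK3 hu4
  have b4 : |A1*(u*R1)/6| ≤ K^3*u^4 := by
    refine helper_div 6 (by norm_num) ?_
    have h1 : |A1*(u*R1)| ≤ (K*u)*(u*(K*u^3)) := by
      refine abs2 hA1 ?_
      have h2 := abs2 (le_of_eq hu') hR1
      simpa using h2
    refine h1.trans ?_
    calc (K*u)*(u*(K*u^3)) = (K^2*u)*u^4 := by ring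
      _ ≤ (K^2*K)*u^4 := mul_le_mul_of_nonneg_right
            (mul_le_mul_of_nonneg_left huK' hsqK) hu4
      _ = K^3*u^4 := by ring
  have b5 : |a*R1/6| ≤ K^3*u^4 := by
    refine helper_div 6 (by norm_num) ?_
    refine (abs2 ha hR1).trans ?_
    calc (K*u)*(K*u^3) = K^2*u^4 := by ring
      _ ≤ K^3*u^4 := mul_le_mul_of_nonneg_right hK23 hu4
  have b6 : |A2*(u^2*R1)/12| ≤ K^3*u^4 := by
    refine helper_div 12 (by norm_num) ?_
    have h1 : |A2*(u^2*R1)| ≤ K*(u^2*(K*u^3)) := abs2 hA2 (abs2 hu2 hR1)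
    refine h1.trans ?_
    calc K*(u^2*(K*u^3)) = (K^2*u)*u^4 := by ring
      _ ≤ (K^2*K)*u^4 := mul_le_mul_of_nonneg_right
            (mul_le_mul_of_nonneg_left huK' hsqK) hu4
      _ = K^3*u^4 := by ring
  have b7 : |u^2*R2/12| ≤ K^3*u^4 := by
    refine helper_div 12 (by norm_num) ?_
    refine (abs2 hu2 hR2).trans ?_
    calc u^2*(K*u^2) = K*u^4 := by ring
      _ ≤ K^3*u^4 := mul_le_mul_of_nonneg_right hK3 hu4
  have b8 : |A2^2*u^4/48| ≤ K^3*u^4 := by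
    refine helper_div 48 (by norm_num) ?_
    have h1 : |A2^2*u^4| ≤ (K*K)*u^4 := by
      have h2 : |A2^2| ≤ K*K := by rw [pow_two]; exact abs2 hA2 hA2
      have h3 := abs2 h2 (le_of_eq (abs_of_nonneg hu4))
      simpa using h3
    refine h1.trans ?_
    calc (K*K)*u^4 = K^2*u^4 := by ring
      _ ≤ K^3*u^4 := mul_le_mul_of_nonneg_right hK23 hu4
  have b9 : |A1*(A2*u^3)/12| ≤ K^3*u^4 := by
    refine helper_div 12 (by norm_num) ?_
    have h1 : |A1*(A2*u^3)| ≤ (K*u)*(K*u^3) := abs2 hA1 (abs2 hA2 hu3)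
    refine h1.trans ?_
    calc (K*u)*(K*u^3) = K^2*u^4 := by ring
      _ ≤ K^3*u^4 := mul_le_mul_of_nonneg_right hK23 hu4
  have b10 : |A1^2*u^2/12| ≤ K^3*u^4 := by
    refine helper_div 12 (by norm_num) ?_
    have h1 : |A1^2*u^2| ≤ ((K*u)*(K*u))*u^2 := by
      have h2 : |A1^2| ≤ (K*u)*(K*u) := by rw [pow_two]; exact abs2 hA1 hA1
      exact abs2 h2 hu2
    refine h1.trans ?_
    calc ((K*u)*(K*u))*u^2 = K^2*u^4 := by ring
      _ ≤ K^3*u^4 := mul_le_mul_of_nonneg_right hK23 hu4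
  have b11 : |a*(A2*u^2)/12| ≤ K^3*u^4 := by
    refine helper_div 12 (by norm_num) ?_
    have h1 : |a*(A2*u^2)| ≤ (K*|x|^3)*((K*|x|)*u^2) := abs2 hb0x (abs2 hb2x hu2)
    refine h1.trans ?_
    have hx4 : |x|^3*|x| ≤ u^2 := by
      have h2 : |x|^3*|x| = (x^2)^2 := by rw [← hxa]; ring
      rw [h2]
      exact pow_le_pow_left₀ hx2' hx2 2
    have h3 : (K*|x|^3)*((K*|x|)*u^2) = (K*K)*((|x|^3*|x|)*u^2) := by ring
    rw [h3]
    have h4 : (|x|^3*|x|)*u^2 ≤ u^2*u^2 := mul_le_mul_of_nonneg_right hx4 (sq_nonneg u)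
    calc (K*K)*((|x|^3*|x|)*u^2) ≤ (K*K)*(u^2*u^2) :=
          mul_le_mul_of_nonneg_left h4 (mul_nonneg hK0 hK0)
      _ = K^2*u^4 := by ring
      _ ≤ K^3*u^4 := mul_le_mul_of_nonneg_right hK23 hu4
  have b12 : |a^2*A1/12| ≤ K^3*u^4 := by
    refine helper_div 12 (by norm_num) ?_
    have h1 : |a^2*A1| ≤ ((K*|x|^3)*(K*|x|^3))*(K*x^2) := by
      have h2 : |a^2| ≤ (K*|x|^3)*(K*|x|^3) := by rw [pow_two]; exact abs2 hb0x hb0x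
      exact abs2 h2 hb1x
    refine h1.trans ?_
    have hx8 : |x|^3*|x|^3*x^2 ≤ u^4 := by
      have h2 : |x|^3*|x|^3*x^2 = (x^2)^4 := by rw [← hxa]; ring
      rw [h2]
      exact pow_le_pow_left₀ hx2' hx2 4
    have h3 : ((K*|x|^3)*(K*|x|^3))*(K*x^2) = (K*K*K)*(|x|^3*|x|^3*x^2) := by ring
    rw [h3]
    calc (K*K*K)*(|x|^3*|x|^3*x^2) ≤ (K*K*K)*u^4 :=
          mul_le_mul_of_nonneg_left hx8 (mul_nonneg (mul_nonneg hK0 hK0) hK0)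
      _ = K^3*u^4 := by ring
  -- assemble
  rw [key, abs_le]
  have l1 := abs_le.mp b1
  have l2 := abs_le.mp b2
  have l3 := abs_le.mp b3
  have l4 := abs_le.mp b4
  have l5 := abs_le.mp b5
  have l6 := abs_le.mp b6
  have l7 := abs_le.mp b7
  have l8 := abs_le.mp b8
  have l9 := abs_le.mp b9
  have l10 := abs_le.mp b10
  have l11 := abs_le.mp b11
  have l12 := abs_le.mp b12
  constructor <;>
    linarith [l1.1, l1.2, l2.1, l2.2, l3.1, l3.2, l4.1, l4.2, l5.1, l5.2, l6.1, l6.2,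
      l7.1, l7.2, l8.1, l8.2, l9.1, l9.2, l10.1, l10.2, l11.1, l11.2, l12.1, l12.2]

lemma Gfun_bound {h : ℝ → ℝ} {K x : ℝ} (hc : Continuous h)
    (hb0 : ∀ x : ℝ, |x| ≤ 1 → |h x| ≤ K * |x| ^ 3) (hK0 : 0 ≤ K)
    (hx : |x| ≤ 1) : |Gfun h x| ≤ K * x ^ 4 := by
  have hint : ∀ t ∈ Set.uIoc (0:ℝ) x, ‖h t‖ ≤ K * |x| ^ 3 := by
    intro t ht
    have htx : |t| ≤ |x| := by
      rcases Set.mem_uIoc.mp ht with ⟨h1, h2⟩ | ⟨h1, h2⟩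
      · rw [abs_of_pos h1]; exact h2.trans (le_abs_self x)
      · have hx0 : x < 0 := lt_of_lt_of_le h1 h2
        rw [abs_of_nonpos h2, abs_of_neg hx0]; linarith
    rw [Real.norm_eq_abs]
    refine (hb0 t (htx.trans hx)).trans ?_
    have h3 : |t|^3 ≤ |x|^3 := pow_le_pow_left₀ (abs_nonneg t) htx 3
    nlinarith
  have hI := intervalIntegral.norm_integral_le_of_norm_le_const hint
  rw [Real.norm_eq_abs] at hI
  have h2 : K * |x| ^ 3 * |x - 0| = K * x ^ 4 := by
    rw [sub_zero]
    have h3 : |x|^3 * |x| = x^4 := by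
      have h4 : |x|^3 * |x| = |x|^4 := by ring
      rw [h4, ← abs_pow, abs_of_nonneg (by positivity : (0:ℝ) ≤ x^4)]
    calc K * |x|^3 * |x| = K * (|x|^3 * |x|) := by ring
      _ = K * x^4 := by rw [h3]
  rw [h2] at hI
  exact hI

/-- In the fat region, `x² ≪ y`. -/
lemma fat_x2 {h : ℝ → ℝ} {K M x y : ℝ} (hK1 : 1 ≤ K)
    (hb0 : ∀ x : ℝ, |x| ≤ 1 → |h x| ≤ K * |x| ^ 3)
    (hG : |Gfun h x| ≤ K * x ^ 4)
    (hhx : h x ≤ 0) (hA1 : 0 ≤ deriv h x)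
    (hx1 : -1 ≤ x) (hx0 : x ≤ 0) (hy0 : 0 ≤ y) (hy1 : y ≤ 1)
    (hM : K + K^2/12 + (64*(K+1)^2)^2 ≤ M)
    (hH : M * x ^ 4 ≤ Hham h (x, y)) :
    64*(K+1)^2 * x^2 ≤ y := by
  have hK0 : (0:ℝ) ≤ K := by linarith
  have hxabs : |x| ≤ 1 := abs_le.mpr ⟨hx1, hx0.trans zero_le_one⟩
  have hx2' : (0:ℝ) ≤ x^2 := sq_nonneg x
  have hx4 : (0:ℝ) ≤ x^4 := by positivity
  have hx21 : x^2 ≤ 1 := by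
    nlinarith [mul_le_mul hxabs hxabs (abs_nonneg x) zero_le_one, abs_mul_abs_self x]
  have ha2 : (h x)^2 ≤ K^2 * x^4 := by
    have h1 : |h x|^2 ≤ (K*|x|^3)^2 :=
      pow_le_pow_left₀ (abs_nonneg _) (hb0 x hxabs) 2
    have h2 : |h x|^2 = (h x)^2 := sq_abs _
    have h5 : |x|^6 = x^6 := by
      rw [← abs_pow, abs_of_nonneg (by positivity : (0:ℝ) ≤ x^6)]
    have h3 : (K*|x|^3)^2 = K^2*x^6 := by
      calc (K*|x|^3)^2 = K^2*|x|^6 := by ring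
        _ = K^2*x^6 := by rw [h5]
    have h4 : x^6 ≤ x^4 := by nlinarith
    calc (h x)^2 = |h x|^2 := h2.symm
      _ ≤ K^2*x^6 := by rw [← h3]; exact h1
      _ ≤ K^2*x^4 := mul_le_mul_of_nonneg_left h4 (sq_nonneg K)
  have hHup : Hham h (x, y) ≤ (1/2)*y^2 + K*x^4 + (K^2/12)*x^4 := by
    simp only [Hham]
    have h1 : - Gfun h x ≤ K*x^4 := by linarith [neg_abs_le (Gfun h x)]
    have h2 : (1/2) * h x * y ≤ 0 := by
      have h7 : h x * y ≤ 0 := mul_nonpos_of_nonpos_of_nonneg hhx hy0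
      linarith
    have h3 : (0:ℝ) ≤ (1/12) * deriv h x * y^2 := by positivity
    linarith [ha2]
  set D := 64*(K+1)^2 with hDdef
  have hDpos : (0:ℝ) < D := by rw [hDdef]; positivity
  have hD : D^2 * x^4 ≤ (1/2)*y^2 := by
    nlinarith [mul_nonneg (sub_nonneg.mpr hM) hx4]
  have hsq : (x^2)^2 ≤ (y/D)^2 := by
    rw [div_pow, le_div_iff₀ (by positivity)]
    calc (x^2)^2 * D^2 = D^2 * x^4 := by ring
      _ ≤ (1/2)*y^2 := hD
      _ ≤ y^2 := by nlinarith [sq_nonneg y]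
  have hfin : x^2 ≤ y/D := by
    have h1 := Real.sqrt_le_sqrt hsq
    rwa [Real.sqrt_sq (sq_nonneg x), Real.sqrt_sq (by positivity)] at h1
  rw [le_div_iff₀ hDpos] at hfin
  linarith [hfin]

/-- In the fat region, `H ≥ y²/4`. -/
lemma fat_E_lower {h : ℝ → ℝ} {K x y : ℝ} (hK1 : 1 ≤ K)
    (hb0 : ∀ x : ℝ, |x| ≤ 1 → |h x| ≤ K * |x| ^ 3)
    (hb1 : ∀ x : ℝ, |x| ≤ 1 → |deriv h x| ≤ K * x ^ 2)
    (hG : |Gfun h x| ≤ K * x ^ 4)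
    (hx1 : -1 ≤ x) (hx0 : x ≤ 0) (hy0 : 0 ≤ y) (hy1 : y ≤ 1)
    (hDx : 64*(K+1)^2 * x^2 ≤ y) :
    y^2/4 ≤ Hham h (x, y) := by
  have hK0 : (0:ℝ) ≤ K := by linarith
  have hxabs : |x| ≤ 1 := abs_le.mpr ⟨hx1, hx0.trans zero_le_one⟩
  have hx2' : (0:ℝ) ≤ x^2 := sq_nonneg x
  have hKx2 : 64*(K*x^2) ≤ y := by
    nlinarith [mul_nonneg hx2' (show (0:ℝ) ≤ (K+1)^2 - K by nlinarith [sq_nonneg K])]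
  have hx2y : x^2 ≤ y := by
    nlinarith [mul_nonneg hx2' (show (0:ℝ) ≤ 64*(K+1)^2 - 1 by nlinarith [sq_nonneg K])]
  have haK : |h x| ≤ K*x^2 := by
    calc |h x| ≤ K*|x|^3 := hb0 x hxabs
      _ = (K*|x|^2)*|x| := by ring
      _ ≤ (K*|x|^2)*1 := mul_le_mul_of_nonneg_left hxabs (by positivity)
      _ = K*x^2 := by rw [mul_one, sq_abs]
  have hA1K : |deriv h x| ≤ K*x^2 := hb1 x hxabs
  have hGy : Gfun h x ≤ (y/64)*y := by
    refine (le_abs_self _).trans (hG.trans ?_)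
    calc K*x^4 = (K*x^2)*x^2 := by ring
      _ ≤ (y/64)*y := mul_le_mul (by linarith) hx2y hx2' (by linarith)
  have hay : -((y/64)*y) ≤ (h x) * y := by
    have h1 : |h x * y| ≤ (y/64)*y := by
      rw [abs_mul, abs_of_nonneg hy0]
      exact mul_le_mul (by linarith [haK]) le_rfl hy0 (by linarith)
    linarith [neg_abs_le (h x * y)]
  have hA1y : deriv h x * y^2 ≤ (1/64)*y^2 := by
    have h1 : deriv h x ≤ 1/64 := by
      have h2 := le_abs_self (deriv h x)
      linarith [hA1K, hy1]
    exact mul_le_mul_of_nonneg_right h1 (sq_nonneg y)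
  have ha2 : (0:ℝ) ≤ (h x)^2 := sq_nonneg _
  simp only [Hham]
  linarith [hGy, hay, hA1y, ha2, sq_nonneg y]

end AuxiliaryLemmas

set_option maxHeartbeats 1600000 in
/-- Along a fat-region orbit, `|E_k^{1/2} − E_ℓ^{1/2}| ≤ C y_ℓ² |x_ℓ|`
for `ℓ ≤ k ≤ n`. -/
theorem fat_sqrtE_variation (h : ℝ → ℝ) (hsm : ContDiff ℝ (⊤ : ℕ∞) h) (h0 : h 0 = 0)
    (hd1 : deriv h 0 = 0) (hpos : ∀ x : ℝ, x ≠ 0 → 0 < deriv h x)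
    (hd3 : 0 < iteratedDeriv 3 h 0) (hodd : ∀ x : ℝ, h (-x) = -h x) :
    ∃ M₀ > (0:ℝ), ∀ M : ℝ, M₀ ≤ M → ∃ C > (0:ℝ), ∃ δ > (0:ℝ),
      ∀ (p : ℝ × ℝ) (ℓ n : ℕ), FatOrbit h M δ p ℓ n →
        ∀ k : ℕ, ℓ ≤ k → k ≤ n →
          |Real.sqrt (En h p k) - Real.sqrt (En h p ℓ)|
            ≤ C * (Yc h p ℓ) ^ 2 * |Xc h p ℓ| := by
  obtain ⟨K, hK1, hb0, hb1, hb2, hb3⟩ := bounds_package hsm h0 hd1 hodd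
  have hK0 : (0:ℝ) ≤ K := by linarith
  have hcont : Continuous h := hsm.continuous
  -- sign facts
  have hneg : ∀ x : ℝ, x < 0 → h x < 0 := by
    intro x hx
    have hmono : StrictMonoOn h (Set.Icc x 0) := by
      refine strictMonoOn_of_deriv_pos (convex_Icc x 0) hcont.continuousOn ?_
      intro t ht
      rw [interior_Icc] at ht
      exact hpos t (ne_of_lt ht.2)
    have := hmono ⟨le_refl x, hx.le⟩ ⟨hx.le, le_refl 0⟩ hx
    rwa [h0] at this
  have hnonpos : ∀ x : ℝ, x ≤ 0 → h x ≤ 0 := by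
    intro x hx
    rcases eq_or_lt_of_le hx with rfl | hx'
    · exact le_of_eq h0
    · exact (hneg x hx').le
  have hderiv0 : ∀ x : ℝ, 0 ≤ deriv h x := by
    intro x
    rcases eq_or_ne x 0 with rfl | hx
    · exact le_of_eq hd1.symm
    · exact (hpos x hx).le
  refine ⟨K + K^2/12 + (64*(K+1)^2)^2, by positivity, ?_⟩
  intro M hM
  have hMpos : (0:ℝ) < M := lt_of_lt_of_le (by positivity) hM
  refine ⟨24*K^3 + 1, by positivity, 1, one_pos, ?_⟩
  intro p ℓ n hfat k hlk hkn
  obtain ⟨hln, hnb, hxn, hxpos, hPM, -⟩ := hfat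
  -- recurrences
  have horb : ∀ m : ℕ, orb h p (m+1) = Tmap h (orb h p m) := by
    intro m; rw [orb, orb, Function.iterate_succ_apply']
  have horbm : ∀ m : ℕ, orb h p m = (Xc h p m, Yc h p m) := fun m => rfl
  have hXrec : ∀ m : ℕ, Xc h p (m+1) = Xc h p m + h (Xc h p m) + Yc h p m := by
    intro m; rw [Xc, horb m]; rfl
  have hYrec : ∀ m : ℕ, Yc h p (m+1) = h (Xc h p m) + Yc h p m := by
    intro m; rw [Yc, horb m]; rfl
  have hPM' : ∀ m : ℕ, ℓ ≤ m → m ≤ n →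
      M * (Xc h p m)^4 ≤ En h p m ∧ Xc h p m ≤ 0 ∧ 0 ≤ Yc h p m := by
    intro m h1 h2
    have h3 := hPM m h1 h2
    rw [PM, Set.mem_setOf_eq] at h3
    exact h3
  -- degenerate case y_ℓ = 0
  by_cases hyl : Yc h p ℓ = 0
  · rcases eq_or_lt_of_le hlk with rfl | hlt
    · simp only [sub_self, abs_zero]
      positivity
    · exfalso
      have hl1n : ℓ + 1 ≤ n := Nat.succ_le_of_lt (lt_of_lt_of_le hlt hkn)
      have hy1 : 0 ≤ Yc h p (ℓ+1) := (hPM' (ℓ+1) (Nat.le_succ ℓ) hl1n).2.2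
      have hxl0 : Xc h p ℓ ≤ 0 := hxn ℓ hln
      have hyv : Yc h p (ℓ+1) = h (Xc h p ℓ) := by rw [hYrec ℓ, hyl, add_zero]
      have hhxl0 : h (Xc h p ℓ) = 0 :=
        le_antisymm (hnonpos _ hxl0) (by rw [← hyv]; exact hy1)
      have hxl : Xc h p ℓ = 0 := by
        by_contra hne
        exact absurd hhxl0 (ne_of_lt (hneg _ (lt_of_le_of_ne hxl0 hne)))
      have hfix : ∀ j : ℕ, orb h p (ℓ + j) = (0, 0) := by
        intro j
        induction j with
        | zero => rw [Nat.add_zero, horbm ℓ, hxl, hyl]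
        | succ j ih =>
          rw [show ℓ + (j+1) = (ℓ+j)+1 from rfl, horb (ℓ+j), ih]
          simp [Tmap, h0]
      obtain ⟨j, hj⟩ : ∃ j, n + 1 = ℓ + j := ⟨n + 1 - ℓ, by omega⟩
      have hX0 : Xc h p (n+1) = 0 := by rw [Xc, hj, hfix j]
      rw [hX0] at hxpos
      exact lt_irrefl 0 hxpos
  -- main case
  have hyl' : 0 < Yc h p ℓ := lt_of_le_of_ne (hPM' ℓ le_rfl hln).2.2 (Ne.symm hyl)
  -- one-step estimate
  have hstep : ∀ m : ℕ, ℓ ≤ m → m + 1 ≤ n →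
      0 ≤ Yc h p (m+1) ∧ Yc h p (m+1) ≤ Yc h p m ∧
      |En h p (m+1) - En h p m| ≤
        12*K^3 * (Yc h p (m+1))^3 * (Xc h p (m+1) - Xc h p m) := by
    intro m hm hm1
    obtain ⟨hHm, hxm0, hym0⟩ := hPM' m hm (by omega)
    have hym1 : 0 ≤ Yc h p (m+1) := (hPM' (m+1) (by omega) hm1).2.2
    obtain ⟨hxm1, hymb⟩ := hnb m (by omega)
    obtain ⟨-, hym1b⟩ := hnb (m+1) (by omega)
    have hxm1' : -1 ≤ Xc h p m := (abs_le.mp hxm1).1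
    have hym1' : Yc h p m ≤ 1 := (abs_le.mp hymb).2
    have hu1 : Yc h p (m+1) ≤ 1 := (abs_le.mp hym1b).2
    have hGx : |Gfun h (Xc h p m)| ≤ K * (Xc h p m)^4 :=
      Gfun_bound hcont hb0 hK0 hxm1
    have hHm' : M * (Xc h p m)^4 ≤ Hham h (Xc h p m, Yc h p m) := by
      rw [← horbm m]; exact hHm
    have hDx : 64*(K+1)^2 * (Xc h p m)^2 ≤ Yc h p m :=
      fat_x2 hK1 hb0 hGx (hnonpos _ hxm0) (hderiv0 _) hxm1' hxm0 hym0 hym1' hM hHm'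
    have hx2' : (0:ℝ) ≤ (Xc h p m)^2 := sq_nonneg _
    have hx2y : (Xc h p m)^2 ≤ Yc h p m / 64 := by
      nlinarith [mul_nonneg hx2' (show (0:ℝ) ≤ 64*(K+1)^2 - 64 by nlinarith [sq_nonneg K])]
    have huy : Yc h p (m+1) = h (Xc h p m) + Yc h p m := hYrec m
    have hu_le : Yc h p (m+1) ≤ Yc h p m := by
      rw [huy]; linarith [hnonpos _ hxm0]
    have hKx2 : 64*(K*(Xc h p m)^2) ≤ Yc h p m := by
      nlinarith [mul_nonneg hx2' (show (0:ℝ) ≤ (K+1)^2 - K by nlinarith [sq_nonneg K])]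
    have haK : |h (Xc h p m)| ≤ K*(Xc h p m)^2 := by
      calc |h (Xc h p m)| ≤ K*|Xc h p m|^3 := hb0 _ hxm1
        _ = (K*|Xc h p m|^2)*|Xc h p m| := by ring
        _ ≤ (K*|Xc h p m|^2)*1 := mul_le_mul_of_nonneg_left hxm1 (by positivity)
        _ = K*(Xc h p m)^2 := by rw [mul_one, sq_abs]
    have hu_half : Yc h p m ≤ 2 * Yc h p (m+1) := by
      rw [huy]
      have := neg_abs_le (h (Xc h p m))
      linarith [haK, hKx2]
    have hx2u : (Xc h p m)^2 ≤ Yc h p (m+1) := by linarith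
    -- rewrite the energy difference
    have hT : Tmap h (orb h p m) = (Xc h p m + Yc h p (m+1), Yc h p (m+1)) := by
      rw [Prod.ext_iff]
      constructor
      · show Xc h p m + h (Xc h p m) + Yc h p m = Xc h p m + Yc h p (m+1)
        rw [huy]; ring
      · show h (Xc h p m) + Yc h p m = Yc h p (m+1)
        rw [huy]
    have horbm2 : orb h p m = (Xc h p m, Yc h p (m+1) - h (Xc h p m)) := by
      rw [horbm m, Prod.ext_iff]
      exact ⟨rfl, by rw [huy]; ring⟩
    have hEeq : En h p (m+1) - En h p m
        = Hham h (Xc h p m + Yc h p (m+1), Yc h p (m+1))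
          - Hham h (Xc h p m, Yc h p (m+1) - h (Xc h p m)) := by
      rw [En, En, horb m, hT, horbm2]
    have hsb := step_bound hsm hK1 hb0 hb1 hb2 hb3 hxm1' hxm0 hym1 hu1 hx2u
    rw [← hEeq] at hsb
    have hXu : Xc h p (m+1) - Xc h p m = Yc h p (m+1) := by
      rw [hXrec m, hYrec m]; ring
    refine ⟨hym1, hu_le, ?_⟩
    rw [hXu]
    calc |En h p (m+1) - En h p m| ≤ 12*K^3 * (Yc h p (m+1))^4 := hsb
      _ = 12*K^3 * (Yc h p (m+1))^3 * Yc h p (m+1) := by ring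
  -- the invariant by induction
  have hinv : ∀ j : ℕ, ℓ + j ≤ n → Yc h p (ℓ+j) ≤ Yc h p ℓ ∧
      |En h p (ℓ+j) - En h p ℓ| ≤
        12*K^3 * (Yc h p ℓ)^3 * (Xc h p (ℓ+j) - Xc h p ℓ) := by
    intro j
    induction j with
    | zero => intro _; simp
    | succ j ih =>
      intro hj1
      have hjn : ℓ + j ≤ n := by omega
      obtain ⟨ihy, ihE⟩ := ih hjn
      obtain ⟨hy0', hyle, hE⟩ := hstep (ℓ+j) (by omega) (by omega)
      rw [show ℓ + (j+1) = (ℓ+j)+1 from rfl]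
      have hyℓ : Yc h p ((ℓ+j)+1) ≤ Yc h p ℓ := le_trans hyle ihy
      refine ⟨hyℓ, ?_⟩
      have htri : |En h p ((ℓ+j)+1) - En h p ℓ| ≤
          |En h p ((ℓ+j)+1) - En h p (ℓ+j)| + |En h p (ℓ+j) - En h p ℓ| :=
        abs_sub_le _ _ _
      have hcube : (Yc h p ((ℓ+j)+1))^3 ≤ (Yc h p ℓ)^3 :=
        pow_le_pow_left₀ hy0' hyℓ 3
      have hXpos : 0 ≤ Xc h p ((ℓ+j)+1) - Xc h p (ℓ+j) := by
        have hXu : Xc h p ((ℓ+j)+1) - Xc h p (ℓ+j) = Yc h p ((ℓ+j)+1) := by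
          rw [hXrec (ℓ+j), hYrec (ℓ+j)]; ring
        rw [hXu]; exact hy0'
      have hE' : |En h p ((ℓ+j)+1) - En h p (ℓ+j)| ≤
          12*K^3 * (Yc h p ℓ)^3 * (Xc h p ((ℓ+j)+1) - Xc h p (ℓ+j)) := by
        refine hE.trans ?_
        exact mul_le_mul_of_nonneg_right
          (mul_le_mul_of_nonneg_left hcube (by positivity)) hXpos
      linarith [htri, ihE, hE']
  -- conclude
  obtain ⟨j, rfl⟩ : ∃ j, k = ℓ + j := ⟨k - ℓ, by omega⟩
  obtain ⟨hyk, hEk⟩ := hinv j (by omega)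
  have hxk0 : Xc h p (ℓ+j) ≤ 0 := hxn _ hkn
  have hxl0 : Xc h p ℓ ≤ 0 := hxn ℓ hln
  have hEbound : |En h p (ℓ+j) - En h p ℓ| ≤ 12*K^3*(Yc h p ℓ)^3 * |Xc h p ℓ| := by
    refine hEk.trans ?_
    rw [abs_of_nonpos hxl0]
    exact mul_le_mul_of_nonneg_left (by linarith) (by positivity)
  -- lower bounds on the energies
  obtain ⟨hxlb, hylb⟩ := hnb ℓ (by omega)
  have hxl1' : -1 ≤ Xc h p ℓ := (abs_le.mp hxlb).1
  have hyl1' : Yc h p ℓ ≤ 1 := (abs_le.mp hylb).2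
  have hGl : |Gfun h (Xc h p ℓ)| ≤ K * (Xc h p ℓ)^4 := Gfun_bound hcont hb0 hK0 hxlb
  have hHl : M * (Xc h p ℓ)^4 ≤ Hham h (Xc h p ℓ, Yc h p ℓ) := by
    rw [← horbm ℓ]; exact (hPM' ℓ le_rfl hln).1
  have hDxl : 64*(K+1)^2 * (Xc h p ℓ)^2 ≤ Yc h p ℓ :=
    fat_x2 hK1 hb0 hGl (hnonpos _ hxl0) (hderiv0 _) hxl1' hxl0 hyl'.le hyl1' hM hHl
  have hEl4 : (Yc h p ℓ)^2/4 ≤ En h p ℓ := by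
    have := fat_E_lower hK1 hb0 hb1 hGl hxl1' hxl0 hyl'.le hyl1' hDxl
    rw [En, horbm ℓ]
    exact this
  have hEl0 : 0 ≤ En h p ℓ := le_trans (by positivity) hEl4
  have hEk0 : 0 ≤ En h p (ℓ+j) := by
    have h1 := (hPM' (ℓ+j) (by omega) hkn).1
    nlinarith [pow_nonneg (sq_nonneg (Xc h p (ℓ+j))) 2, sq_nonneg ((Xc h p (ℓ+j))^2),
      mul_nonneg hMpos.le (pow_nonneg (abs_nonneg (Xc h p (ℓ+j))) 4)]
  have hsql : Yc h p ℓ/2 ≤ Real.sqrt (En h p ℓ) := by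
    have h1 : Real.sqrt ((Yc h p ℓ/2)^2) ≤ Real.sqrt (En h p ℓ) := by
      refine Real.sqrt_le_sqrt ?_
      calc (Yc h p ℓ/2)^2 = (Yc h p ℓ)^2/4 := by ring
        _ ≤ En h p ℓ := hEl4
    rwa [Real.sqrt_sq (by positivity)] at h1
  have hA0 : 0 ≤ Real.sqrt (En h p (ℓ+j)) := Real.sqrt_nonneg _
  have hB0 : 0 ≤ Real.sqrt (En h p ℓ) := Real.sqrt_nonneg _
  have hprod : |Real.sqrt (En h p (ℓ+j)) - Real.sqrt (En h p ℓ)|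
      * (Real.sqrt (En h p (ℓ+j)) + Real.sqrt (En h p ℓ))
      = |En h p (ℓ+j) - En h p ℓ| := by
    rw [← abs_of_nonneg (by positivity :
        0 ≤ Real.sqrt (En h p (ℓ+j)) + Real.sqrt (En h p ℓ)), ← abs_mul]
    congr 1
    have hr : (Real.sqrt (En h p (ℓ+j)) - Real.sqrt (En h p ℓ))
        * (Real.sqrt (En h p (ℓ+j)) + Real.sqrt (En h p ℓ))
        = Real.sqrt (En h p (ℓ+j))^2 - Real.sqrt (En h p ℓ)^2 := by ring
    rw [hr, Real.sq_sqrt hEk0, Real.sq_sqrt hEl0]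
  have hmain : |Real.sqrt (En h p (ℓ+j)) - Real.sqrt (En h p ℓ)| * (Yc h p ℓ/2)
      ≤ 12*K^3*(Yc h p ℓ)^3 * |Xc h p ℓ| := by
    calc |Real.sqrt (En h p (ℓ+j)) - Real.sqrt (En h p ℓ)| * (Yc h p ℓ/2)
        ≤ |Real.sqrt (En h p (ℓ+j)) - Real.sqrt (En h p ℓ)|
          * (Real.sqrt (En h p (ℓ+j)) + Real.sqrt (En h p ℓ)) := by
          refine mul_le_mul_of_nonneg_left ?_ (abs_nonneg _)
          linarith [hsql, hA0]
      _ = |En h p (ℓ+j) - En h p ℓ| := hprod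
      _ ≤ 12*K^3*(Yc h p ℓ)^3 * |Xc h p ℓ| := hEbound
  nlinarith [hmain, hyl', abs_nonneg (Xc h p ℓ),
    abs_nonneg (Real.sqrt (En h p (ℓ+j)) - Real.sqrt (En h p ℓ)),
    mul_nonneg (mul_nonneg (pow_nonneg hyl'.le 2) hyl'.le) (abs_nonneg (Xc h p ℓ))]
end
end

section
/- For M sufficiently large (depending only on h) there exist constants c, C > 0, depending only on h and M, such that under the standing orbit hypotheses (fat region) one has, for all ℓ ≤ k ≤ n: c E_ℓ^{1/2} ≤ y_k ≤ C E_ℓ^{1/2}. -/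
noncomputable section

open Real MeasureTheory
open scoped ContDiff

/- ----------  auxiliary lemmas ---------- -/

lemma fatAux_abs_le_abs_of_mem_uIcc {z x : ℝ} (hz : z ∈ Set.uIcc 0 x) : |z| ≤ |x| := by
  rcases Set.mem_uIcc.mp hz with ⟨h1, h2⟩ | ⟨h1, h2⟩ <;> rw [abs_le] <;>
    constructor <;> linarith [le_abs_self x, neg_abs_le x, abs_nonneg x]

lemma fatAux_mvt_abs {f : ℝ → ℝ} (hf : Differentiable ℝ f) {x C : ℝ}
    (h0 : f 0 = 0) (hC : ∀ z ∈ Set.uIcc 0 x, |deriv f z| ≤ C) : |f x| ≤ C * |x| := by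
  have := (convex_uIcc (0:ℝ) x).norm_image_sub_le_of_norm_deriv_le
    (fun z _ => hf.differentiableAt) (fun z hz => hC z hz)
    Set.left_mem_uIcc Set.right_mem_uIcc
  simpa [h0, Real.norm_eq_abs] using this

lemma fatAux_cube_mul_le {t y : ℝ} (ht : 0 ≤ t) (hy : 0 ≤ y) : t^3 * y ≤ t^4 + y^4 := by
  rcases le_total y t with hc | hc
  · nlinarith [mul_nonneg (mul_nonneg (mul_nonneg ht ht) ht) (sub_nonneg.mpr hc), pow_nonneg hy 4]
  · nlinarith [mul_nonneg hy (sub_nonneg.mpr (pow_le_pow_left₀ ht hc 3)), pow_nonneg ht 4]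

set_option maxHeartbeats 1000000 in
lemma fatAux_Hest {K M δ x y g a b E : ℝ} (hK : 1 ≤ K) (hKδ : K * δ^2 ≤ 1/4)
    (hM : 16*K^2 + 12*K ≤ M) (hx : |x| ≤ δ) (hy0 : 0 ≤ y) (hyδ : y ≤ δ)
    (ha : |a| ≤ K*|x|^3) (hb : |b| ≤ K*|x|^2) (hg0 : 0 ≤ g) (hg1 : g ≤ K*x^4)
    (hE : E = (1/2)*y^2 - g + (1/2)*a*y - (1/12)*b*y^2 + (1/12)*a^2)
    (hPM : M*x^4 ≤ E) :
    E ≤ y^2 ∧ y^2 ≤ 8*E ∧ M*x^4 ≤ y^2 := by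
  subst hE
  have hK0 : (0:ℝ) < K := lt_of_lt_of_le one_pos hK
  set t := |x| with htdef
  clear_value t
  have ht0 : 0 ≤ t := htdef ▸ abs_nonneg x
  have hx4 : t^4 = x^4 := by
    rw [htdef, ← abs_pow, abs_of_nonneg (by positivity : (0:ℝ) ≤ x^4)]
  have hx2 : t^2 = x^2 := by
    rw [htdef, ← abs_pow, abs_of_nonneg (by positivity : (0:ℝ) ≤ x^2)]
  have hy2δ : y^2 ≤ δ^2 := pow_le_pow_left₀ hy0 hyδ 2
  have ht2δ : t^2 ≤ δ^2 := pow_le_pow_left₀ ht0 hx 2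
  have hb' : |b| ≤ K*t^2 := hb
  have hg1' : g ≤ K*t^4 := by rw [hx4]; exact hg1
  have hay : |a*y| ≤ K*t^4 + K*δ^2*y^2 := by
    rw [abs_mul, abs_of_nonneg hy0]
    calc |a| * y ≤ (K*t^3)*y := mul_le_mul_of_nonneg_right ha hy0
    _ ≤ K*(t^4 + y^4) := by nlinarith [fatAux_cube_mul_le ht0 hy0]
    _ ≤ K*t^4 + K*δ^2*y^2 := by
        nlinarith [mul_le_mul_of_nonneg_left
          (mul_le_mul_of_nonneg_right hy2δ (sq_nonneg y)) hK0.le]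
  have hby : |b*y^2| ≤ K*δ^2*y^2 := by
    rw [abs_mul, abs_of_nonneg (sq_nonneg y)]
    calc |b| * y^2 ≤ (K*t^2)*y^2 := mul_le_mul_of_nonneg_right hb' (sq_nonneg y)
    _ ≤ K*δ^2*y^2 := by
        nlinarith [mul_le_mul_of_nonneg_left
          (mul_le_mul_of_nonneg_right ht2δ (sq_nonneg y)) hK0.le]
  have hKt40 : 0 ≤ K*t^4 := mul_nonneg hK0.le (pow_nonneg ht0 4)
  have ha2 : a^2 ≤ (1/4)*(K*t^4) := by
    have h1 : a^2 ≤ (K*t^3)^2 := sq_le_sq' (by linarith [(abs_le.mp ha).1]) (abs_le.mp ha).2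
    have h2 : K*t^2 ≤ 1/4 := le_trans (mul_le_mul_of_nonneg_left ht2δ hK0.le) hKδ
    have h3 : (K*t^2)*(K*t^4) ≤ (1/4)*(K*t^4) := mul_le_mul_of_nonneg_right h2 hKt40
    nlinarith [h1, h3]
  have hKy : K*δ^2*y^2 ≤ (1/4)*y^2 := by
    nlinarith [mul_le_mul_of_nonneg_right hKδ (sq_nonneg y)]
  have hPM' : M*t^4 ≤ (1/2)*y^2 - g + (1/2)*a*y - (1/12)*b*y^2 + (1/12)*a^2 := by
    rw [hx4]; exact hPM
  have hE12 : 12*(K*t^4) ≤ (1/2)*y^2 - g + (1/2)*a*y - (1/12)*b*y^2 + (1/12)*a^2 := by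
    refine le_trans ?_ hPM'
    nlinarith [mul_le_mul_of_nonneg_right hM (pow_nonneg ht0 4),
      mul_nonneg (mul_nonneg hK0.le hK0.le) (pow_nonneg ht0 4)]
  have hay' := abs_le.mp hay
  have hby' := abs_le.mp hby
  have ha2' := sq_nonneg a
  have g1 : (1/2)*y^2 - g + (1/2)*a*y - (1/12)*b*y^2 + (1/12)*a^2 ≤ y^2 := by
    linarith [hay'.2, hby'.1, ha2, hg0, hKy, hE12, hKt40, sq_nonneg y]
  have g2 : y^2 ≤ 8*((1/2)*y^2 - g + (1/2)*a*y - (1/12)*b*y^2 + (1/12)*a^2) := by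
    linarith [hay'.1, hby'.2, ha2', hg1', hKy, hE12, hKt40, sq_nonneg y]
  exact ⟨g1, g2, le_trans hPM g1⟩

/-- Along a fat-region orbit, `y_k ≍ E_ℓ^{1/2}` for `ℓ ≤ k ≤ n`. -/
theorem fat_y_comparable_sqrtE (h : ℝ → ℝ) (hsm : ContDiff ℝ (⊤ : ℕ∞) h) (h0 : h 0 = 0)
    (hd1 : deriv h 0 = 0) (hpos : ∀ x : ℝ, x ≠ 0 → 0 < deriv h x)
    (hd3 : 0 < iteratedDeriv 3 h 0) (hodd : ∀ x : ℝ, h (-x) = -h x) :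
    ∃ M₀ > (0:ℝ), ∀ M : ℝ, M₀ ≤ M → ∃ c > (0:ℝ), ∃ C > (0:ℝ), ∃ δ > (0:ℝ),
      ∀ (p : ℝ × ℝ) (ℓ n : ℕ), FatOrbit h M δ p ℓ n →
        ∀ k : ℕ, ℓ ≤ k → k ≤ n →
          c * Real.sqrt (En h p ℓ) ≤ Yc h p k ∧
          Yc h p k ≤ C * Real.sqrt (En h p ℓ) := by
  classical
  -- smoothness bookkeeping
  have hsm' : ContDiff ℝ ∞ h := hsm.of_le (by simp)
  have h1sm : ContDiff ℝ ∞ (deriv h) := (contDiff_infty_iff_deriv.mp hsm').2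
  have h2sm : ContDiff ℝ ∞ (deriv (deriv h)) := (contDiff_infty_iff_deriv.mp h1sm).2
  have h3sm : ContDiff ℝ ∞ (deriv (deriv (deriv h))) :=
    (contDiff_infty_iff_deriv.mp h2sm).2
  have hdiff : Differentiable ℝ h := (contDiff_infty_iff_deriv.mp hsm').1
  have hdiff1 : Differentiable ℝ (deriv h) := (contDiff_infty_iff_deriv.mp h1sm).1
  have hdiff2 : Differentiable ℝ (deriv (deriv h)) := (contDiff_infty_iff_deriv.mp h2sm).1
  have hcont : Continuous h := hsm'.continuous
  -- h'' (0) = 0 by oddness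
  have heven : ∀ x : ℝ, deriv h (-x) = deriv h x := by
    intro x
    have hfe : (fun y => h (-y)) = fun y => -h y := funext hodd
    have h1 : deriv (fun y => h (-y)) x = -deriv h (-x) := deriv_comp_neg h x
    rw [hfe, deriv.fun_neg] at h1
    linarith
  have hd2zero : deriv (deriv h) 0 = 0 := by
    have hfe : (fun y => deriv h (-y)) = fun y => deriv h y := funext heven
    have h1 : deriv (fun y => deriv h (-y)) 0 = -deriv (deriv h) (-0) := deriv_comp_neg (deriv h) 0
    rw [hfe] at h1
    simp only [neg_zero] at h1
    have h2 : deriv (fun y => deriv h y) 0 = deriv (deriv h) 0 := rfl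
    linarith [h1, h2.symm ▸ h1]
  -- monotonicity
  have hmono : Monotone h := by
    refine monotone_of_deriv_nonneg hdiff (fun x => ?_)
    rcases eq_or_ne x 0 with rfl | hx
    · rw [hd1]
    · exact (hpos x hx).le
  -- the constant K
  obtain ⟨B₀, hB₀⟩ := (isCompact_Icc : IsCompact (Set.Icc (-1:ℝ) 1)).exists_bound_of_continuousOn
    h3sm.continuous.continuousOn
  set K : ℝ := max B₀ 0 + 1 with hKdef
  have hK1 : 1 ≤ K := by
    have := le_max_right B₀ 0; rw [hKdef]; linarith
  have hK0 : (0:ℝ) < K := lt_of_lt_of_le one_pos hK1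
  have hB : ∀ z : ℝ, |z| ≤ 1 → |deriv (deriv (deriv h)) z| ≤ K := by
    intro z hz
    have h1 := hB₀ z (by rw [Set.mem_Icc]; exact abs_le.mp hz)
    rw [Real.norm_eq_abs] at h1
    have := le_max_left B₀ 0
    rw [hKdef]; linarith
  clear_value K
  have key2 : ∀ x : ℝ, |x| ≤ 1 → |deriv (deriv h) x| ≤ K * |x| := by
    intro x hx
    exact fatAux_mvt_abs hdiff2 hd2zero
      (fun z hz => hB z (le_trans (fatAux_abs_le_abs_of_mem_uIcc hz) hx))
  have key1 : ∀ x : ℝ, |x| ≤ 1 → |deriv h x| ≤ K * |x|^2 := by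
    intro x hx
    have : |deriv h x| ≤ K * |x| * |x| := by
      refine fatAux_mvt_abs hdiff1 hd1 (fun z hz => ?_)
      have h1 := key2 z (le_trans (fatAux_abs_le_abs_of_mem_uIcc hz) hx)
      have h2 : K * |z| ≤ K * |x| :=
        mul_le_mul_of_nonneg_left (fatAux_abs_le_abs_of_mem_uIcc hz) hK0.le
      linarith
    calc |deriv h x| ≤ K * |x| * |x| := this
    _ = K * |x|^2 := by ring
  have key0 : ∀ x : ℝ, |x| ≤ 1 → |h x| ≤ K * |x|^3 := by
    intro x hx
    have : |h x| ≤ K * |x|^2 * |x| := by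
      refine fatAux_mvt_abs hdiff h0 (fun z hz => ?_)
      have h1 := key1 z (le_trans (fatAux_abs_le_abs_of_mem_uIcc hz) hx)
      have h2 : K * |z|^2 ≤ K * |x|^2 := by
        have := pow_le_pow_left₀ (abs_nonneg z) (fatAux_abs_le_abs_of_mem_uIcc hz) 2
        exact mul_le_mul_of_nonneg_left this hK0.le
      linarith
    calc |h x| ≤ K * |x|^2 * |x| := this
    _ = K * |x|^3 := by ring
  -- G bounds
  have hGfacts : ∀ x : ℝ, -1 ≤ x → x ≤ 0 → 0 ≤ Gfun h x ∧ Gfun h x ≤ K * x^4 := by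
    intro x hx1 hx0
    have hrw : Gfun h x = ∫ z in x..(0:ℝ), -h z := by
      rw [Gfun, intervalIntegral.integral_symm, ← intervalIntegral.integral_neg]
    have hnonpos : ∀ u ∈ Set.Icc x (0:ℝ), h u ≤ 0 := by
      intro u hu
      have := hmono hu.2
      rwa [h0] at this
    have hg0 : 0 ≤ Gfun h x := by
      rw [hrw]
      exact intervalIntegral.integral_nonneg hx0 (fun u hu => by linarith [hnonpos u hu])
    have hint1 : IntervalIntegrable (fun z => -h z) volume x 0 :=
      (hcont.neg).intervalIntegrable _ _
    have hint2 : IntervalIntegrable (fun z => -(K * z^3)) volume x 0 :=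
      ((continuous_const.mul (continuous_pow 3)).neg).intervalIntegrable _ _
    have hmon : ∀ z ∈ Set.Icc x (0:ℝ), -h z ≤ -(K * z^3) := by
      intro z hz
      have h1 : |h z| ≤ K * |z|^3 := key0 z (by rw [abs_le]; exact ⟨by linarith [hz.1], by linarith [hz.2]⟩)
      have h2 : |z| = -z := abs_of_nonpos hz.2
      rw [h2] at h1
      have h3 : K * (-z)^3 = -(K * z^3) := by ring
      linarith [neg_le_abs (h z), h3 ▸ h1]
    have hle : Gfun h x ≤ ∫ z in x..(0:ℝ), -(K * z^3) := by
      rw [hrw]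
      exact intervalIntegral.integral_mono_on hx0 hint1 hint2 hmon
    have hcalc : (∫ z in x..(0:ℝ), -(K * z^3)) = K * x^4 / 4 := by
      rw [intervalIntegral.integral_neg, intervalIntegral.integral_const_mul, integral_pow]
      push_cast; ring
    refine ⟨hg0, ?_⟩
    have hx40 : 0 ≤ x^4 := by positivity
    rw [hcalc] at hle
    nlinarith [mul_le_mul_of_nonneg_right (show (1:ℝ) ≤ K from hK1) hx40]
  -- choice of δ
  set δ : ℝ := min 1 (1/(2*K)) with hδdef
  have hδpos : 0 < δ := lt_min one_pos (by positivity)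
  have hδ1 : δ ≤ 1 := min_le_left _ _
  have hKδ : K * δ^2 ≤ 1/4 := by
    have h1 : δ ≤ 1/(2*K) := min_le_right _ _
    have h2 : δ^2 ≤ (1/(2*K))^2 := pow_le_pow_left₀ hδpos.le h1 2
    have h3 : K * δ^2 ≤ K * (1/(2*K))^2 := mul_le_mul_of_nonneg_left h2 hK0.le
    have h4 : K * (1/(2*K))^2 = 1/(4*K) := by field_simp; ring
    have h5 : 1/(4*K) ≤ 1/4 := by
      rw [div_le_div_iff₀ (by positivity) (by norm_num)]; linarith
    linarith
  clear_value δ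
  refine ⟨16*K^2 + 12*K, by nlinarith, fun M hM => ⟨1/2, by norm_num, 3, by norm_num, δ, hδpos, ?_⟩⟩
  intro p ℓ n hFat
  obtain ⟨hln, hsmall, hxle, hxn1, hPMmem, _⟩ := hFat
  -- recursions
  have recY : ∀ k, Yc h p (k+1) = h (Xc h p k) + Yc h p k := by
    intro k
    show ((Tmap h)^[k+1] p).2 = _
    rw [Function.iterate_succ_apply']
    rfl
  have recX : ∀ k, Xc h p (k+1) = Xc h p k + Yc h p (k+1) := by
    intro k
    show ((Tmap h)^[k+1] p).1 = ((Tmap h)^[k] p).1 + ((Tmap h)^[k+1] p).2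
    rw [Function.iterate_succ_apply']
    show ((Tmap h)^[k] p).1 + h (((Tmap h)^[k] p).1) + ((Tmap h)^[k] p).2
        = ((Tmap h)^[k] p).1 + (h (((Tmap h)^[k] p).1) + ((Tmap h)^[k] p).2)
    ring
  have hstep : ∀ k, k ≤ n → Yc h p (k+1) ≤ Yc h p k := by
    intro k hk
    have h1 : h (Xc h p k) ≤ 0 := by
      have := hmono (hxle k hk)
      rwa [h0] at this
    rw [recY k]; linarith
  have hYdec : ∀ j k : ℕ, j ≤ k → k ≤ n+1 → Yc h p k ≤ Yc h p j := by
    intro j k hjk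
    induction k, hjk using Nat.le_induction with
    | base => intro _; exact le_refl _
    | succ m hjm ih =>
      intro hm
      exact le_trans (hstep m (by omega)) (ih (by omega))
  have hYn1 : 0 < Yc h p (n+1) := by
    have h1 := hxle n le_rfl
    have h2 := recX n
    linarith
  have hYpos : ∀ k, k ≤ n+1 → 0 < Yc h p k := fun k hk =>
    lt_of_lt_of_le hYn1 (hYdec k (n+1) hk le_rfl)
  have hXmono : ∀ j k : ℕ, j ≤ k → k ≤ n+1 → Xc h p j ≤ Xc h p k := by
    intro j k hjk
    induction k, hjk using Nat.le_induction with
    | base => intro _; exact le_refl _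
    | succ m hjm ih =>
      intro hm
      have h1 := ih (by omega)
      have h2 : Xc h p m ≤ Xc h p (m+1) := by
        rw [recX m]
        linarith [(hYpos (m+1) (by omega)).le]
      linarith
  -- data at time ℓ
  have hbndl := hsmall ℓ (by omega)
  have hPMl := hPMmem ℓ le_rfl hln
  have hPM1 : M * (Xc h p ℓ)^4 ≤ En h p ℓ := hPMl.1
  have hx0l : Xc h p ℓ ≤ 0 := hPMl.2.1
  have hy0l : 0 ≤ Yc h p ℓ := hPMl.2.2
  have hyδl : Yc h p ℓ ≤ δ := le_trans (le_abs_self _) hbndl.2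
  have hxl1 : |Xc h p ℓ| ≤ 1 := le_trans hbndl.1 hδ1
  have hGl := hGfacts (Xc h p ℓ) (by linarith [(abs_le.mp hbndl.1).1, hδ1]) hx0l
  obtain ⟨hEl0', hEl8', hMxl⟩ := fatAux_Hest hK1 hKδ hM hbndl.1 hy0l hyδl
    (key0 _ hxl1) (key1 _ hxl1) hGl.1 hGl.2 rfl hPM1
  have hEl : En h p ℓ ≤ (Yc h p ℓ)^2 := hEl0'
  have hEl8 : (Yc h p ℓ)^2 ≤ 8 * En h p ℓ := hEl8'
  clear hEl0' hEl8' 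
  -- lower bound on h along the orbit
  have hlb : ∀ j : ℕ, ℓ ≤ j → j ≤ n → -(K * |Xc h p ℓ|^3) ≤ h (Xc h p j) := by
    intro j hlj hjn
    have h1 : h (Xc h p ℓ) ≤ h (Xc h p j) := hmono (hXmono ℓ j hlj (by omega))
    have h2 := (abs_le.mp (key0 _ hxl1)).1
    linarith
  -- the key discrete-energy induction
  have key : ∀ k : ℕ, ℓ ≤ k → k ≤ n →
      (Yc h p ℓ)^2 - K * |Xc h p ℓ|^3 * (Yc h p ℓ + 2*(Xc h p k - Xc h p ℓ))
        ≤ Yc h p k * Yc h p (k+1) := by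
    intro k hk
    induction k, hk using Nat.le_induction with
    | base =>
      intro _
      rw [recY ℓ]
      have h1 := mul_le_mul_of_nonneg_left (hlb ℓ le_rfl hln) hy0l
      nlinarith [h1]
    | succ m hm ih =>
      intro hm1
      have hmn : m ≤ n := by omega
      have ihh := ih hmn
      have hY10 : 0 ≤ Yc h p (m+1) := (hYpos (m+1) (by omega)).le
      have m1 : Yc h p (m+1) * Yc h p (m+1+1)
          = Yc h p (m+1) * h (Xc h p (m+1)) + Yc h p (m+1) * Yc h p (m+1) := by
        rw [recY (m+1)]; ring
      have m2 : Yc h p (m+1) * Yc h p (m+1)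
          = Yc h p (m+1) * h (Xc h p m) + Yc h p (m+1) * Yc h p m := by
        rw [recY m]; ring
      have p1 : Yc h p (m+1) * (-(K * |Xc h p ℓ|^3)) ≤ Yc h p (m+1) * h (Xc h p m) :=
        mul_le_mul_of_nonneg_left (hlb m hm hmn) hY10
      have p2 : Yc h p (m+1) * (-(K * |Xc h p ℓ|^3)) ≤ Yc h p (m+1) * h (Xc h p (m+1)) :=
        mul_le_mul_of_nonneg_left (hlb (m+1) (by omega) hm1) hY10
      rw [recX m]
      linarith [ihh, m1, m2, p1, p2]
  -- conclude
  intro k hk1 hk2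
  have hkk := key k hk1 hk2
  have ht0 : 0 ≤ |Xc h p ℓ| := abs_nonneg _
  have hxlabs : |Xc h p ℓ| = -(Xc h p ℓ) := abs_of_nonpos hx0l
  have hXk0 : Xc h p k ≤ 0 := hxle k hk2
  have hXkXl : Xc h p k - Xc h p ℓ ≤ |Xc h p ℓ| := by rw [hxlabs]; linarith
  have ht4eq : |Xc h p ℓ|^4 = (Xc h p ℓ)^4 := by
    rw [← abs_pow, abs_of_nonneg (by positivity : (0:ℝ) ≤ (Xc h p ℓ)^4)]
  have hMx' : M * |Xc h p ℓ|^4 ≤ (Yc h p ℓ)^2 := by rw [ht4eq]; exact hMxl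
  have f4 : 12*(K * |Xc h p ℓ|^4) ≤ (Yc h p ℓ)^2 := by
    have h1 := mul_le_mul_of_nonneg_right hM (pow_nonneg ht0 4)
    linarith only [h1, hMx', mul_nonneg (mul_nonneg hK0.le hK0.le) (pow_nonneg ht0 4)]
  have hyl4 : (Yc h p ℓ)^4 ≤ δ^2 * (Yc h p ℓ)^2 := by
    have h1 : (Yc h p ℓ)^2 ≤ δ^2 := pow_le_pow_left₀ hy0l hyδl 2
    linarith only [mul_le_mul_of_nonneg_right h1 (sq_nonneg (Yc h p ℓ))]
  have hKδy : K * (δ^2 * (Yc h p ℓ)^2) ≤ (1/4)*(Yc h p ℓ)^2 := by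
    linarith only [mul_le_mul_of_nonneg_right hKδ (sq_nonneg (Yc h p ℓ))]
  have f1 : K * (|Xc h p ℓ|^3 * Yc h p ℓ) ≤ K * (|Xc h p ℓ|^4 + (Yc h p ℓ)^4) :=
    mul_le_mul_of_nonneg_left (fatAux_cube_mul_le ht0 hy0l) hK0.le
  have f2 : K * (Yc h p ℓ)^4 ≤ K * (δ^2 * (Yc h p ℓ)^2) :=
    mul_le_mul_of_nonneg_left hyl4 hK0.le
  have f3 : K * |Xc h p ℓ|^3 * (Xc h p k - Xc h p ℓ) ≤ K * |Xc h p ℓ|^3 * |Xc h p ℓ| :=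
    mul_le_mul_of_nonneg_left hXkXl (mul_nonneg hK0.le (pow_nonneg ht0 3))
  have hdrop : K * |Xc h p ℓ|^3 * (Yc h p ℓ + 2*(Xc h p k - Xc h p ℓ)) ≤ (1/2)*(Yc h p ℓ)^2 := by
    linarith only [f1, f2, f3, f4, hKδy]
  have hlow : (1/2)*(Yc h p ℓ)^2 ≤ Yc h p k * Yc h p (k+1) := by linarith only [hkk, hdrop]
  have hYk1 : Yc h p (k+1) ≤ Yc h p k := hstep k hk2
  have hYk0 : 0 ≤ Yc h p k := (hYpos k (by omega)).le
  have hYsq : (1/2)*(Yc h p ℓ)^2 ≤ (Yc h p k)^2 := by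
    linarith only [hlow, mul_le_mul_of_nonneg_left hYk1 hYk0]
  have hhalf : Yc h p ℓ / 2 ≤ Yc h p k := by
    nlinarith only [hYsq, hYk0, hy0l, mul_nonneg hYk0 hy0l]
  -- convert to sqrt statements
  have hEl0 : 0 ≤ En h p ℓ := by linarith only [hEl8, sq_nonneg (Yc h p ℓ)]
  have hsql : Real.sqrt (En h p ℓ) ≤ Yc h p ℓ := by
    have h1 := Real.sqrt_le_sqrt hEl
    rwa [Real.sqrt_sq hy0l] at h1
  have h9 : (Yc h p ℓ)^2 ≤ 9 * En h p ℓ := by linarith only [hEl8, hEl0]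
  have hsqu : Yc h p ℓ ≤ 3 * Real.sqrt (En h p ℓ) := by
    have h1 := Real.sqrt_le_sqrt h9
    rw [Real.sqrt_sq hy0l] at h1
    have h2 : Real.sqrt (9 * En h p ℓ) = 3 * Real.sqrt (En h p ℓ) := by
      rw [show (9:ℝ) * En h p ℓ = 3^2 * En h p ℓ by norm_num, Real.sqrt_mul (by positivity),
        Real.sqrt_sq (by norm_num)]
    linarith [h2 ▸ h1]
  have hYkl : Yc h p k ≤ Yc h p ℓ := hYdec ℓ k hk1 (by omega)
  constructor
  · linarith only [hsql, hhalf]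
  · linarith only [hsqu, hYkl]
end
end
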